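/- arXiv:2209.15375 — 9 statements merged into one kernel-verified Lean document; each statement's English description precedes it below -/
import Mathlib

section
/- Let A be a finite abelian group, let α be an automorphism of A, and let A₀ ≤ A be a subgroup with α(A₀) = A₀. Then the number of fixed points of the induced automorphism of A/A₀ is at most the number of fixed points of α on A, i.e. |C_{A/A₀}(α)| ≤ |C_A(α)|. -/
/-- For a finite abelian group `A`, an automorphism `α`, and an
`α`-invariant subgroup `A₀`, the number of fixed points of the automorphism `β`
induced by `α` on `A ⧸ A₀` is at most the number of fixed points of `α` on `A`. -/
theorem card_fixedPoints_quotient_le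
    (A : Type*) [CommGroup A] [Finite A] (α : A ≃* A)
    (A₀ : Subgroup A) (hA₀ : ∀ a ∈ A₀, α a ∈ A₀)
    (β : (A ⧸ A₀) ≃* (A ⧸ A₀))
    (hβ : ∀ a : A, β (QuotientGroup.mk a) = QuotientGroup.mk (α a)) :
    Nat.card {x : A ⧸ A₀ // β x = x} ≤ Nat.card {a : A // α a = a} := by
  classical
  -- the homomorphism a ↦ α a * a⁻¹
  let g : A →* A :=
  { toFun := fun a => α a * a⁻¹
    map_one' := by simp
    map_mul' := fun x y => by
      simp [map_mul, mul_inv, mul_comm, mul_left_comm, mul_assoc] }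
  let B : Subgroup A := A₀.comap g
  have hmemB : ∀ a : A, a ∈ B ↔ α a * a⁻¹ ∈ A₀ := fun a => Iff.rfl
  let ψ : B →* A ⧸ A₀ := (QuotientGroup.mk' A₀).comp B.subtype
  let χ : B →* A := g.comp B.subtype
  have hkey : ∀ a : A, β (QuotientGroup.mk a) = QuotientGroup.mk a ↔ α a * a⁻¹ ∈ A₀ := by
    intro a
    rw [hβ, QuotientGroup.eq]
    constructor
    · intro h
      have := inv_mem h
      simpa [mul_comm] using this
    · intro h
      have := inv_mem h
      simpa [mul_comm] using this
  -- fixed points of β = range ψ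
  have e1 : Nat.card {x : A ⧸ A₀ // β x = x} = Nat.card ψ.range := by
    apply Nat.card_congr
    apply Equiv.subtypeEquivRight
    intro x
    constructor
    · intro hx
      induction x using QuotientGroup.induction_on with
      | H a =>
        have ha : a ∈ B := (hkey a).mp hx
        exact ⟨⟨a, ha⟩, rfl⟩
    · rintro ⟨⟨a, ha⟩, rfl⟩
      exact (hkey a).mpr ha
  -- ker ψ ≃ A₀
  have hA₀B : ∀ a ∈ A₀, a ∈ B := by
    intro a ha
    exact mul_mem (hA₀ a ha) (inv_mem ha)
  have hkerψ : ∀ b : B, b ∈ ψ.ker ↔ (b : A) ∈ A₀ := by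
    intro b
    simp [ψ, MonoidHom.mem_ker, QuotientGroup.eq_one_iff]
  have e2 : Nat.card ψ.ker = Nat.card A₀ := by
    apply Nat.card_congr
    exact
      { toFun := fun b => ⟨(b : B), (hkerψ b).mp b.2⟩
        invFun := fun a => ⟨⟨(a : A), hA₀B a a.2⟩, (hkerψ _).mpr a.2⟩
        left_inv := fun b => by ext; rfl
        right_inv := fun a => by ext; rfl }
  -- ker χ ≃ fixed points of α
  have hfixB : ∀ a : A, α a = a → a ∈ B := by
    intro a ha
    rw [hmemB, ha]
    simpa using one_mem A₀
  have hkerχ : ∀ b : B, b ∈ χ.ker ↔ α (b : A) = (b : A) := by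
    intro b
    simp only [χ, MonoidHom.mem_ker, MonoidHom.comp_apply]
    show α (b : A) * (b : A)⁻¹ = 1 ↔ _
    rw [mul_inv_eq_one]
  have e3 : Nat.card χ.ker = Nat.card {a : A // α a = a} := by
    apply Nat.card_congr
    exact
      { toFun := fun b => ⟨(b : A), (hkerχ b).mp b.2⟩
        invFun := fun a => ⟨⟨(a : A), hfixB a a.2⟩, (hkerχ _).mpr a.2⟩
        left_inv := fun b => by ext; rfl
        right_inv := fun a => by ext; rfl }
  -- range χ ≤ A₀
  have hrχ : χ.range ≤ A₀ := by
    rintro _ ⟨b, rfl⟩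
    exact b.2
  have e4 : Nat.card χ.range ≤ Nat.card A₀ := Subgroup.card_le_of_le hrχ
  -- counting
  have c1 : Nat.card B = Nat.card ψ.range * Nat.card ψ.ker := by
    rw [Subgroup.card_eq_card_quotient_mul_card_subgroup ψ.ker]
    congr 1
    exact Nat.card_congr (QuotientGroup.quotientKerEquivRange ψ).toEquiv
  have c2 : Nat.card B = Nat.card χ.range * Nat.card χ.ker := by
    rw [Subgroup.card_eq_card_quotient_mul_card_subgroup χ.ker]
    congr 1
    exact Nat.card_congr (QuotientGroup.quotientKerEquivRange χ).toEquiv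
  have hpos : 0 < Nat.card A₀ := Nat.card_pos
  rw [e1, ← e3]
  have : Nat.card ψ.range * Nat.card A₀ ≤ Nat.card χ.ker * Nat.card A₀ := by
    calc Nat.card ψ.range * Nat.card A₀ = Nat.card B := by rw [c1, e2]
    _ = Nat.card χ.range * Nat.card χ.ker := c2
    _ ≤ Nat.card A₀ * Nat.card χ.ker := Nat.mul_le_mul_right _ e4
    _ = Nat.card χ.ker * Nat.card A₀ := Nat.mul_comm _ _
  exact Nat.le_of_mul_le_mul_right this hpos
end

section
/- Let A be a finite abelian group (written additively), τ ∈ Aut(A), and let [τ,A] denote the subgroup {τ(a) − a | a ∈ A} (the image of the endomorphism a ↦ τ(a) − a). Let A₀ ≤ C_A(τ) be a subgroup of the fixed points of τ. Then |C_{A/A₀}(τ)| = |A| / |A₀ + [τ,A]|, and also |C_{A/A₀}(τ)| = |C_A(τ)| · |A₀ ∩ [τ,A]| / |A₀|. -/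
private lemma card_range_mul_card_ker' {G H : Type*} [AddGroup G] [AddGroup H] (f : G →+ H) :
    Nat.card f.range * Nat.card f.ker = Nat.card G := by
  rw [← Nat.card_congr (QuotientAddGroup.quotientKerEquivRange f).toEquiv,
    ← AddSubgroup.card_eq_card_quotient_mul_card_addSubgroup f.ker]

private lemma card_sup_mul_card_inf' {A : Type*} [AddCommGroup A] (H K : AddSubgroup A) :
    Nat.card (H ⊔ K : AddSubgroup A) * Nat.card (H ⊓ K : AddSubgroup A)
      = Nat.card H * Nat.card K := by
  set f : H × K →+ A := (H.subtype).coprod K.subtype with hf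
  have hrange : f.range = H ⊔ K := by
    ext x
    rw [AddSubgroup.mem_sup]
    constructor
    · rintro ⟨⟨a, b⟩, rfl⟩
      exact ⟨a, a.2, b, b.2, rfl⟩
    · rintro ⟨y, hy, z, hz, rfl⟩
      exact ⟨(⟨y, hy⟩, ⟨z, hz⟩), rfl⟩
  have hker : Nat.card f.ker = Nat.card (H ⊓ K : AddSubgroup A) := by
    refine Nat.card_congr ⟨fun p => ⟨(p.1.1 : A), p.1.1.2, ?_⟩,
      fun x => ⟨(⟨x.1, x.2.1⟩, ⟨-x.1, neg_mem x.2.2⟩), ?_⟩, ?_, ?_⟩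
    · have hp := p.2
      simp only [AddMonoidHom.mem_ker, hf, AddMonoidHom.coprod_apply,
        AddSubgroup.coe_subtype] at hp
      have h1 : (p.1.1 : A) = -(p.1.2 : A) := eq_neg_of_add_eq_zero_left hp
      rw [h1]
      exact K.neg_mem p.1.2.2
    · simp [hf]
    · rintro ⟨⟨a, b⟩, hab⟩
      have hab' := hab
      simp only [AddMonoidHom.mem_ker, hf, AddMonoidHom.coprod_apply,
        AddSubgroup.coe_subtype] at hab'
      have hb : (b : A) = -(a : A) := eq_neg_of_add_eq_zero_right hab'
      ext
      · simp
      · simp [hb]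
    · rintro ⟨x, hx⟩; rfl
  have := card_range_mul_card_ker' f
  rw [hrange, hker] at this
  rw [this, Nat.card_prod]

/-- For a finite abelian group `A`, `τ ∈ Aut(A)`, `[τ,A]` the image of
`a ↦ τ(a) − a`, and `A₀ ≤ C_A(τ)`, the fixed points of the automorphism induced by `τ`
on `A ⧸ A₀` satisfy `|C_{A/A₀}(τ)| = |A| / |A₀ + [τ,A]|` and
`|C_{A/A₀}(τ)| = |C_A(τ)| · |A₀ ∩ [τ,A]| / |A₀|` (stated multiplicatively). -/
theorem card_fixedPoints_quotient_formulas
    (A : Type*) [AddCommGroup A] [Finite A] (τ : A ≃+ A)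
    (A₀ : AddSubgroup A) (hA₀ : ∀ a ∈ A₀, τ a = a)
    (φ : A →+ A) (hφ : ∀ a : A, φ a = τ a - a)
    (β : (A ⧸ A₀) ≃+ (A ⧸ A₀))
    (hβ : ∀ a : A, β (QuotientAddGroup.mk a) = QuotientAddGroup.mk (τ a)) :
    Nat.card {x : A ⧸ A₀ // β x = x} * Nat.card (A₀ ⊔ φ.range : AddSubgroup A)
        = Nat.card A ∧
    Nat.card {x : A ⧸ A₀ // β x = x} * Nat.card A₀
        = Nat.card {a : A // τ a = a} * Nat.card (A₀ ⊓ φ.range : AddSubgroup A) := by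
  classical
  set B : AddSubgroup A := A₀.comap φ with hB
  have hmemB : ∀ a : A, a ∈ B ↔ φ a ∈ A₀ := fun a => Iff.rfl
  have hA₀B : A₀ ≤ B := by
    intro a ha
    rw [hmemB, hφ, hA₀ a ha, sub_self]
    exact zero_mem _
  have hkerB : φ.ker ≤ B := by
    intro a ha
    rw [AddMonoidHom.mem_ker] at ha
    rw [hmemB, ha]; exact zero_mem _
  -- card of ker φ equals card of fixed points of τ
  have hkercard : Nat.card (φ.ker : AddSubgroup A) = Nat.card {a : A // τ a = a} := by
    refine Nat.card_congr (Equiv.subtypeEquivRight fun a => ?_)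
    rw [AddMonoidHom.mem_ker, hφ, sub_eq_zero]
  -- ψ : B →+ A, restriction of φ
  set ψ : B →+ A := φ.comp B.subtype with hψ
  have hψrange : ψ.range = A₀ ⊓ φ.range := by
    ext x
    constructor
    · rintro ⟨⟨b, hb⟩, rfl⟩
      exact ⟨hb, ⟨b, rfl⟩⟩
    · rintro ⟨hx0, ⟨a, rfl⟩⟩
      exact ⟨⟨a, (hmemB a).mpr hx0⟩, rfl⟩
  have hψker : Nat.card ψ.ker = Nat.card (φ.ker : AddSubgroup A) := by
    have : ψ.ker = φ.ker.addSubgroupOf B := by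
      ext ⟨b, hb⟩
      simp [hψ, AddSubgroup.mem_addSubgroupOf, AddMonoidHom.mem_ker]
    rw [this]
    exact Nat.card_congr (AddSubgroup.addSubgroupOfEquivOfLe hkerB).toEquiv
  have hBcard : Nat.card (A₀ ⊓ φ.range : AddSubgroup A) * Nat.card (φ.ker : AddSubgroup A)
      = Nat.card B := by
    have := card_range_mul_card_ker' ψ
    rwa [hψrange, hψker] at this
  -- χ : B →+ A ⧸ A₀
  set χ : B →+ A ⧸ A₀ := (QuotientAddGroup.mk' A₀).comp B.subtype with hχ
  have hχker : Nat.card χ.ker = Nat.card A₀ := by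
    have : χ.ker = A₀.addSubgroupOf B := by
      ext ⟨b, hb⟩
      simp [hχ, AddSubgroup.mem_addSubgroupOf, AddMonoidHom.mem_ker,
        QuotientAddGroup.eq_zero_iff]
    rw [this]
    exact Nat.card_congr (AddSubgroup.addSubgroupOfEquivOfLe hA₀B).toEquiv
  have hfix : ∀ x : A ⧸ A₀, β x = x ↔ x ∈ χ.range := by
    intro x
    obtain ⟨a, rfl⟩ := QuotientAddGroup.mk_surjective x
    rw [hβ a]
    constructor
    · intro h
      refine ⟨⟨a, ?_⟩, rfl⟩
      rw [hmemB, hφ]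
      exact (QuotientAddGroup.eq_iff_sub_mem).mp h
    · rintro ⟨⟨b, hb⟩, hbeq⟩
      have hbeq' : (QuotientAddGroup.mk b : A ⧸ A₀) = QuotientAddGroup.mk a := hbeq
      have h1 : (QuotientAddGroup.mk (τ a) : A ⧸ A₀) = QuotientAddGroup.mk (τ b) := by
        rw [QuotientAddGroup.eq_iff_sub_mem]
        have : τ a - τ b = τ (a - b) := by rw [map_sub]
        rw [this]
        have hab : a - b ∈ A₀ := by
          rw [← QuotientAddGroup.eq_iff_sub_mem]; exact hbeq'.symm
        rw [hA₀ _ hab]; exact hab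
      have h2 : (QuotientAddGroup.mk (τ b) : A ⧸ A₀) = QuotientAddGroup.mk b := by
        rw [QuotientAddGroup.eq_iff_sub_mem, ← hφ]
        exact (hmemB b).mp hb
      rw [h1, h2, hbeq']
  have hfixcard : Nat.card {x : A ⧸ A₀ // β x = x} = Nat.card χ.range :=
    Nat.card_congr (Equiv.subtypeEquivRight hfix)
  have hχeq : Nat.card χ.range * Nat.card A₀ = Nat.card B := by
    have := card_range_mul_card_ker' χ
    rwa [hχker] at this
  -- second formula
  have second : Nat.card {x : A ⧸ A₀ // β x = x} * Nat.card A₀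
      = Nat.card {a : A // τ a = a} * Nat.card (A₀ ⊓ φ.range : AddSubgroup A) := by
    rw [hfixcard, hχeq, ← hBcard, hkercard, mul_comm]
  refine ⟨?_, second⟩
  -- first formula
  have hA : Nat.card φ.range * Nat.card (φ.ker : AddSubgroup A) = Nat.card A :=
    card_range_mul_card_ker' φ
  have hsupinf := card_sup_mul_card_inf' A₀ φ.range
  set F := Nat.card {x : A ⧸ A₀ // β x = x}
  set S := Nat.card (A₀ ⊔ φ.range : AddSubgroup A)
  set I := Nat.card (A₀ ⊓ φ.range : AddSubgroup A)
  set Z := Nat.card A₀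
  set Kk := Nat.card {a : A // τ a = a}
  set R := Nat.card (φ.range : AddSubgroup A)
  set N := Nat.card A
  have hA' : R * Kk = N := by rw [← hA, hkercard]
  have hZI : 0 < Z * I := by
    have hZ : 0 < Z := Nat.card_pos
    have hI : 0 < I := Nat.card_pos
    positivity
  refine Nat.eq_of_mul_eq_mul_right hZI ?_
  calc F * S * (Z * I) = (F * Z) * (S * I) := by ring
    _ = (Kk * I) * (Z * R) := by rw [second, hsupinf]
    _ = (R * Kk) * (Z * I) := by ring
    _ = N * (Z * I) := by rw [hA']
end

section
/- Let p and q be primes with p dividing q − 1, let V be a finite-dimensional 𝔽_p-vector space, and let a, x ∈ GL(V) with |a| = q, |x| = p, and x a x⁻¹ = aʳ for some r ≢ 1 (mod q). Then dim( C_V(x) ∩ [x,V] ) ≥ (1/p) · dim( V / C_V(a) ), where [x,V] = {x(v) − v | v ∈ V} is the image of x − 1 and C_V(x), C_V(a) are fixed subspaces. -/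
open Module

section Aux
open Finset


variable {p : ℕ} {V : Type*} [AddCommGroup V] [Module (ZMod p) V]

private lemma lmul_apply (e₁ e₂ : V ≃ₗ[ZMod p] V) (v : V) : (e₁ * e₂) v = e₁ (e₂ v) := rfl

private lemma one_apply' (v : V) : (1 : V ≃ₗ[ZMod p] V) v = v := rfl

private lemma telescope (x : V ≃ₗ[ZMod p] V) (w : V) (j : ℕ) :
    (((x : V →ₗ[ZMod p] V) - LinearMap.id : V →ₗ[ZMod p] V)) (∑ i ∈ Finset.range j, (x ^ i) w)
      = (x ^ j) w - w := by
  rw [LinearMap.sub_apply, LinearMap.id_apply, LinearEquiv.coe_coe, map_sum]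
  have h1 : ∀ i : ℕ, x ((x ^ i) w) = (x ^ (i + 1)) w := by
    intro i; rw [pow_succ']; rfl
  calc (∑ i ∈ Finset.range j, x ((x ^ i) w)) - ∑ i ∈ Finset.range j, (x ^ i) w
      = ∑ i ∈ Finset.range j, ((x ^ (i + 1)) w - (x ^ i) w) := by
        rw [Finset.sum_sub_distrib]
        congr 1
        exact Finset.sum_congr rfl fun i _ => h1 i
    _ = (x ^ j) w - (x ^ 0) w := Finset.sum_range_sub (fun i => (x ^ i) w) j
    _ = (x ^ j) w - w := by rw [pow_zero]; rfl

private lemma pow_sub_self_mem_range (x : V ≃ₗ[ZMod p] V) (w : V) (j : ℕ) :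
    (x ^ j) w - w ∈ LinearMap.range ((x : V →ₗ[ZMod p] V) - (LinearMap.id : V →ₗ[ZMod p] V)) :=
  ⟨∑ i ∈ Finset.range j, (x ^ i) w, telescope x w j⟩

private lemma sum_pow_mem_range (x : V ≃ₗ[ZMod p] V) (w : V) :
    (∑ j ∈ Finset.range p, (x ^ j) w)
      ∈ LinearMap.range ((x : V →ₗ[ZMod p] V) - (LinearMap.id : V →ₗ[ZMod p] V)) := by
  have hp0 : (p : ℕ) • w = 0 := by
    rw [← Nat.cast_smul_eq_nsmul (ZMod p), ZMod.natCast_self, zero_smul]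
  have : (∑ j ∈ Finset.range p, (x ^ j) w)
      = ∑ j ∈ Finset.range p, ((x ^ j) w - w) := by
    rw [Finset.sum_sub_distrib, Finset.sum_const, Finset.card_range, hp0, sub_zero]
  rw [this]
  exact Submodule.sum_mem _ fun j _ => pow_sub_self_mem_range x w j

private lemma fixed_in_range
    (p q : ℕ) [Fact p.Prime] (hq : q.Prime)
    (V : Type*) [AddCommGroup V] [Module (ZMod p) V]
    (a x : V ≃ₗ[ZMod p] V) (ha : orderOf a = q) (hx : orderOf x = p)
    (r : ℕ) (hr : ¬ r ≡ 1 [MOD q]) (hconj : x * a * x⁻¹ = a ^ r)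
    (u : V) (hu1 : x u = u)
    (hu2 : u ∈ LinearMap.range ((a : V →ₗ[ZMod p] V) - LinearMap.id)) :
    u ∈ LinearMap.range ((x : V →ₗ[ZMod p] V) - LinearMap.id) := by
  classical
  haveI : Fact q.Prime := ⟨hq⟩
  haveI : NeZero q := ⟨hq.ne_zero⟩
  have hp : p ≠ 0 := (Fact.out : p.Prime).ne_zero
  -- a ^ q = 1, x ^ p = 1
  have haq : a ^ q = 1 := by rw [← ha]; exact pow_orderOf_eq_one a
  have hxp : x ^ p = 1 := by have h := pow_orderOf_eq_one x; rwa [hx] at h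
  -- conjugation identities
  have hxa : ∀ j : ℕ, x ^ j * a * (x ^ j)⁻¹ = a ^ (r ^ j) := by
    intro j
    induction j with
    | zero => simp
    | succ j ih =>
      have : x ^ (j + 1) = x * x ^ j := pow_succ' x j
      rw [this, mul_inv_rev]
      calc x * x ^ j * a * ((x ^ j)⁻¹ * x⁻¹)
          = x * (x ^ j * a * (x ^ j)⁻¹) * x⁻¹ := by group
        _ = x * a ^ (r ^ j) * x⁻¹ := by rw [ih]
        _ = (x * a * x⁻¹) ^ (r ^ j) := (conj_pow).symm
        _ = (a ^ r) ^ (r ^ j) := by rw [hconj]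
        _ = a ^ (r ^ (j + 1)) := by rw [← pow_mul, ← pow_succ']
  have hconj2 : ∀ (i j : ℕ), x ^ j * a ^ i * (x ^ j)⁻¹ = a ^ (i * r ^ j) := by
    intro i j
    calc x ^ j * a ^ i * (x ^ j)⁻¹ = (x ^ j * a * (x ^ j)⁻¹) ^ i := (conj_pow).symm
      _ = (a ^ (r ^ j)) ^ i := by rw [hxa j]
      _ = a ^ (i * r ^ j) := by rw [← pow_mul, mul_comm]
  -- r ^ p ≡ 1 [MOD q]
  have hrp : r ^ p ≡ 1 [MOD q] := by
    have h1 : x ^ p * a * (x ^ p)⁻¹ = a ^ (r ^ p) := hxa p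
    rw [hxp] at h1
    simp only [one_mul, inv_one, mul_one] at h1
    have : a ^ (r ^ p) = a ^ 1 := by rw [← h1, pow_one]
    have := pow_eq_pow_iff_modEq.mp this
    rw [ha] at this
    exact this
  -- the unit rbar
  have hrq : ((r : ZMod q)) ^ p = 1 := by
    have := (ZMod.natCast_eq_natCast_iff _ _ _).mpr hrp
    push_cast at this
    exact this
  have hru : IsUnit (r : ZMod q) := IsUnit.of_pow_eq_one hrq hp
  set rb : (ZMod q)ˣ := hru.unit with hrb
  have hrbv : (rb : ZMod q) = (r : ZMod q) := hru.unit_spec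
  have hrbp : rb ^ p = 1 := by
    ext
    push_cast [hrbv]
    exact hrq
  have hordrb : orderOf rb = p := by
    have h1 : orderOf rb ∣ p := orderOf_dvd_of_pow_eq_one hrbp
    rcases ((Fact.out : p.Prime).eq_one_or_self_of_dvd _ h1) with h | h
    · exfalso
      have : rb = 1 := orderOf_eq_one_iff.mp h
      apply hr
      have : (r : ZMod q) = 1 := by rw [← hrbv, this]; rfl
      exact (ZMod.natCast_eq_natCast_iff r 1 q).mp (by rw [this, Nat.cast_one])
    · exact h
  -- fixedness of u under powers of x
  have hfix : ∀ j : ℕ, (x ^ j) u = u := by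
    intro j
    induction j with
    | zero => rfl
    | succ j ih => rw [pow_succ', lmul_apply, ih, hu1]
  have hfixinv : ∀ j : ℕ, ((x ^ j)⁻¹) u = u := by
    intro j
    conv_lhs => rw [← hfix j]
    rw [← lmul_apply, inv_mul_cancel, one_apply']
  -- key pointwise identity
  have hkey : ∀ (z : (ZMod q)ˣ) (j : ℕ),
      (a ^ ((z * rb ^ j : (ZMod q)ˣ) : ZMod q).val) u
        = (x ^ j) ((a ^ (z : ZMod q).val) u) := by
    intro z j
    have hcong : ((z * rb ^ j : (ZMod q)ˣ) : ZMod q).val ≡ (z : ZMod q).val * r ^ j [MOD q] := by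
      rw [← ZMod.natCast_eq_natCast_iff]
      push_cast [ZMod.natCast_val, ZMod.cast_id, hrbv]
      rfl
    have h1 : a ^ ((z * rb ^ j : (ZMod q)ˣ) : ZMod q).val
        = a ^ ((z : ZMod q).val * r ^ j) := by
      apply pow_eq_pow_iff_modEq.mpr
      rw [ha]; exact hcong
    rw [h1, ← hconj2, lmul_apply, lmul_apply, hfixinv]
  -- the basic sum identity
  obtain ⟨w, hw⟩ := hu2
  have hw' : a w - w = u := by
    rw [← hw]; simp [LinearMap.sub_apply]
  have hsum0 : ∑ i ∈ Finset.range q, (a ^ i) u = 0 := by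
    have : ∀ i : ℕ, (a ^ i) u = (a ^ (i + 1)) w - (a ^ i) w := by
      intro i
      rw [← hw', map_sub, pow_succ, lmul_apply]
    rw [Finset.sum_congr rfl fun i _ => this i, Finset.sum_range_sub (fun i => (a ^ i) w) q,
      haq]
    exact sub_self _
  -- transfer to sum over ZMod q
  have hsumZ : ∑ z : ZMod q, (a ^ z.val) u = 0 := by
    rw [← hsum0]
    exact Finset.sum_bij' (fun (z : ZMod q) _ => z.val) (fun (i : ℕ) _ => (i : ZMod q))
      (fun z _ => Finset.mem_range.mpr (ZMod.val_lt z))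
      (fun i _ => Finset.mem_univ _)
      (fun z _ => ZMod.natCast_rightInverse z)
      (fun i hi => ZMod.val_cast_of_lt (Finset.mem_range.mp hi))
      (fun z _ => rfl)
  -- split off zero
  have hsplit : ∑ z ∈ Finset.univ.erase (0 : ZMod q), (a ^ z.val) u = -u := by
    have h1 := Finset.sum_erase_add Finset.univ (fun z : ZMod q => (a ^ z.val) u)
      (Finset.mem_univ (0 : ZMod q))
    simp only [ZMod.val_zero, pow_zero, one_apply'] at h1
    rw [hsumZ] at h1
    exact eq_neg_of_add_eq_zero_left h1
  -- to units
  have hunits : ∑ z : (ZMod q)ˣ, (a ^ ((z : ZMod q)).val) u = -u := by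
    rw [← hsplit]
    exact Finset.sum_bij' (fun (z : (ZMod q)ˣ) _ => (z : ZMod q))
      (fun z hz => Units.mk0 z (Finset.mem_erase.mp hz).1)
      (fun z _ => Finset.mem_erase.mpr ⟨Units.ne_zero z, Finset.mem_univ _⟩)
      (fun z _ => Finset.mem_univ _)
      (fun z _ => Units.mk0_val z _)
      (fun z hz => Units.val_mk0 _)
      (fun z _ => rfl)
  -- fiberwise decomposition over cosets of H
  set H := Subgroup.zpowers rb with hH
  haveI : Fintype ((ZMod q)ˣ ⧸ H) := Fintype.ofFinite _
  have hfib : ∑ c : (ZMod q)ˣ ⧸ H,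
      ∑ z ∈ Finset.univ.filter (fun z => (QuotientGroup.mk z : (ZMod q)ˣ ⧸ H) = c),
        (a ^ ((z : ZMod q)).val) u
      = ∑ z : (ZMod q)ˣ, (a ^ ((z : ZMod q)).val) u :=
    Finset.sum_fiberwise _ _ _
  have hfiber : ∀ c : (ZMod q)ˣ ⧸ H,
      (∑ z ∈ Finset.univ.filter (fun z => (QuotientGroup.mk z : (ZMod q)ˣ ⧸ H) = c),
        (a ^ ((z : ZMod q)).val) u)
      ∈ LinearMap.range ((x : V →ₗ[ZMod p] V) - LinearMap.id) := by
    intro c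
    set g₀ : (ZMod q)ˣ := c.out with hg₀
    have hmkg₀ : (QuotientGroup.mk g₀ : (ZMod q)ˣ ⧸ H) = c := QuotientGroup.out_eq' c
    have hbij : ∑ j ∈ Finset.range p, (x ^ j) ((a ^ ((g₀ : ZMod q)).val) u)
        = ∑ z ∈ Finset.univ.filter (fun z => (QuotientGroup.mk z : (ZMod q)ˣ ⧸ H) = c),
          (a ^ ((z : ZMod q)).val) u := by
      refine Finset.sum_bij (fun j _ => g₀ * rb ^ j) ?_ ?_ ?_ ?_
      · intro j _
        rw [Finset.mem_filter]
        refine ⟨Finset.mem_univ _, ?_⟩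
        rw [QuotientGroup.mk_mul_of_mem g₀ (H.pow_mem (Subgroup.mem_zpowers rb) j), hmkg₀]
      · intro j1 h1 j2 h2 he
        have := mul_left_cancel he
        have hmod := pow_eq_pow_iff_modEq.mp this
        rw [hordrb] at hmod
        rw [Finset.mem_range] at h1 h2
        calc j1 = j1 % p := (Nat.mod_eq_of_lt h1).symm
          _ = j2 % p := hmod
          _ = j2 := Nat.mod_eq_of_lt h2
      · intro z hz
        rw [Finset.mem_filter] at hz
        have : g₀⁻¹ * z ∈ H := QuotientGroup.eq.mp (hmkg₀.trans hz.2.symm)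
        obtain ⟨k, hk⟩ := Subgroup.mem_zpowers_iff.mp this
        have hp' : (0 : ℤ) < (p : ℤ) := by exact_mod_cast Nat.pos_of_ne_zero hp
        refine ⟨(k % (p : ℤ)).toNat, Finset.mem_range.mpr ?_, ?_⟩
        · have h1 : k % (p : ℤ) < (p : ℤ) := Int.emod_lt_of_pos k hp'
          omega
        · have hnn : (0 : ℤ) ≤ k % (p : ℤ) := Int.emod_nonneg k (by exact_mod_cast hp)
          have h3 : rb ^ ((k % (p : ℤ)).toNat) = rb ^ k := by
            rw [← zpow_natCast, Int.toNat_of_nonneg hnn, ← hordrb, zpow_mod_orderOf]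
          show g₀ * rb ^ ((k % (p : ℤ)).toNat) = z
          rw [h3, hk, mul_inv_cancel_left]
      · intro j _
        exact (hkey g₀ j).symm
    rw [← hbij]
    exact sum_pow_mem_range x _
  have hneg : -u ∈ LinearMap.range ((x : V →ₗ[ZMod p] V) - LinearMap.id) := by
    rw [← hunits, ← hfib]
    exact Submodule.sum_mem _ fun c _ => hfiber c
  exact neg_mem_iff.mp hneg

private lemma coe_pow_lin {p : ℕ} {V : Type*} [AddCommGroup V] [Module (ZMod p) V]
    (x : V ≃ₗ[ZMod p] V) (n : ℕ) :
    ((x ^ n : V ≃ₗ[ZMod p] V) : V →ₗ[ZMod p] V) = (x : V →ₗ[ZMod p] V) ^ n := by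
  induction n with
  | zero => rw [pow_zero, pow_zero, LinearEquiv.coe_toLinearMap_one]; rfl
  | succ n ih => rw [pow_succ, pow_succ, LinearEquiv.coe_toLinearMap_mul, ih]

end Aux

/-- Let `p, q` be primes with `p ∣ q − 1`, `V` a finite-dimensional
`𝔽_p`-vector space, and `a, x ∈ GL(V)` with `|a| = q`, `|x| = p`, `x a x⁻¹ = aʳ`
with `r ≢ 1 (mod q)`.  Then
`dim(C_V(x) ∩ [x,V]) ≥ (1/p) · dim(V / C_V(a))`. -/
theorem jordan_blocks_ge_of_pq_action
    (p q : ℕ) [Fact p.Prime] (hq : q.Prime) (hpq : p ∣ q - 1)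
    (V : Type*) [AddCommGroup V] [Module (ZMod p) V] [FiniteDimensional (ZMod p) V]
    (a x : V ≃ₗ[ZMod p] V) (ha : orderOf a = q) (hx : orderOf x = p)
    (r : ℕ) (hr : ¬ r ≡ 1 [MOD q]) (hconj : x * a * x⁻¹ = a ^ r) :
    finrank (ZMod p)
        ↥(LinearMap.ker ((x : V →ₗ[ZMod p] V) - LinearMap.id) ⊓
          LinearMap.range ((x : V →ₗ[ZMod p] V) - LinearMap.id)) * p
      ≥ finrank (ZMod p)
          (V ⧸ LinearMap.ker ((a : V →ₗ[ZMod p] V) - LinearMap.id)) := by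
  classical
  set f : V →ₗ[ZMod p] V := (x : V →ₗ[ZMod p] V) - LinearMap.id with hf
  set g : V →ₗ[ZMod p] V := (a : V →ₗ[ZMod p] V) - LinearMap.id with hg
  set U : Submodule (ZMod p) V := LinearMap.range g with hU
  set F : Submodule (ZMod p) V := LinearMap.ker f with hF
  have f_apply : ∀ v : V, f v = x v - v := by
    intro v; rw [hf, LinearMap.sub_apply, LinearMap.id_apply, LinearEquiv.coe_coe]
  have g_apply : ∀ v : V, g v = a v - v := by
    intro v; rw [hg, LinearMap.sub_apply, LinearMap.id_apply, LinearEquiv.coe_coe]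
  -- RHS = finrank U
  have hquot : finrank (ZMod p) (V ⧸ LinearMap.ker g) = finrank (ZMod p) U :=
    LinearEquiv.finrank_eq (LinearMap.quotKerEquivRange g)
  -- U is stable under f
  have hstab : Submodule.map f U ≤ U := by
    rintro _ ⟨_, ⟨w, rfl⟩, rfl⟩
    have h2 : g (∑ i ∈ Finset.range r, (a ^ i) (x w)) = (a ^ r) (x w) - (x w) :=
      telescope a (x w) r
    have hxa : x (a w) = (a ^ r) (x w) := by
      rw [← lmul_apply, ← lmul_apply]
      congr 1
      rw [← hconj]
      group
    have h1 : f (g w) = ((a ^ r) (x w) - x w) - g w := by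
      rw [f_apply, g_apply, map_sub, hxa]
    rw [h1, ← h2]
    exact sub_mem (LinearMap.mem_range_self g _) (LinearMap.mem_range_self g w)
  have hUj : ∀ j : ℕ, Submodule.map (f ^ j) U ≤ U := by
    intro j
    induction j with
    | zero => rw [pow_zero, Module.End.one_eq_id, Submodule.map_id]
    | succ j ih =>
      rw [pow_succ', Module.End.mul_eq_comp, Submodule.map_comp]
      exact le_trans (Submodule.map_mono ih) hstab
  -- nontriviality and f ^ p = 0
  have hnt : Nontrivial V := by
    by_contra h
    rw [not_nontrivial_iff_subsingleton] at h
    have h1 : a = 1 := LinearEquiv.ext fun v => Subsingleton.elim _ _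
    rw [h1, orderOf_one] at ha
    exact hq.one_lt.ne' ha.symm
  haveI := hnt
  haveI : CharP (Module.End (ZMod p) V) p :=
    charP_of_injective_algebraMap' (A := Module.End (ZMod p) V) (ZMod p) p
  have hxp : (x : V →ₗ[ZMod p] V) ^ p = 1 := by
    have h := pow_orderOf_eq_one x
    rw [hx] at h
    rw [← coe_pow_lin, h, LinearEquiv.coe_toLinearMap_one]
    rfl
  have hfp : f ^ p = 0 := by
    have hc : Commute ((x : V →ₗ[ZMod p] V)) (1 : V →ₗ[ZMod p] V) := Commute.one_right _
    have h1 : f = (x : V →ₗ[ZMod p] V) - 1 := by rw [hf]; rfl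
    rw [h1, sub_pow_char_of_commute _ hc, hxp, one_pow, sub_self]
  -- chain inequality
  have hchain : ∀ j : ℕ, finrank (ZMod p) (Submodule.map (f ^ j) U)
      ≤ finrank (ZMod p) (Submodule.map (f ^ (j + 1)) U) + finrank (ZMod p) ↥(F ⊓ U) := by
    intro j
    set Uj := Submodule.map (f ^ j) U with hUjdef
    have hrn := LinearMap.finrank_range_add_finrank_ker (f.domRestrict Uj)
    have hrange : LinearMap.range (f.domRestrict Uj) = Submodule.map (f ^ (j + 1)) U := by
      rw [LinearMap.range_domRestrict, hUjdef, pow_succ', Module.End.mul_eq_comp,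
        Submodule.map_comp]
    have hker : finrank (ZMod p) (LinearMap.ker (f.domRestrict Uj))
        = finrank (ZMod p) ↥(F ⊓ Uj) := by
      rw [LinearMap.ker_domRestrict]
      have heq : (LinearMap.ker f).comap Uj.subtype = (F ⊓ Uj).comap Uj.subtype := by
        ext ⟨v, hv⟩
        simp [Submodule.mem_comap, Submodule.mem_inf, hv, hF]
      rw [heq]
      exact LinearEquiv.finrank_eq (Submodule.comapSubtypeEquivOfLe inf_le_right)
    have hmono : finrank (ZMod p) ↥(F ⊓ Uj)
        ≤ finrank (ZMod p) ↥(F ⊓ U) :=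
      Submodule.finrank_mono (inf_le_inf_left F (hUj j))
    rw [hrange, hker] at hrn
    omega
  have hiter : ∀ n : ℕ, finrank (ZMod p) U
      ≤ finrank (ZMod p) (Submodule.map (f ^ n) U) + n * finrank (ZMod p) ↥(F ⊓ U) := by
    intro n
    induction n with
    | zero =>
      rw [pow_zero, Module.End.one_eq_id, Submodule.map_id]
      omega
    | succ n ih =>
      have := hchain n
      have harith : (n + 1) * finrank (ZMod p) ↥(F ⊓ U)
          = n * finrank (ZMod p) ↥(F ⊓ U) + finrank (ZMod p) ↥(F ⊓ U) := by ring
      omega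
  have hUbound : finrank (ZMod p) U ≤ p * finrank (ZMod p) ↥(F ⊓ U) := by
    have := hiter p
    rw [hfp, Submodule.map_zero] at this
    simpa [finrank_bot, mul_comm] using this
  -- F ⊓ U ≤ F ⊓ range f
  have hle : F ⊓ U ≤ F ⊓ LinearMap.range f := by
    intro v hv
    rw [Submodule.mem_inf] at hv ⊢
    refine ⟨hv.1, ?_⟩
    have hxv : x v = v := by
      have h1 : f v = 0 := hv.1
      rw [f_apply] at h1
      have := sub_eq_zero.mp h1
      exact this
    exact fixed_in_range p q hq V a x ha hx r hr hconj v hxv hv.2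
  have hmono2 : finrank (ZMod p) ↥(F ⊓ U)
      ≤ finrank (ZMod p) ↥(F ⊓ LinearMap.range f) :=
    Submodule.finrank_mono hle
  rw [ge_iff_le, hquot]
  calc finrank (ZMod p) U
      ≤ p * finrank (ZMod p) ↥(F ⊓ U) := hUbound
    _ ≤ p * finrank (ZMod p) ↥(F ⊓ LinearMap.range f) :=
        Nat.mul_le_mul_left _ hmono2
    _ = finrank (ZMod p) ↥(F ⊓ LinearMap.range f) * p := mul_comm _ _
end

section
/- Let H = SL(2,3) (the binary tetrahedral group, a nonsplit central extension of C₂ by A₄), let z be the unique element of order 2 in H, and let V be a finite-dimensional 𝔽₃-vector space with an action of H such that z acts as −Id. Then for every element x ∈ H of order 3, dim C_V(x) ≤ (1/2)·dim V. -/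
open Module

instance : DecidableEq (Matrix.SpecialLinearGroup (Fin 2) (ZMod 3)) :=
  fun _ _ => decidable_of_iff _ Subtype.ext_iff.symm

/-- The central involution of `SL(2,3)`, concretely. -/
def sl23_zc : Matrix.SpecialLinearGroup (Fin 2) (ZMod 3) := ⟨!![2,0;0,2], by decide⟩

lemma sl23_unique_invol : ∀ g : Matrix.SpecialLinearGroup (Fin 2) (ZMod 3),
    g * g = 1 → g ≠ 1 → g = sl23_zc := by decide

lemma sl23_key : ∀ x : Matrix.SpecialLinearGroup (Fin 2) (ZMod 3), x*x*x = 1 → x ≠ 1 →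
    ∃ q : Matrix.SpecialLinearGroup (Fin 2) (ZMod 3),
      (q*x*q⁻¹*x = sl23_zc ∨ (q*x*q⁻¹*x)*(q*x*q⁻¹*x) = sl23_zc ∨
        (q*x*q⁻¹*x)*(q*x*q⁻¹*x)*(q*x*q⁻¹*x) = sl23_zc) := by decide

/-- Let `H = SL(2,3)`, let `z ∈ H` be the (unique) element of order 2,
and let `V` be a finite-dimensional `𝔽₃`-vector space with an `H`-action on which
`z` acts as `−Id`.  Then every element `x ∈ H` of order 3 satisfies
`dim C_V(x) ≤ (1/2)·dim V`. -/
theorem sl2_three_fixed_space_le_half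
    (V : Type*) [AddCommGroup V] [Module (ZMod 3) V] [FiniteDimensional (ZMod 3) V]
    (ρ : Representation (ZMod 3) (Matrix.SpecialLinearGroup (Fin 2) (ZMod 3)) V)
    (z : Matrix.SpecialLinearGroup (Fin 2) (ZMod 3)) (hz : orderOf z = 2)
    (hzρ : ∀ v : V, ρ z v = -v) :
    ∀ x : Matrix.SpecialLinearGroup (Fin 2) (ZMod 3), orderOf x = 3 →
      2 * finrank (ZMod 3) (LinearMap.ker (ρ x - LinearMap.id))
        ≤ finrank (ZMod 3) V := by
  intro x hx
  have hx3 : x * x * x = 1 := by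
    have h := pow_orderOf_eq_one x
    rw [hx, pow_succ, pow_succ, pow_one] at h
    exact h
  have hx1 : x ≠ 1 := by
    intro h; rw [h, orderOf_one] at hx; norm_num at hx
  have hzzc : z = sl23_zc := by
    refine sl23_unique_invol z ?_ ?_
    · have h := pow_orderOf_eq_one z
      rwa [hz, pow_succ, pow_one] at h
    · intro h; rw [h, orderOf_one] at hz; norm_num at hz
  obtain ⟨q, hq⟩ := sl23_key x hx3 hx1
  set x' : Matrix.SpecialLinearGroup (Fin 2) (ZMod 3) := q * x * q⁻¹ with hx'
  set W := LinearMap.ker (ρ x - LinearMap.id) with hW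
  set W' := LinearMap.ker (ρ x' - LinearMap.id) with hW'
  have memW : ∀ v : V, v ∈ W ↔ ρ x v = v := by
    intro v
    simp [hW, LinearMap.mem_ker, LinearMap.sub_apply, sub_eq_zero]
  have memW' : ∀ v : V, v ∈ W' ↔ ρ x' v = v := by
    intro v
    simp [hW', LinearMap.mem_ker, LinearMap.sub_apply, sub_eq_zero]
  -- disjointness of the two fixed spaces
  have hdisj : W ⊓ W' = ⊥ := by
    rw [eq_bot_iff]
    intro v hv
    rw [Submodule.mem_inf] at hv
    obtain ⟨hv1, hv2⟩ := hv
    have h1 : ρ x v = v := (memW v).mp hv1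
    have h2 : ρ x' v = v := (memW' v).mp hv2
    have hs : ρ (x' * x) v = v := by rw [map_mul, Module.End.mul_apply, h1, h2]
    have hzv : ρ sl23_zc v = v := by
      rcases hq with h | h | h
      · rw [← h]; exact hs
      · rw [← h, map_mul, Module.End.mul_apply, hs, hs]
      · rw [← h, map_mul, map_mul, Module.End.mul_apply, Module.End.mul_apply, hs, hs, hs]
    rw [← hzzc, hzρ v] at hzv
    have h2v : v + v = 0 := neg_eq_iff_add_eq_zero.mp hzv
    have h2s : (2 : ZMod 3) • v = 0 := by rw [two_smul]; exact h2v
    have hv0 : v = 0 := by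
      have e1 : v = ((2 : ZMod 3) * 2) • v := by
        rw [show ((2 : ZMod 3) * 2) = (1 : ZMod 3) by decide, one_smul]
      rw [mul_smul, h2s, smul_zero] at e1
      exact e1
    simp [hv0]
  -- `ρ q⁻¹` and `ρ q` are mutually inverse
  have hq1 : ∀ v : V, ρ q⁻¹ (ρ q v) = v := by
    intro v
    rw [← Module.End.mul_apply, ← map_mul, inv_mul_cancel, map_one, Module.End.one_apply]
  have hq2 : ∀ v : V, ρ q (ρ q⁻¹ v) = v := by
    intro v
    rw [← Module.End.mul_apply, ← map_mul, mul_inv_cancel, map_one, Module.End.one_apply]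
  -- `W'` is the image of `W` under the invertible map `ρ q`
  have hmap : W' = W.map (ρ q) := by
    ext w
    rw [Submodule.mem_map]
    constructor
    · intro hw
      refine ⟨ρ q⁻¹ w, ?_, hq2 w⟩
      rw [memW]
      have hcomm : x * q⁻¹ = q⁻¹ * x' := by rw [hx']; group
      calc ρ x (ρ q⁻¹ w) = ρ (x * q⁻¹) w := by rw [map_mul ρ x q⁻¹, Module.End.mul_apply]
        _ = ρ (q⁻¹ * x') w := by rw [hcomm]
        _ = ρ q⁻¹ (ρ x' w) := by rw [map_mul ρ q⁻¹ x', Module.End.mul_apply]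
        _ = ρ q⁻¹ w := by rw [(memW' w).mp hw]
    · rintro ⟨u, hu, rfl⟩
      rw [memW']
      have hcomm : x' * q = q * x := by rw [hx']; group
      calc ρ x' (ρ q u) = ρ (x' * q) u := by rw [map_mul ρ x' q, Module.End.mul_apply]
        _ = ρ (q * x) u := by rw [hcomm]
        _ = ρ q (ρ x u) := by rw [map_mul ρ q x, Module.End.mul_apply]
        _ = ρ q u := by rw [(memW u).mp hu]
  have hinj : Function.Injective (ρ q) := Function.LeftInverse.injective hq1
  have hrank : finrank (ZMod 3) W' = finrank (ZMod 3) W := by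
    rw [hmap]
    exact (LinearEquiv.finrank_eq (Submodule.equivMapOfInjective (ρ q) hinj W)).symm
  have hsum := Submodule.finrank_sup_add_finrank_inf_eq W W'
  rw [hdisj, finrank_bot, add_zero, hrank] at hsum
  have hle : finrank (ZMod 3) ↥(W ⊔ W') ≤ finrank (ZMod 3) V := Submodule.finrank_le _
  omega
end

section
/- Let p be a prime, G a finite group, Z ≤ Z(G) a nontrivial central subgroup of p-power order, and V a finite 𝔽_pG-module on which G acts faithfully. Suppose there are submodules 0 ≠ V₀ < V₁ < V such that G acts trivially on V₀ and on V/V₁, and Z acts trivially on V₁ and on V/V₀. Then for each g ∈ G ∖ Z, there is at most one element h in the coset gZ with rank([h, V₁/V₀]) = rank([h, V]), where [h, M] denotes the image of the endomorphism m ↦ h·m − m of a module M. -/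
open Module

lemma aux_rank {K : Type*} [Field K] {V : Type*} [AddCommGroup V] [Module K V]
    [FiniteDimensional K V] (A : V →ₗ[K] V) (V₀ V₁ : Submodule K V)
    (hr : finrank K (LinearMap.range (V₀.mkQ ∘ₗ A ∘ₗ V₁.subtype))
        = finrank K (LinearMap.range A)) :
    (∀ x : V, A x ∈ V₀ → A x = 0) ∧ (∀ v : V, ∃ w ∈ V₁, A v - A w ∈ V₀) := by
  set π := V₀.mkQ
  have hrange1 : LinearMap.range (π ∘ₗ A ∘ₗ V₁.subtype)
      = (Submodule.map A V₁).map π := by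
    rw [LinearMap.range_comp, LinearMap.range_comp, Submodule.range_subtype]
  have hrange2 : LinearMap.range (π ∘ₗ A) = (LinearMap.range A).map π := by
    rw [LinearMap.range_comp]
  have hle1 : LinearMap.range (π ∘ₗ A ∘ₗ V₁.subtype) ≤ LinearMap.range (π ∘ₗ A) := by
    rw [hrange1, hrange2]
    exact Submodule.map_mono (by
      rintro _ ⟨w, hw, rfl⟩; exact ⟨w, rfl⟩)
  have hle1' : finrank K (LinearMap.range (π ∘ₗ A ∘ₗ V₁.subtype))
      ≤ finrank K (LinearMap.range (π ∘ₗ A)) := Submodule.finrank_mono hle1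
  have hle2 : finrank K (LinearMap.range (π ∘ₗ A)) ≤ finrank K (LinearMap.range A) := by
    rw [hrange2]; exact Submodule.finrank_map_le π (LinearMap.range A)
  have heq2 : finrank K (LinearMap.range (π ∘ₗ A)) = finrank K (LinearMap.range A) :=
    le_antisymm hle2 (hr ▸ hle1')
  have heq1 : finrank K (LinearMap.range (π ∘ₗ A ∘ₗ V₁.subtype))
      = finrank K (LinearMap.range (π ∘ₗ A)) :=
    le_antisymm hle1' (by omega)
  constructor
  · -- injectivity of π on range A
    intro x hx
    have h1 : LinearMap.range (π ∘ₗ (LinearMap.range A).subtype)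
        = (LinearMap.range A).map π := by
      rw [LinearMap.range_comp, Submodule.range_subtype]
    have h2 : finrank K (LinearMap.range (π ∘ₗ (LinearMap.range A).subtype))
        = finrank K (LinearMap.range A) := by rw [h1, ← hrange2, heq2]
    have h3 := LinearMap.finrank_range_add_finrank_ker (π ∘ₗ (LinearMap.range A).subtype)
    have h4 : finrank K (LinearMap.ker (π ∘ₗ (LinearMap.range A).subtype)) = 0 := by omega
    have h5 : LinearMap.ker (π ∘ₗ (LinearMap.range A).subtype) = ⊥ :=
      Submodule.finrank_eq_zero.mp h4
    have hx' : (⟨A x, LinearMap.mem_range_self A x⟩ :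
        (LinearMap.range A)) ∈ LinearMap.ker (π ∘ₗ (LinearMap.range A).subtype) := by
      simp only [LinearMap.mem_ker, LinearMap.comp_apply, Submodule.subtype_apply]
      rw [Submodule.mkQ_apply, Submodule.Quotient.mk_eq_zero]
      exact hx
    rw [h5, Submodule.mem_bot] at hx'
    exact congrArg Subtype.val hx'
  · intro v
    have heqset : LinearMap.range (π ∘ₗ A ∘ₗ V₁.subtype) = LinearMap.range (π ∘ₗ A) :=
      Submodule.eq_of_le_of_finrank_eq hle1 heq1
    have hv : π (A v) ∈ LinearMap.range (π ∘ₗ A ∘ₗ V₁.subtype) := by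
      rw [heqset]; exact ⟨v, rfl⟩
    obtain ⟨⟨w, hw⟩, hweq⟩ := hv
    refine ⟨w, hw, ?_⟩
    have h6 : π (A v - A w) = 0 := by
      have hweq' : π (A w) = π (A v) := hweq
      rw [map_sub, hweq', sub_self]
    rwa [Submodule.mkQ_apply, Submodule.Quotient.mk_eq_zero] at h6


/-- Let `p` be a prime, `G` a finite group, `Z ≤ Z(G)` nontrivial of
`p`-power order, and `V` a faithful finite `𝔽_pG`-module with submodules
`0 ≠ V₀ < V₁ < V` where `G` acts trivially on `V₀` and `V/V₁`, and `Z` acts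
trivially on `V₁` and `V/V₀`.  Then for each `g ∈ G ∖ Z` there is at most one
`h ∈ gZ` with `rank([h, V₁/V₀]) = rank([h, V])`. -/
theorem at_most_one_in_coset_with_equal_rank
    (p : ℕ) [Fact p.Prime] (G : Type*) [Group G] [Finite G]
    (Z : Subgroup G) (hZc : Z ≤ Subgroup.center G) (hZne : Z ≠ ⊥)
    (hZp : IsPGroup p Z)
    (V : Type*) [AddCommGroup V] [Module (ZMod p) V] [FiniteDimensional (ZMod p) V]
    (ρ : Representation (ZMod p) G V) (hfaith : Function.Injective ρ)
    (V₀ V₁ : Submodule (ZMod p) V)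
    (hV0ne : V₀ ≠ ⊥) (hV01 : V₀ < V₁) (hV1 : V₁ < ⊤)
    (hGV0 : ∀ g : G, ∀ v ∈ V₀, ρ g v = v)
    (hGV1 : ∀ (g : G) (v : V), ρ g v - v ∈ V₁)
    (hZV1 : ∀ z ∈ Z, ∀ v ∈ V₁, ρ z v = v)
    (hZV0 : ∀ z ∈ Z, ∀ v : V, ρ z v - v ∈ V₀) :
    ∀ g : G, g ∉ Z →
      {h : G | g⁻¹ * h ∈ Z ∧
        finrank (ZMod p)
            (LinearMap.range (V₀.mkQ ∘ₗ (ρ h - LinearMap.id) ∘ₗ V₁.subtype))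
          = finrank (ZMod p) (LinearMap.range (ρ h - LinearMap.id))}.Subsingleton := by
  intro g hg h₁ hh₁ h₂ hh₂
  obtain ⟨hz₁, hr₁⟩ := hh₁
  obtain ⟨hz₂, hr₂⟩ := hh₂
  set z : G := h₁⁻¹ * h₂ with hzdef
  have hzZ : z ∈ Z := by
    have : z = (g⁻¹ * h₁)⁻¹ * (g⁻¹ * h₂) := by
      rw [hzdef]; simp [mul_inv_rev, mul_assoc]
    rw [this]; exact mul_mem (inv_mem hz₁) hz₂
  set A : V →ₗ[ZMod p] V := ρ h₁ - LinearMap.id with hA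
  set A' : V →ₗ[ZMod p] V := ρ h₂ - LinearMap.id with hA'
  set B : V →ₗ[ZMod p] V := ρ z - LinearMap.id with hB
  have hBV₀ : ∀ v : V, B v ∈ V₀ := fun v => hZV0 z hzZ v
  have hBV₁ : ∀ v ∈ V₁, B v = 0 := by
    intro v hv
    simp only [hB, LinearMap.sub_apply, LinearMap.id_apply, sub_eq_zero]
    exact hZV1 z hzZ v hv
  have hsplit : ∀ v : V, A' v = A v + B v := by
    intro v
    simp only [hA, hA', hB, LinearMap.sub_apply, LinearMap.id_apply]
    have h12 : h₂ = h₁ * z := by rw [hzdef, mul_inv_cancel_left]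
    have : ρ h₂ v = ρ h₁ (ρ z v) := by
      rw [h12, map_mul]; rfl
    rw [this]
    have hzv : ρ z v = v + (ρ z v - v) := by abel
    rw [hzv, map_add, hGV0 h₁ _ (hZV0 z hzZ v)]
    abel
  obtain ⟨hD₁, hE₁⟩ := aux_rank A V₀ V₁ hr₁
  obtain ⟨hD₂, _⟩ := aux_rank A' V₀ V₁ hr₂
  have hBzero : ∀ v : V, B v = 0 := by
    intro v
    obtain ⟨w, hw, hvw⟩ := hE₁ v
    have hAvw : A (v - w) ∈ V₀ := by rwa [map_sub]
    have hAvw0 : A (v - w) = 0 := hD₁ _ hAvw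
    have hA'vw : A' (v - w) = B v := by
      rw [hsplit, hAvw0, zero_add, map_sub, hBV₁ w hw, sub_zero]
    have : A' (v - w) ∈ V₀ := by rw [hA'vw]; exact hBV₀ v
    have := hD₂ _ this
    rwa [hA'vw] at this
  have hzone : z = 1 := by
    apply hfaith
    ext v
    have := hBzero v
    simp only [hB, LinearMap.sub_apply, LinearMap.id_apply, sub_eq_zero] at this
    simpa using this
  have h := hzone
  rw [hzdef] at h
  exact inv_mul_eq_one.mp h
end

section
/- With V = 𝔽₄³, the hermitian form 𝔥(v,w) = v̄ᵗw, and the sets of lines 𝒰 = {⟨u₁⟩,…,⟨u₆⟩} and ℬ = {⟨b_{ij}⟩ : i ∈ {1,2,3}, j ∈ {1,2}} as above: for any D ∈ GL₃(𝔽₄), the action of D on V permutes the members of 𝒰 if and only if the action of D̄ᵗ (the conjugate transpose of D) on V permutes the members of ℬ. -/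
/-- The six vectors `u₁,…,u₆ ∈ 𝔽₄³`, for a fixed `ω ∈ 𝔽₄ ∖ 𝔽₂`. -/
noncomputable def uvecF4 (ω : GaloisField 2 2) : Fin 6 → Fin 3 → GaloisField 2 2 :=
  ![![1, 0, 0], ![0, 1, 0], ![0, 0, 1], ![1, 1, 1], ![1, ω, ω^2], ![1, ω^2, ω]]

/-- The vectors `b_{ij} ∈ 𝔽₄³`: `k`-th entry `ω^j` if `k = i`, else `1`. -/
noncomputable def bvecF4 (ω : GaloisField 2 2) (i : Fin 3) (j : Fin 2) :
    Fin 3 → GaloisField 2 2 :=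
  fun k => if k = i then ω ^ ((j : ℕ) + 1) else 1

namespace F4Stmt11

local notation "F" => GaloisField 2 2

/-! ### A concrete, decidable model of `𝔽₄` -/

inductive K | O | I | A | B deriving DecidableEq

instance : Fintype K :=
  ⟨⟨{K.O, K.I, K.A, K.B}, by decide⟩, fun x => by cases x <;> decide⟩

def kadd : K → K → K
  | .O, x => x
  | x, .O => x
  | .I, .I => .O
  | .I, .A => .B
  | .I, .B => .A
  | .A, .I => .B
  | .A, .A => .O
  | .A, .B => .I
  | .B, .I => .A
  | .B, .A => .I
  | .B, .B => .O

def kmul : K → K → K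
  | .O, _ => .O
  | _, .O => .O
  | .I, x => x
  | x, .I => x
  | .A, .A => .B
  | .A, .B => .I
  | .B, .A => .I
  | .B, .B => .A

def uK : Fin 6 → Fin 3 → K :=
  ![![.I,.O,.O],![.O,.I,.O],![.O,.O,.I],![.I,.I,.I],![.I,.A,.B],![.I,.B,.A]]

def bK (i : Fin 3) (j : Fin 2) : Fin 3 → K :=
  fun k => if k = i then (if j = 0 then .A else .B) else .I

def hK (v w : Fin 3 → K) : K :=
  kadd (kadd (kmul (kmul (v 0) (v 0)) (w 0)) (kmul (kmul (v 1) (v 1)) (w 1)))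
      (kmul (kmul (v 2) (v 2)) (w 2))

lemma baseK : ∀ i i' j', hK (uK i) (bK i' j') ≠ .O := by decide

lemma uK_ne (i : Fin 6) : uK i ≠ (fun _ => .O) := by revert i; decide

lemma bK_ne (i : Fin 3) (j : Fin 2) : bK i j ≠ (fun _ => .O) := by revert i j; decide

lemma hardU : ∀ a : Fin 3 → K, a ≠ (fun _ => .O) → (∀ i j, hK a (bK i j) ≠ .O) →
    ∃ i c, c ≠ K.O ∧ ∀ k, a k = kmul c (uK i k) := by decide

lemma hardB : ∀ a : Fin 3 → K, a ≠ (fun _ => .O) → (∀ i, hK (uK i) a ≠ .O) →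
    ∃ i j c, c ≠ K.O ∧ ∀ k, a k = kmul c (bK i j k) := by decide

/-! ### Basic facts about `𝔽₄` -/

lemma h2F : (2 : F) = 0 := by
  have := CharP.cast_eq_zero F 2
  exact_mod_cast this

lemma pow4 (x : F) : x ^ (4:ℕ) = x := by
  haveI : Fintype F := Fintype.ofFinite _
  have h := FiniteField.pow_card x
  rwa [← Nat.card_eq_fintype_card, GaloisField.card 2 2 (by norm_num),
    show (2:ℕ)^2 = 4 by norm_num] at h

variable {ω : GaloisField 2 2}

lemma omega_sq (hω0 : ω ≠ 0) (hω1 : ω ≠ 1) : ω ^ 2 = ω + 1 := by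
  have h2 := h2F
  have key : ω * (ω + 1) * (ω^2 + ω + 1) = 0 := by
    have h4 := pow4 ω
    linear_combination h4 + (ω^3 + ω^2 + ω) * h2
  have hne1 : ω + 1 ≠ 0 := by
    intro h
    exact hω1 (by linear_combination h - h2)
  rcases mul_eq_zero.mp key with h | h
  · rcases mul_eq_zero.mp h with h | h
    · exact absurd h hω0
    · exact absurd h hne1
  · linear_combination h - (ω + 1) * h2

lemma elemsF (hω0 : ω ≠ 0) (hω1 : ω ≠ 1) (x : F) :
    x = 0 ∨ x = 1 ∨ x = ω ∨ x = ω + 1 := by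
  have h2 := h2F
  have hsq := omega_sq hω0 hω1
  have key : x * (x + 1) * (x + ω) * (x + (ω + 1)) = 0 := by
    have h4 := pow4 x
    linear_combination h4 + (x^2 + x) * hsq + ((ω+1)*x^3 + (2*ω+1)*x^2 + (ω+1)*x) * h2
  rcases mul_eq_zero.mp key with h | h
  · rcases mul_eq_zero.mp h with h | h
    · rcases mul_eq_zero.mp h with h | h
      · exact Or.inl h
      · exact Or.inr (Or.inl (by linear_combination h - h2))
    · exact Or.inr (Or.inr (Or.inl (by linear_combination h - ω * h2)))
  · exact Or.inr (Or.inr (Or.inr (by linear_combination h - (ω+1) * h2)))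

/-! ### The embedding of the model into `𝔽₄` -/

noncomputable def piF (ω : F) : K → F
  | .O => 0
  | .I => 1
  | .A => ω
  | .B => ω + 1

lemma piF_add (a b : K) : piF ω (kadd a b) = piF ω a + piF ω b := by
  have h2 := h2F
  cases a <;> cases b <;> simp only [piF, kadd] <;>
    first
      | ring1
      | linear_combination h2
      | linear_combination -h2
      | linear_combination ω * h2
      | linear_combination -(ω * h2)
      | linear_combination (ω+1) * h2
      | linear_combination -((ω+1) * h2)

lemma piF_mul (hω0 : ω ≠ 0) (hω1 : ω ≠ 1) (a b : K) :
    piF ω (kmul a b) = piF ω a * piF ω b := by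
  have h2 := h2F
  have hsq := omega_sq hω0 hω1
  cases a <;> cases b <;> simp only [piF, kmul] <;>
    first
      | ring1
      | linear_combination hsq
      | linear_combination -hsq
      | linear_combination -hsq - ω * h2
      | linear_combination -hsq - (ω+1) * h2
      | linear_combination hsq + ω * h2
      | linear_combination hsq + (ω+1) * h2
      | linear_combination h2
      | linear_combination ω * h2
      | linear_combination (ω+1) * h2

lemma piF_ne_zero (hω0 : ω ≠ 0) (hω1 : ω ≠ 1) {x : K} (hx : x ≠ .O) : piF ω x ≠ 0 := by
  cases x
  · exact absurd rfl hx
  · exact one_ne_zero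
  · exact hω0
  · intro h
    simp only [piF] at h
    exact hω1 (by linear_combination h - h2F)

lemma piF_surj (hω0 : ω ≠ 0) (hω1 : ω ≠ 1) (x : F) : ∃ a : K, piF ω a = x := by
  rcases elemsF hω0 hω1 x with h | h | h | h
  · exact ⟨.O, h.symm⟩
  · exact ⟨.I, h.symm⟩
  · exact ⟨.A, h.symm⟩
  · exact ⟨.B, h.symm⟩

/-! ### The hermitian-style pairing -/

noncomputable def hprod (v w : Fin 3 → F) : F :=
  v 0^2 * w 0 + v 1^2 * w 1 + v 2^2 * w 2

lemma piF_uvec (hω0 : ω ≠ 0) (hω1 : ω ≠ 1) (i : Fin 6) (k : Fin 3) :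
    uvecF4 ω i k = piF ω (uK i k) := by
  have hsq := omega_sq hω0 hω1
  fin_cases i <;> fin_cases k <;>
    simp only [uvecF4, uK, piF, Matrix.cons_val_zero, Matrix.cons_val_one, Matrix.head_cons,
      Matrix.cons_val_two, Matrix.tail_cons, Fin.isValue] <;>
    first
      | rfl
      | exact hsq

lemma piF_bvec (hω0 : ω ≠ 0) (hω1 : ω ≠ 1) (i : Fin 3) (j : Fin 2) (k : Fin 3) :
    bvecF4 ω i j k = piF ω (bK i j k) := by
  have hsq := omega_sq hω0 hω1
  fin_cases i <;> fin_cases j <;> fin_cases k <;>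
    simp only [bvecF4, bK] <;>
    norm_num [piF] <;>
    first
      | rfl
      | exact hsq
      | exact pow_one ω

lemma piF_hprod (hω0 : ω ≠ 0) (hω1 : ω ≠ 1) (a b : Fin 3 → K) :
    hprod (fun k => piF ω (a k)) (fun k => piF ω (b k)) = piF ω (hK a b) := by
  simp only [hprod, hK, piF_add, piF_mul hω0 hω1]
  ring

/-- The `36` base nonorthogonality facts, transferred to `𝔽₄`. -/
lemma baseF (hω0 : ω ≠ 0) (hω1 : ω ≠ 1) (i : Fin 6) (i' : Fin 3) (j' : Fin 2) :
    hprod (uvecF4 ω i) (bvecF4 ω i' j') ≠ 0 := by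
  have h : hprod (uvecF4 ω i) (bvecF4 ω i' j') = piF ω (hK (uK i) (bK i' j')) := by
    rw [← piF_hprod hω0 hω1]
    congr 1
    · funext k; exact piF_uvec hω0 hω1 i k
    · funext k; exact piF_bvec hω0 hω1 i' j' k
  rw [h]
  exact piF_ne_zero hω0 hω1 (baseK i i' j')

lemma uvec_ne_zero (hω0 : ω ≠ 0) (hω1 : ω ≠ 1) (i : Fin 6) : uvecF4 ω i ≠ 0 := by
  obtain ⟨k, hk⟩ := Function.ne_iff.mp (uK_ne i)
  intro h
  have h0 : uvecF4 ω i k = 0 := congrFun h k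
  rw [piF_uvec hω0 hω1] at h0
  exact piF_ne_zero hω0 hω1 hk h0

lemma bvec_ne_zero (hω0 : ω ≠ 0) (hω1 : ω ≠ 1) (i : Fin 3) (j : Fin 2) :
    bvecF4 ω i j ≠ 0 := by
  obtain ⟨k, hk⟩ := Function.ne_iff.mp (bK_ne i j)
  intro h
  have h0 : bvecF4 ω i j k = 0 := congrFun h k
  rw [piF_bvec hω0 hω1] at h0
  exact piF_ne_zero hω0 hω1 hk h0

/-- Hard direction for `𝒰`, transferred to `𝔽₄`. -/
lemma hardUF (hω0 : ω ≠ 0) (hω1 : ω ≠ 1) (v : Fin 3 → F) (hv : v ≠ 0)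
    (h : ∀ i j, hprod v (bvecF4 ω i j) ≠ 0) :
    ∃ (i : Fin 6) (c : F), c ≠ 0 ∧ v = c • uvecF4 ω i := by
  choose a ha using fun k => piF_surj hω0 hω1 (v k)
  have hva : v = fun k => piF ω (a k) := by funext k; exact (ha k).symm
  have ha0 : a ≠ (fun _ => K.O) := by
    intro h0
    apply hv
    rw [hva, h0]
    rfl
  have hcond : ∀ i j, hK a (bK i j) ≠ .O := by
    intro i j hKO
    apply h i j
    have heq : hprod v (bvecF4 ω i j) = piF ω (hK a (bK i j)) := by
      rw [← piF_hprod hω0 hω1]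
      congr 1
      funext k; exact piF_bvec hω0 hω1 i j k
    rw [heq, hKO]
    rfl
  obtain ⟨i, c, hc, hac⟩ := hardU a ha0 hcond
  refine ⟨i, piF ω c, piF_ne_zero hω0 hω1 hc, ?_⟩
  funext k
  have hmul := congrArg (piF ω) (hac k)
  rw [piF_mul hω0 hω1] at hmul
  calc v k = piF ω (a k) := (ha k).symm
    _ = piF ω c * piF ω (uK i k) := hmul
    _ = piF ω c * uvecF4 ω i k := by rw [piF_uvec hω0 hω1]
    _ = (piF ω c • uvecF4 ω i) k := by simp

/-- Hard direction for `ℬ`, transferred to `𝔽₄`. -/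
lemma hardBF (hω0 : ω ≠ 0) (hω1 : ω ≠ 1) (w : Fin 3 → F) (hw : w ≠ 0)
    (h : ∀ i, hprod (uvecF4 ω i) w ≠ 0) :
    ∃ (i : Fin 3) (j : Fin 2) (c : F), c ≠ 0 ∧ w = c • bvecF4 ω i j := by
  choose a ha using fun k => piF_surj hω0 hω1 (w k)
  have hwa : w = fun k => piF ω (a k) := by funext k; exact (ha k).symm
  have ha0 : a ≠ (fun _ => K.O) := by
    intro h0
    apply hw
    rw [hwa, h0]
    rfl
  have hcond : ∀ i, hK (uK i) a ≠ .O := by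
    intro i hKO
    apply h i
    have heq : hprod (uvecF4 ω i) w = piF ω (hK (uK i) a) := by
      rw [← piF_hprod hω0 hω1]
      congr 1
      funext k; exact piF_uvec hω0 hω1 i k
    rw [heq, hKO]
    rfl
  obtain ⟨i, j, c, hc, hac⟩ := hardB a ha0 hcond
  refine ⟨i, j, piF ω c, piF_ne_zero hω0 hω1 hc, ?_⟩
  funext k
  have hmul := congrArg (piF ω) (hac k)
  rw [piF_mul hω0 hω1] at hmul
  calc w k = piF ω (a k) := (ha k).symm
    _ = piF ω c * piF ω (bK i j k) := hmul
    _ = piF ω c * bvecF4 ω i j k := by rw [piF_bvec hω0 hω1]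
    _ = (piF ω c • bvecF4 ω i j) k := by simp

/-! ### Algebraic properties of the pairing -/

lemma hprod_mulVec (Dm : Matrix (Fin 3) (Fin 3) F) (v w : Fin 3 → F) :
    hprod (Dm.mulVec v) w = hprod v ((Dm.transpose.map (fun x => x^2)).mulVec w) := by
  have hadd : ∀ a b : F, (a+b)^2 = a^2+b^2 := fun a b => add_pow_char a b 2
  have h3 : ∀ a b c : F, (a+b+c)^2 = a^2+b^2+c^2 := by
    intro a b c
    rw [hadd, hadd]
  simp only [hprod, Matrix.mulVec, dotProduct, Fin.sum_univ_three,
    Matrix.transpose_apply, Matrix.map_apply]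
  rw [h3, h3, h3]
  ring

lemma hprod_smul_left (c : F) (v w : Fin 3 → F) :
    hprod (c • v) w = c^2 * hprod v w := by
  simp only [hprod, Pi.smul_apply, smul_eq_mul]
  ring

lemma hprod_smul_right (c : F) (v w : Fin 3 → F) :
    hprod v (c • w) = c * hprod v w := by
  simp only [hprod, Pi.smul_apply, smul_eq_mul]
  ring

/-! ### Linear algebra helpers -/

lemma mulVec_inj {Mx : Matrix (Fin 3) (Fin 3) F} (h : IsUnit Mx.det) :
    Function.Injective Mx.mulVecLin := by
  intro x y hxy
  have h1 : Mx⁻¹ * Mx = 1 := Matrix.nonsing_inv_mul Mx h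
  have h2 : Mx⁻¹.mulVec (Mx.mulVec x) = Mx⁻¹.mulVec (Mx.mulVec y) := by
    simp only [Matrix.mulVecLin_apply] at hxy
    rw [hxy]
  rwa [Matrix.mulVec_mulVec, Matrix.mulVec_mulVec, h1, Matrix.one_mulVec,
    Matrix.one_mulVec] at h2

lemma mulVec_ne_zero {Mx : Matrix (Fin 3) (Fin 3) F} (h : IsUnit Mx.det)
    {v : Fin 3 → F} (hv : v ≠ 0) : Mx.mulVec v ≠ 0 := by
  intro h0
  apply hv
  apply mulVec_inj h
  simp only [Matrix.mulVecLin_apply, h0, map_zero]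

lemma det_conj_transpose (Dm : Matrix (Fin 3) (Fin 3) F) (hD : IsUnit Dm.det) :
    IsUnit (Dm.transpose.map (fun x => x^2)).det := by
  have hM : Dm.transpose.map (fun x => x^2) = (frobenius F 2).mapMatrix Dm.transpose := by
    ext i k
    simp [frobenius_def]
  rw [hM, ← RingHom.map_det, Matrix.det_transpose, frobenius_def]
  exact hD.pow 2

lemma map_span_single (f : (Fin 3 → F) →ₗ[F] (Fin 3 → F)) (x : Fin 3 → F) :
    Submodule.map f (Submodule.span F {x}) = Submodule.span F {f x} := by
  rw [Submodule.map_span, Set.image_singleton]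

lemma exists_smul_of_span_eq {w x : Fin 3 → F} (hw : w ≠ 0)
    (h : Submodule.span F {w} = Submodule.span F {x}) :
    ∃ c : F, c ≠ 0 ∧ w = c • x := by
  have hmem : w ∈ Submodule.span F {x} := h ▸ Submodule.mem_span_singleton_self w
  obtain ⟨c, hc⟩ := Submodule.mem_span_singleton.mp hmem
  refine ⟨c, ?_, hc.symm⟩
  rintro rfl
  apply hw
  rw [← hc]
  simp

/-! ### The two core implications -/

lemma core_forward (hω0 : ω ≠ 0) (hω1 : ω ≠ 1)
    (Dm : Matrix (Fin 3) (Fin 3) F) (hD : IsUnit Dm.det)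
    (hU : ∀ i : Fin 6, ∃ i' : Fin 6,
      Submodule.span F {Dm.mulVec (uvecF4 ω i)} = Submodule.span F {uvecF4 ω i'})
    (i : Fin 3) (j : Fin 2) :
    ∃ (i' : Fin 3) (j' : Fin 2),
      Submodule.span F {(Dm.transpose.map (fun x => x^2)).mulVec (bvecF4 ω i j)}
        = Submodule.span F {bvecF4 ω i' j'} := by
  have hMdet := det_conj_transpose Dm hD
  have hw : (Dm.transpose.map (fun x => x^2)).mulVec (bvecF4 ω i j) ≠ 0 :=
    mulVec_ne_zero hMdet (bvec_ne_zero hω0 hω1 i j)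
  have hgood : ∀ i6 : Fin 6,
      hprod (uvecF4 ω i6) ((Dm.transpose.map (fun x => x^2)).mulVec (bvecF4 ω i j)) ≠ 0 := by
    intro i6
    rw [← hprod_mulVec]
    obtain ⟨i', hspan⟩ := hU i6
    have hDu : Dm.mulVec (uvecF4 ω i6) ≠ 0 :=
      mulVec_ne_zero hD (uvec_ne_zero hω0 hω1 i6)
    obtain ⟨c, hc0, hcw⟩ := exists_smul_of_span_eq hDu hspan
    rw [hcw, hprod_smul_left]
    exact mul_ne_zero (pow_ne_zero 2 hc0) (baseF hω0 hω1 i' i j)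
  obtain ⟨i', j', c, hc0, hcw⟩ := hardBF hω0 hω1 _ hw hgood
  refine ⟨i', j', ?_⟩
  rw [hcw]
  exact Submodule.span_singleton_smul_eq (isUnit_iff_ne_zero.mpr hc0) _

lemma core_backward (hω0 : ω ≠ 0) (hω1 : ω ≠ 1)
    (Dm : Matrix (Fin 3) (Fin 3) F) (hD : IsUnit Dm.det)
    (hB : ∀ (i : Fin 3) (j : Fin 2), ∃ (i' : Fin 3) (j' : Fin 2),
      Submodule.span F {(Dm.transpose.map (fun x => x^2)).mulVec (bvecF4 ω i j)}
        = Submodule.span F {bvecF4 ω i' j'})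
    (i : Fin 6) :
    ∃ i' : Fin 6,
      Submodule.span F {Dm.mulVec (uvecF4 ω i)} = Submodule.span F {uvecF4 ω i'} := by
  have hMdet := det_conj_transpose Dm hD
  have hw : Dm.mulVec (uvecF4 ω i) ≠ 0 :=
    mulVec_ne_zero hD (uvec_ne_zero hω0 hω1 i)
  have hgood : ∀ (i' : Fin 3) (j' : Fin 2),
      hprod (Dm.mulVec (uvecF4 ω i)) (bvecF4 ω i' j') ≠ 0 := by
    intro i' j'
    rw [hprod_mulVec]
    obtain ⟨i'', j'', hspan⟩ := hB i' j'
    have hMb : (Dm.transpose.map (fun x => x^2)).mulVec (bvecF4 ω i' j') ≠ 0 :=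
      mulVec_ne_zero hMdet (bvec_ne_zero hω0 hω1 i' j')
    obtain ⟨c, hc0, hcw⟩ := exists_smul_of_span_eq hMb hspan
    rw [hcw, hprod_smul_right]
    exact mul_ne_zero hc0 (baseF hω0 hω1 i i'' j'')
  obtain ⟨i', c, hc0, hcw⟩ := hardUF hω0 hω1 _ hw hgood
  refine ⟨i', ?_⟩
  rw [hcw]
  exact Submodule.span_singleton_smul_eq (isUnit_iff_ne_zero.mpr hc0) _

end F4Stmt11

open F4Stmt11 in
/-- for `D ∈ GL₃(𝔽₄)`, the action of `D` on `V = 𝔽₄³` permutes the set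
`𝒰` of lines `⟨u₁⟩,…,⟨u₆⟩` if and only if the action of the conjugate transpose
`D̄ᵗ` permutes the set `ℬ` of lines `⟨b_{ij}⟩`. -/
theorem permutes_uvec_iff_conj_transpose_permutes_bvec
    (ω : GaloisField 2 2) (hω0 : ω ≠ 0) (hω1 : ω ≠ 1)
    (D : Matrix (Fin 3) (Fin 3) (GaloisField 2 2)) (hD : IsUnit D.det) :
    ((fun L => Submodule.map D.mulVecLin L) ''
        {L | ∃ i : Fin 6, L = Submodule.span (GaloisField 2 2) {uvecF4 ω i}}
      = {L | ∃ i : Fin 6, L = Submodule.span (GaloisField 2 2) {uvecF4 ω i}}) ↔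
    ((fun L => Submodule.map (D.transpose.map (fun x => x ^ 2)).mulVecLin L) ''
        {L | ∃ (i : Fin 3) (j : Fin 2),
          L = Submodule.span (GaloisField 2 2) {bvecF4 ω i j}}
      = {L | ∃ (i : Fin 3) (j : Fin 2),
          L = Submodule.span (GaloisField 2 2) {bvecF4 ω i j}}) := by
  have hMdet := det_conj_transpose D hD
  have hUfin : {L | ∃ i : Fin 6,
      L = Submodule.span (GaloisField 2 2) {uvecF4 ω i}}.Finite := by
    apply Set.Finite.subset (Set.finite_range
      (fun i : Fin 6 => Submodule.span (GaloisField 2 2) {uvecF4 ω i}))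
    rintro L ⟨i, rfl⟩
    exact ⟨i, rfl⟩
  have hBfin : {L | ∃ (i : Fin 3) (j : Fin 2),
      L = Submodule.span (GaloisField 2 2) {bvecF4 ω i j}}.Finite := by
    apply Set.Finite.subset (Set.finite_range
      (fun p : Fin 3 × Fin 2 => Submodule.span (GaloisField 2 2) {bvecF4 ω p.1 p.2}))
    rintro L ⟨i, j, rfl⟩
    exact ⟨(i, j), rfl⟩
  constructor
  · intro hUimg
    -- `D` permutes `𝒰`; deduce that `D̄ᵗ` maps each line of `ℬ` to a line of `ℬ`
    have hU : ∀ i : Fin 6, ∃ i' : Fin 6,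
        Submodule.span (GaloisField 2 2) {D.mulVec (uvecF4 ω i)}
          = Submodule.span (GaloisField 2 2) {uvecF4 ω i'} := by
      intro i
      have hmem : Submodule.map D.mulVecLin
          (Submodule.span (GaloisField 2 2) {uvecF4 ω i}) ∈
          {L | ∃ i : Fin 6, L = Submodule.span (GaloisField 2 2) {uvecF4 ω i}} := by
        rw [← hUimg]
        exact ⟨Submodule.span (GaloisField 2 2) {uvecF4 ω i}, ⟨i, rfl⟩, rfl⟩
      obtain ⟨i', hi'⟩ := hmem
      refine ⟨i', ?_⟩
      rw [← hi', map_span_single, Matrix.mulVecLin_apply]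
    have hsub : (fun L => Submodule.map (D.transpose.map (fun x => x ^ 2)).mulVecLin L) ''
        {L | ∃ (i : Fin 3) (j : Fin 2),
          L = Submodule.span (GaloisField 2 2) {bvecF4 ω i j}}
        ⊆ {L | ∃ (i : Fin 3) (j : Fin 2),
          L = Submodule.span (GaloisField 2 2) {bvecF4 ω i j}} := by
      rintro _ ⟨L, ⟨i, j, rfl⟩, rfl⟩
      obtain ⟨i', j', hspan⟩ := core_forward hω0 hω1 D hD hU i j
      refine ⟨i', j', ?_⟩
      beta_reduce
      rw [map_span_single, Matrix.mulVecLin_apply, hspan]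
    have hinj : Function.Injective
        (Submodule.map (D.transpose.map (fun x => x ^ 2)).mulVecLin) :=
      Submodule.map_injective_of_injective (mulVec_inj hMdet)
    exact Set.eq_of_subset_of_ncard_le hsub
      (le_of_eq (Set.ncard_image_of_injective _ hinj).symm) hBfin
  · intro hBimg
    have hB : ∀ (i : Fin 3) (j : Fin 2), ∃ (i' : Fin 3) (j' : Fin 2),
        Submodule.span (GaloisField 2 2)
            {(D.transpose.map (fun x => x^2)).mulVec (bvecF4 ω i j)}
          = Submodule.span (GaloisField 2 2) {bvecF4 ω i' j'} := by
      intro i j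
      have hmem : Submodule.map (D.transpose.map (fun x => x ^ 2)).mulVecLin
          (Submodule.span (GaloisField 2 2) {bvecF4 ω i j}) ∈
          {L | ∃ (i : Fin 3) (j : Fin 2),
            L = Submodule.span (GaloisField 2 2) {bvecF4 ω i j}} := by
        rw [← hBimg]
        exact ⟨Submodule.span (GaloisField 2 2) {bvecF4 ω i j}, ⟨i, j, rfl⟩, rfl⟩
      obtain ⟨i', j', hij⟩ := hmem
      refine ⟨i', j', ?_⟩
      rw [← hij, map_span_single, Matrix.mulVecLin_apply]
    have hsub : (fun L => Submodule.map D.mulVecLin L) ''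
        {L | ∃ i : Fin 6, L = Submodule.span (GaloisField 2 2) {uvecF4 ω i}}
        ⊆ {L | ∃ i : Fin 6, L = Submodule.span (GaloisField 2 2) {uvecF4 ω i}} := by
      rintro _ ⟨L, ⟨i, rfl⟩, rfl⟩
      obtain ⟨i', hspan⟩ := core_backward hω0 hω1 D hD hB i
      refine ⟨i', ?_⟩
      beta_reduce
      rw [map_span_single, Matrix.mulVecLin_apply, hspan]
    have hinj : Function.Injective (Submodule.map D.mulVecLin) :=
      Submodule.map_injective_of_injective (mulVec_inj hD)
    exact Set.eq_of_subset_of_ncard_le hsub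
      (le_of_eq (Set.ncard_image_of_injective _ hinj).symm) hUfin
end

section
/- Let Δ = {D ∈ GL₃(𝔽₄) | the action of D on 𝔽₄³ permutes the six lines ⟨u₁⟩,…,⟨u₆⟩}, where u₁ = (1,0,0), u₂ = (0,1,0), u₃ = (0,0,1), u₄ = (1,1,1), u₅ = (1,ω,ω̄), u₆ = (1,ω̄,ω). Then Δ is a subgroup of GL₃(𝔽₄) of order 1080; its intersection with the scalar matrices is the group of scalars {I, ωI, ω̄I} of order 3, and the image of Δ in the symmetric group on the six lines is the alternating group A₆ (of order 360). -/
set_option maxRecDepth 10000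
set_option linter.unusedSectionVars false

/-- The set `𝒰` of the six lines `⟨u₁⟩,…,⟨u₆⟩` in `𝔽₄³`. -/
noncomputable def ULinesF4 (ω : GaloisField 2 2) :
    Set (Submodule (GaloisField 2 2) (Fin 3 → GaloisField 2 2)) :=
  {L | ∃ i : Fin 6, L = Submodule.span (GaloisField 2 2) {uvecF4 ω i}}


open Submodule Equiv Matrix

local notation "F₄" => GaloisField 2 2

lemma F4char2 : (2 : F₄) = 0 := by
  have : ((2:ℕ) : F₄) = 0 := CharP.cast_eq_zero F₄ 2
  simpa using this

lemma omega_rel {ω : F₄} (hω0 : ω ≠ 0) (hω1 : ω ≠ 1) : ω^2 = ω + 1 := by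
  haveI : Fintype F₄ := Fintype.ofFinite _
  have hc : Fintype.card F₄ = 4 := by
    rw [← Nat.card_eq_fintype_card]
    have := GaloisField.card 2 2 (by norm_num); simpa using this
  have hp : ω ^ (4:ℕ) = ω := by rw [← hc]; exact FiniteField.pow_card ω
  have hz : ω * (ω - 1) * (ω^2 + ω + 1) = 0 := by linear_combination hp
  rcases mul_eq_zero.1 hz with h | h
  · rcases mul_eq_zero.1 h with h | h
    · exact absurd h hω0
    · exact absurd (by linear_combination h) hω1
  · linear_combination h - (ω + 1) * F4char2

section Facts
variable {ω : F₄} (hw2 : ω ^ 2 = ω + 1) (h2 : (2:F₄) = 0)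
include hw2 h2

lemma w_ne0 : ω ≠ 0 := fun h => by
  rw [h] at hw2; exact one_ne_zero (α := F₄) (by linear_combination -hw2)

lemma w_ne1 : ω ≠ 1 := fun h => by
  rw [h] at hw2; exact one_ne_zero (α := F₄) (by linear_combination hw2 + h2)

lemma w2_ne0 : ω ^ 2 ≠ 0 := pow_ne_zero 2 (w_ne0 hw2 h2)

lemma w2_ne1 : ω ^ 2 ≠ 1 := fun h => w_ne0 hw2 h2 (by linear_combination h - hw2)

lemma w_cube : ω ^ 3 = 1 := by linear_combination (ω+1) * hw2 + ω * h2

lemma mem4 (x : F₄) : x = 0 ∨ x = 1 ∨ x = ω ∨ x = ω^2 := by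
  haveI : Fintype F₄ := Fintype.ofFinite _
  have hc : Fintype.card F₄ = 4 := by
    rw [← Nat.card_eq_fintype_card]
    have := GaloisField.card 2 2 (by norm_num); simpa using this
  classical
  have hn1 : (0:F₄) ∉ ({1, ω, ω^2} : Finset F₄) := by
    simp only [Finset.mem_insert, Finset.mem_singleton]
    push_neg
    exact ⟨fun h => one_ne_zero h.symm, fun h => w_ne0 hw2 h2 h.symm,
      fun h => w2_ne0 hw2 h2 h.symm⟩
  have hn2 : (1:F₄) ∉ ({ω, ω^2} : Finset F₄) := by
    simp only [Finset.mem_insert, Finset.mem_singleton]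
    push_neg
    exact ⟨fun h => w_ne1 hw2 h2 h.symm, fun h => w2_ne1 hw2 h2 h.symm⟩
  have hn3 : ω ∉ ({ω^2} : Finset F₄) := by
    simp only [Finset.mem_singleton]
    exact fun h => one_ne_zero (α := F₄) (by linear_combination -h - hw2)
  have huniv : ({0, 1, ω, ω^2} : Finset F₄) = Finset.univ := by
    apply Finset.eq_univ_of_card
    rw [Finset.card_insert_of_notMem hn1, Finset.card_insert_of_notMem hn2,
      Finset.card_insert_of_notMem hn3, Finset.card_singleton, hc]
  have : x ∈ ({0, 1, ω, ω^2} : Finset F₄) := huniv ▸ Finset.mem_univ x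
  simpa [Finset.mem_insert] using this

end Facts

lemma map_span_single (f : (Fin 3 → F₄) →ₗ[F₄] (Fin 3 → F₄)) (v w : Fin 3 → F₄) (c : F₄)
    (hc : c ≠ 0) (h : f w = c • v) :
    Submodule.map f (span F₄ {w}) = span F₄ {v} := by
  rw [Submodule.map_span, Set.image_singleton, h]
  exact span_singleton_smul_eq (isUnit_iff_ne_zero.2 hc) v

lemma u0eq (ω : F₄) : uvecF4 ω 0 = ![1,0,0] := rfl
lemma u1eq (ω : F₄) : uvecF4 ω 1 = ![0,1,0] := rfl
lemma u2eq (ω : F₄) : uvecF4 ω 2 = ![0,0,1] := rfl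
lemma u3eq (ω : F₄) : uvecF4 ω 3 = ![1,1,1] := rfl
lemma u4eq (ω : F₄) : uvecF4 ω 4 = ![1,ω,ω^2] := rfl
lemma u5eq (ω : F₄) : uvecF4 ω 5 = ![1,ω^2,ω] := rfl

/-- `D` realizes the permutation `σ` on the six lines. -/
def RealizesF4 (ω : F₄) (D : GL (Fin 3) F₄) (σ : Equiv.Perm (Fin 6)) : Prop :=
  ∀ i : Fin 6, Submodule.map ((D : Matrix (Fin 3) (Fin 3) F₄).mulVecLin)
      (Submodule.span F₄ {uvecF4 ω i}) = Submodule.span F₄ {uvecF4 ω (σ i)}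

lemma realizes_of_six {ω : F₄} {D : GL (Fin 3) F₄} {σ : Equiv.Perm (Fin 6)}
    {j0 j1 j2 j3 j4 j5 : Fin 6}
    (hσ : σ 0 = j0 ∧ σ 1 = j1 ∧ σ 2 = j2 ∧ σ 3 = j3 ∧ σ 4 = j4 ∧ σ 5 = j5)
    (h0 : Submodule.map ((D : Matrix (Fin 3) (Fin 3) F₄).mulVecLin)
      (span F₄ {uvecF4 ω 0}) = span F₄ {uvecF4 ω j0})
    (h1 : Submodule.map ((D : Matrix (Fin 3) (Fin 3) F₄).mulVecLin)
      (span F₄ {uvecF4 ω 1}) = span F₄ {uvecF4 ω j1})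
    (h2 : Submodule.map ((D : Matrix (Fin 3) (Fin 3) F₄).mulVecLin)
      (span F₄ {uvecF4 ω 2}) = span F₄ {uvecF4 ω j2})
    (h3 : Submodule.map ((D : Matrix (Fin 3) (Fin 3) F₄).mulVecLin)
      (span F₄ {uvecF4 ω 3}) = span F₄ {uvecF4 ω j3})
    (h4 : Submodule.map ((D : Matrix (Fin 3) (Fin 3) F₄).mulVecLin)
      (span F₄ {uvecF4 ω 4}) = span F₄ {uvecF4 ω j4})
    (h5 : Submodule.map ((D : Matrix (Fin 3) (Fin 3) F₄).mulVecLin)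
      (span F₄ {uvecF4 ω 5}) = span F₄ {uvecF4 ω j5}) :
    RealizesF4 ω D σ := by
  obtain ⟨e0, e1, e2, e3, e4, e5⟩ := hσ
  intro i
  fin_cases i
  · show Submodule.map _ _ = span F₄ {uvecF4 ω (σ 0)}; rw [e0]; exact h0
  · show Submodule.map _ _ = span F₄ {uvecF4 ω (σ 1)}; rw [e1]; exact h1
  · show Submodule.map _ _ = span F₄ {uvecF4 ω (σ 2)}; rw [e2]; exact h2
  · show Submodule.map _ _ = span F₄ {uvecF4 ω (σ 3)}; rw [e3]; exact h3
  · show Submodule.map _ _ = span F₄ {uvecF4 ω (σ 4)}; rw [e4]; exact h4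
  · show Submodule.map _ _ = span F₄ {uvecF4 ω (σ 5)}; rw [e5]; exact h5

def apermF4 : Equiv.Perm (Fin 6) := Equiv.swap 0 1 * Equiv.swap 1 2
def bpermF4 : Equiv.Perm (Fin 6) := Equiv.swap 3 4 * Equiv.swap 4 5
def spermF4 : Equiv.Perm (Fin 6) := Equiv.swap 0 2 * Equiv.swap 4 5
def rpermF4 : Equiv.Perm (Fin 6) := Equiv.swap 0 1 * Equiv.swap 1 2 * Equiv.swap 2 3 * Equiv.swap 4 5
def cpermF4 : Equiv.Perm (Fin 6) := Equiv.swap 0 1 * Equiv.swap 1 2 * Equiv.swap 2 3 * Equiv.swap 3 4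

lemma Ra_spec {ω : F₄} (hw2 : ω ^ 2 = ω + 1) (h2 : (2:F₄) = 0) :
    ∃ D : GL (Fin 3) F₄, RealizesF4 ω D apermF4 := by
  have hprod1 : (!![(0:F₄), (0:F₄), (1:F₄); (1:F₄), (0:F₄), (0:F₄); (0:F₄), (1:F₄), (0:F₄)]) * (!![(0:F₄), (1:F₄), (0:F₄); (0:F₄), (0:F₄), (1:F₄); (1:F₄), (0:F₄), (0:F₄)]) = 1 := by
    ext i j
    fin_cases i <;> fin_cases j <;>
      simp [Matrix.mul_apply, Fin.sum_univ_three, Matrix.one_apply, Matrix.vecHead, Matrix.vecTail] <;>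
      ring1
  have hprod2 : (!![(0:F₄), (1:F₄), (0:F₄); (0:F₄), (0:F₄), (1:F₄); (1:F₄), (0:F₄), (0:F₄)]) * (!![(0:F₄), (0:F₄), (1:F₄); (1:F₄), (0:F₄), (0:F₄); (0:F₄), (1:F₄), (0:F₄)]) = 1 := by
    ext i j
    fin_cases i <;> fin_cases j <;>
      simp [Matrix.mul_apply, Fin.sum_univ_three, Matrix.one_apply, Matrix.vecHead, Matrix.vecTail] <;>
      ring1
  refine ⟨⟨_, _, hprod1, hprod2⟩, ?_⟩
  apply realizes_of_six (σ := apermF4) (j0 := 1) (j1 := 2) (j2 := 0) (j3 := 3) (j4 := 4) (j5 := 5) (by refine ⟨?_,?_,?_,?_,?_,?_⟩ <;> decide)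
  · refine map_span_single _ _ _ (1) one_ne_zero ?_
    try simp only [u0eq, u1eq, u2eq, u3eq, u4eq, u5eq]
    funext r
    fin_cases r <;>
      simp [Matrix.mulVecLin_apply, Matrix.mulVec, dotProduct, Fin.sum_univ_three, Matrix.vecHead, Matrix.vecTail] <;>
      ring1
  · refine map_span_single _ _ _ (1) one_ne_zero ?_
    try simp only [u0eq, u1eq, u2eq, u3eq, u4eq, u5eq]
    funext r
    fin_cases r <;>
      simp [Matrix.mulVecLin_apply, Matrix.mulVec, dotProduct, Fin.sum_univ_three, Matrix.vecHead, Matrix.vecTail] <;>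
      ring1
  · refine map_span_single _ _ _ (1) one_ne_zero ?_
    try simp only [u0eq, u1eq, u2eq, u3eq, u4eq, u5eq]
    funext r
    fin_cases r <;>
      simp [Matrix.mulVecLin_apply, Matrix.mulVec, dotProduct, Fin.sum_univ_three, Matrix.vecHead, Matrix.vecTail] <;>
      ring1
  · refine map_span_single _ _ _ (1) one_ne_zero ?_
    try simp only [u0eq, u1eq, u2eq, u3eq, u4eq, u5eq]
    funext r
    fin_cases r <;>
      simp [Matrix.mulVecLin_apply, Matrix.mulVec, dotProduct, Fin.sum_univ_three, Matrix.vecHead, Matrix.vecTail] <;>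
      ring1
  · refine map_span_single _ _ _ (ω^2) (w2_ne0 hw2 h2) ?_
    try simp only [u0eq, u1eq, u2eq, u3eq, u4eq, u5eq]
    funext r
    fin_cases r <;>
      simp [Matrix.mulVecLin_apply, Matrix.mulVec, dotProduct, Fin.sum_univ_three, Matrix.vecHead, Matrix.vecTail] <;>
      first
      | linear_combination ((-1:F₄) + (-1:F₄)*ω) * hw2 + ((-1:F₄)*ω) * h2
      | linear_combination ((-2:F₄) + (-1:F₄)*ω + (-1:F₄)*ω^2) * hw2 + ((-1:F₄) + (-1:F₄)*ω) * h2
      | ring1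
  · refine map_span_single _ _ _ (ω) (w_ne0 hw2 h2) ?_
    try simp only [u0eq, u1eq, u2eq, u3eq, u4eq, u5eq]
    funext r
    fin_cases r <;>
      simp [Matrix.mulVecLin_apply, Matrix.mulVec, dotProduct, Fin.sum_univ_three, Matrix.vecHead, Matrix.vecTail] <;>
      first
      | linear_combination ((-1:F₄) + (-1:F₄)*ω) * hw2 + ((-1:F₄)*ω) * h2
      | ring1

lemma Rb_spec {ω : F₄} (hw2 : ω ^ 2 = ω + 1) (h2 : (2:F₄) = 0) :
    ∃ D : GL (Fin 3) F₄, RealizesF4 ω D bpermF4 := by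
  have hprod1 : (!![(1:F₄), (0:F₄), (0:F₄); (0:F₄), (ω:F₄), (0:F₄); (0:F₄), (0:F₄), (ω^2:F₄)]) * (!![(1:F₄), (0:F₄), (0:F₄); (0:F₄), (ω^2:F₄), (0:F₄); (0:F₄), (0:F₄), (ω:F₄)]) = 1 := by
    ext i j
    fin_cases i <;> fin_cases j <;>
      simp [Matrix.mul_apply, Fin.sum_univ_three, Matrix.one_apply, Matrix.vecHead, Matrix.vecTail] <;>
      first
      | linear_combination ((1:F₄) + ω) * hw2 + (ω) * h2
      | ring1
  have hprod2 : (!![(1:F₄), (0:F₄), (0:F₄); (0:F₄), (ω^2:F₄), (0:F₄); (0:F₄), (0:F₄), (ω:F₄)]) * (!![(1:F₄), (0:F₄), (0:F₄); (0:F₄), (ω:F₄), (0:F₄); (0:F₄), (0:F₄), (ω^2:F₄)]) = 1 := by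
    ext i j
    fin_cases i <;> fin_cases j <;>
      simp [Matrix.mul_apply, Fin.sum_univ_three, Matrix.one_apply, Matrix.vecHead, Matrix.vecTail] <;>
      first
      | linear_combination ((1:F₄) + ω) * hw2 + (ω) * h2
      | ring1
  refine ⟨⟨_, _, hprod1, hprod2⟩, ?_⟩
  apply realizes_of_six (σ := bpermF4) (j0 := 0) (j1 := 1) (j2 := 2) (j3 := 4) (j4 := 5) (j5 := 3) (by refine ⟨?_,?_,?_,?_,?_,?_⟩ <;> decide)
  · refine map_span_single _ _ _ (1) one_ne_zero ?_
    try simp only [u0eq, u1eq, u2eq, u3eq, u4eq, u5eq]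
    funext r
    fin_cases r <;>
      simp [Matrix.mulVecLin_apply, Matrix.mulVec, dotProduct, Fin.sum_univ_three, Matrix.vecHead, Matrix.vecTail] <;>
      ring1
  · refine map_span_single _ _ _ (ω) (w_ne0 hw2 h2) ?_
    try simp only [u0eq, u1eq, u2eq, u3eq, u4eq, u5eq]
    funext r
    fin_cases r <;>
      simp [Matrix.mulVecLin_apply, Matrix.mulVec, dotProduct, Fin.sum_univ_three, Matrix.vecHead, Matrix.vecTail] <;>
      ring1
  · refine map_span_single _ _ _ (ω^2) (w2_ne0 hw2 h2) ?_
    try simp only [u0eq, u1eq, u2eq, u3eq, u4eq, u5eq]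
    funext r
    fin_cases r <;>
      simp [Matrix.mulVecLin_apply, Matrix.mulVec, dotProduct, Fin.sum_univ_three, Matrix.vecHead, Matrix.vecTail] <;>
      ring1
  · refine map_span_single _ _ _ (1) one_ne_zero ?_
    try simp only [u0eq, u1eq, u2eq, u3eq, u4eq, u5eq]
    funext r
    fin_cases r <;>
      simp [Matrix.mulVecLin_apply, Matrix.mulVec, dotProduct, Fin.sum_univ_three, Matrix.vecHead, Matrix.vecTail] <;>
      ring1
  · refine map_span_single _ _ _ (1) one_ne_zero ?_
    try simp only [u0eq, u1eq, u2eq, u3eq, u4eq, u5eq]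
    funext r
    fin_cases r <;>
      simp [Matrix.mulVecLin_apply, Matrix.mulVec, dotProduct, Fin.sum_univ_three, Matrix.vecHead, Matrix.vecTail] <;>
      first
      | linear_combination ((2:F₄) + ω + ω^2) * hw2 + ((1:F₄) + ω) * h2
      | ring1
  · refine map_span_single _ _ _ (1) one_ne_zero ?_
    try simp only [u0eq, u1eq, u2eq, u3eq, u4eq, u5eq]
    funext r
    fin_cases r <;>
      simp [Matrix.mulVecLin_apply, Matrix.mulVec, dotProduct, Fin.sum_univ_three, Matrix.vecHead, Matrix.vecTail] <;>
      first
      | linear_combination ((1:F₄) + ω) * hw2 + (ω) * h2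
      | ring1

lemma Rs_spec {ω : F₄} (hw2 : ω ^ 2 = ω + 1) (h2 : (2:F₄) = 0) :
    ∃ D : GL (Fin 3) F₄, RealizesF4 ω D spermF4 := by
  have hprod1 : (!![(0:F₄), (0:F₄), (1:F₄); (0:F₄), (1:F₄), (0:F₄); (1:F₄), (0:F₄), (0:F₄)]) * (!![(0:F₄), (0:F₄), (1:F₄); (0:F₄), (1:F₄), (0:F₄); (1:F₄), (0:F₄), (0:F₄)]) = 1 := by
    ext i j
    fin_cases i <;> fin_cases j <;>
      simp [Matrix.mul_apply, Fin.sum_univ_three, Matrix.one_apply, Matrix.vecHead, Matrix.vecTail] <;>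
      ring1
  have hprod2 : (!![(0:F₄), (0:F₄), (1:F₄); (0:F₄), (1:F₄), (0:F₄); (1:F₄), (0:F₄), (0:F₄)]) * (!![(0:F₄), (0:F₄), (1:F₄); (0:F₄), (1:F₄), (0:F₄); (1:F₄), (0:F₄), (0:F₄)]) = 1 := by
    ext i j
    fin_cases i <;> fin_cases j <;>
      simp [Matrix.mul_apply, Fin.sum_univ_three, Matrix.one_apply, Matrix.vecHead, Matrix.vecTail] <;>
      ring1
  refine ⟨⟨_, _, hprod1, hprod2⟩, ?_⟩
  apply realizes_of_six (σ := spermF4) (j0 := 2) (j1 := 1) (j2 := 0) (j3 := 3) (j4 := 5) (j5 := 4) (by refine ⟨?_,?_,?_,?_,?_,?_⟩ <;> decide)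
  · refine map_span_single _ _ _ (1) one_ne_zero ?_
    try simp only [u0eq, u1eq, u2eq, u3eq, u4eq, u5eq]
    funext r
    fin_cases r <;>
      simp [Matrix.mulVecLin_apply, Matrix.mulVec, dotProduct, Fin.sum_univ_three, Matrix.vecHead, Matrix.vecTail] <;>
      ring1
  · refine map_span_single _ _ _ (1) one_ne_zero ?_
    try simp only [u0eq, u1eq, u2eq, u3eq, u4eq, u5eq]
    funext r
    fin_cases r <;>
      simp [Matrix.mulVecLin_apply, Matrix.mulVec, dotProduct, Fin.sum_univ_three, Matrix.vecHead, Matrix.vecTail] <;>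
      ring1
  · refine map_span_single _ _ _ (1) one_ne_zero ?_
    try simp only [u0eq, u1eq, u2eq, u3eq, u4eq, u5eq]
    funext r
    fin_cases r <;>
      simp [Matrix.mulVecLin_apply, Matrix.mulVec, dotProduct, Fin.sum_univ_three, Matrix.vecHead, Matrix.vecTail] <;>
      ring1
  · refine map_span_single _ _ _ (1) one_ne_zero ?_
    try simp only [u0eq, u1eq, u2eq, u3eq, u4eq, u5eq]
    funext r
    fin_cases r <;>
      simp [Matrix.mulVecLin_apply, Matrix.mulVec, dotProduct, Fin.sum_univ_three, Matrix.vecHead, Matrix.vecTail] <;>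
      ring1
  · refine map_span_single _ _ _ (ω^2) (w2_ne0 hw2 h2) ?_
    try simp only [u0eq, u1eq, u2eq, u3eq, u4eq, u5eq]
    funext r
    fin_cases r <;>
      simp [Matrix.mulVecLin_apply, Matrix.mulVec, dotProduct, Fin.sum_univ_three, Matrix.vecHead, Matrix.vecTail] <;>
      first
      | linear_combination ((-1:F₄) + (-1:F₄)*ω) * hw2 + ((-1:F₄)*ω) * h2
      | linear_combination ((-2:F₄) + (-1:F₄)*ω + (-1:F₄)*ω^2) * hw2 + ((-1:F₄) + (-1:F₄)*ω) * h2
      | ring1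
  · refine map_span_single _ _ _ (ω) (w_ne0 hw2 h2) ?_
    try simp only [u0eq, u1eq, u2eq, u3eq, u4eq, u5eq]
    funext r
    fin_cases r <;>
      simp [Matrix.mulVecLin_apply, Matrix.mulVec, dotProduct, Fin.sum_univ_three, Matrix.vecHead, Matrix.vecTail] <;>
      first
      | linear_combination ((-1:F₄) + (-1:F₄)*ω) * hw2 + ((-1:F₄)*ω) * h2
      | ring1

lemma Rr_spec {ω : F₄} (hw2 : ω ^ 2 = ω + 1) (h2 : (2:F₄) = 0) :
    ∃ D : GL (Fin 3) F₄, RealizesF4 ω D rpermF4 := by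
  have hprod1 : (!![(0:F₄), (0:F₄), (1:F₄); (1:F₄), (0:F₄), (1:F₄); (0:F₄), (1:F₄), (1:F₄)]) * (!![(1:F₄), (1:F₄), (0:F₄); (1:F₄), (0:F₄), (1:F₄); (1:F₄), (0:F₄), (0:F₄)]) = 1 := by
    ext i j
    fin_cases i <;> fin_cases j <;>
      simp [Matrix.mul_apply, Fin.sum_univ_three, Matrix.one_apply, Matrix.vecHead, Matrix.vecTail] <;>
      first
      | linear_combination ((1:F₄)) * h2
      | ring1
  have hprod2 : (!![(1:F₄), (1:F₄), (0:F₄); (1:F₄), (0:F₄), (1:F₄); (1:F₄), (0:F₄), (0:F₄)]) * (!![(0:F₄), (0:F₄), (1:F₄); (1:F₄), (0:F₄), (1:F₄); (0:F₄), (1:F₄), (1:F₄)]) = 1 := by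
    ext i j
    fin_cases i <;> fin_cases j <;>
      simp [Matrix.mul_apply, Fin.sum_univ_three, Matrix.one_apply, Matrix.vecHead, Matrix.vecTail] <;>
      first
      | linear_combination ((1:F₄)) * h2
      | ring1
  refine ⟨⟨_, _, hprod1, hprod2⟩, ?_⟩
  apply realizes_of_six (σ := rpermF4) (j0 := 1) (j1 := 2) (j2 := 3) (j3 := 0) (j4 := 5) (j5 := 4) (by refine ⟨?_,?_,?_,?_,?_,?_⟩ <;> decide)
  · refine map_span_single _ _ _ (1) one_ne_zero ?_
    try simp only [u0eq, u1eq, u2eq, u3eq, u4eq, u5eq]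
    funext r
    fin_cases r <;>
      simp [Matrix.mulVecLin_apply, Matrix.mulVec, dotProduct, Fin.sum_univ_three, Matrix.vecHead, Matrix.vecTail] <;>
      ring1
  · refine map_span_single _ _ _ (1) one_ne_zero ?_
    try simp only [u0eq, u1eq, u2eq, u3eq, u4eq, u5eq]
    funext r
    fin_cases r <;>
      simp [Matrix.mulVecLin_apply, Matrix.mulVec, dotProduct, Fin.sum_univ_three, Matrix.vecHead, Matrix.vecTail] <;>
      ring1
  · refine map_span_single _ _ _ (1) one_ne_zero ?_
    try simp only [u0eq, u1eq, u2eq, u3eq, u4eq, u5eq]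
    funext r
    fin_cases r <;>
      simp [Matrix.mulVecLin_apply, Matrix.mulVec, dotProduct, Fin.sum_univ_three, Matrix.vecHead, Matrix.vecTail] <;>
      ring1
  · refine map_span_single _ _ _ (1) one_ne_zero ?_
    try simp only [u0eq, u1eq, u2eq, u3eq, u4eq, u5eq]
    funext r
    fin_cases r <;>
      simp [Matrix.mulVecLin_apply, Matrix.mulVec, dotProduct, Fin.sum_univ_three, Matrix.vecHead, Matrix.vecTail] <;>
      first
      | linear_combination ((1:F₄)) * h2
      | ring1
  · refine map_span_single _ _ _ (ω^2) (w2_ne0 hw2 h2) ?_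
    try simp only [u0eq, u1eq, u2eq, u3eq, u4eq, u5eq]
    funext r
    fin_cases r <;>
      simp [Matrix.mulVecLin_apply, Matrix.mulVec, dotProduct, Fin.sum_univ_three, Matrix.vecHead, Matrix.vecTail] <;>
      first
      | linear_combination ((-1:F₄) + (-1:F₄)*ω + (-1:F₄)*ω^2) * hw2 + ((-1:F₄)*ω) * h2
      | linear_combination ((-1:F₄)*ω) * hw2
      | ring1
  · refine map_span_single _ _ _ (ω) (w_ne0 hw2 h2) ?_
    try simp only [u0eq, u1eq, u2eq, u3eq, u4eq, u5eq]
    funext r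
    fin_cases r <;>
      simp [Matrix.mulVecLin_apply, Matrix.mulVec, dotProduct, Fin.sum_univ_three, Matrix.vecHead, Matrix.vecTail] <;>
      first
      | linear_combination ((-1:F₄)) * hw2
      | linear_combination ((-1:F₄)*ω) * hw2
      | ring1

lemma Rc_spec {ω : F₄} (hw2 : ω ^ 2 = ω + 1) (h2 : (2:F₄) = 0) :
    ∃ D : GL (Fin 3) F₄, RealizesF4 ω D cpermF4 := by
  have hprod1 : (!![(0:F₄), (0:F₄), (ω:F₄); (1:F₄), (0:F₄), (ω:F₄); (0:F₄), (ω^2:F₄), (ω:F₄)]) * (!![(1:F₄), (1:F₄), (0:F₄); (ω:F₄), (0:F₄), (ω:F₄); (ω^2:F₄), (0:F₄), (0:F₄)]) = 1 := by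
    ext i j
    fin_cases i <;> fin_cases j <;>
      simp [Matrix.mul_apply, Fin.sum_univ_three, Matrix.one_apply, Matrix.vecHead, Matrix.vecTail] <;>
      first
      | linear_combination ((1:F₄) + ω) * hw2 + ((1:F₄) + ω) * h2
      | linear_combination ((1:F₄) + ω) * hw2 + (ω) * h2
      | linear_combination ((2:F₄) + (2:F₄)*ω) * hw2 + ((1:F₄) + (2:F₄)*ω) * h2
      | linear_combination ((2:F₄)) * hw2 + ((1:F₄) + ω) * h2
      | linear_combination (ω) * h2
      | ring1
  have hprod2 : (!![(1:F₄), (1:F₄), (0:F₄); (ω:F₄), (0:F₄), (ω:F₄); (ω^2:F₄), (0:F₄), (0:F₄)]) * (!![(0:F₄), (0:F₄), (ω:F₄); (1:F₄), (0:F₄), (ω:F₄); (0:F₄), (ω^2:F₄), (ω:F₄)]) = 1 := by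
    ext i j
    fin_cases i <;> fin_cases j <;>
      simp [Matrix.mul_apply, Fin.sum_univ_three, Matrix.one_apply, Matrix.vecHead, Matrix.vecTail] <;>
      first
      | linear_combination ((1:F₄) + ω) * hw2 + ((1:F₄) + ω) * h2
      | linear_combination ((1:F₄) + ω) * hw2 + (ω) * h2
      | linear_combination ((2:F₄) + (2:F₄)*ω) * hw2 + ((1:F₄) + (2:F₄)*ω) * h2
      | linear_combination ((2:F₄)) * hw2 + ((1:F₄) + ω) * h2
      | linear_combination (ω) * h2
      | ring1
  refine ⟨⟨_, _, hprod1, hprod2⟩, ?_⟩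
  apply realizes_of_six (σ := cpermF4) (j0 := 1) (j1 := 2) (j2 := 3) (j3 := 4) (j4 := 0) (j5 := 5) (by refine ⟨?_,?_,?_,?_,?_,?_⟩ <;> decide)
  · refine map_span_single _ _ _ (1) one_ne_zero ?_
    try simp only [u0eq, u1eq, u2eq, u3eq, u4eq, u5eq]
    funext r
    fin_cases r <;>
      simp [Matrix.mulVecLin_apply, Matrix.mulVec, dotProduct, Fin.sum_univ_three, Matrix.vecHead, Matrix.vecTail] <;>
      ring1
  · refine map_span_single _ _ _ (ω^2) (w2_ne0 hw2 h2) ?_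
    try simp only [u0eq, u1eq, u2eq, u3eq, u4eq, u5eq]
    funext r
    fin_cases r <;>
      simp [Matrix.mulVecLin_apply, Matrix.mulVec, dotProduct, Fin.sum_univ_three, Matrix.vecHead, Matrix.vecTail] <;>
      ring1
  · refine map_span_single _ _ _ (ω) (w_ne0 hw2 h2) ?_
    try simp only [u0eq, u1eq, u2eq, u3eq, u4eq, u5eq]
    funext r
    fin_cases r <;>
      simp [Matrix.mulVecLin_apply, Matrix.mulVec, dotProduct, Fin.sum_univ_three, Matrix.vecHead, Matrix.vecTail] <;>
      ring1
  · refine map_span_single _ _ _ (ω) (w_ne0 hw2 h2) ?_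
    try simp only [u0eq, u1eq, u2eq, u3eq, u4eq, u5eq]
    funext r
    fin_cases r <;>
      simp [Matrix.mulVecLin_apply, Matrix.mulVec, dotProduct, Fin.sum_univ_three, Matrix.vecHead, Matrix.vecTail] <;>
      first
      | linear_combination ((-1:F₄)) * hw2
      | linear_combination ((-1:F₄)*ω) * hw2
      | ring1
  · refine map_span_single _ _ _ (1) one_ne_zero ?_
    try simp only [u0eq, u1eq, u2eq, u3eq, u4eq, u5eq]
    funext r
    fin_cases r <;>
      simp [Matrix.mulVecLin_apply, Matrix.mulVec, dotProduct, Fin.sum_univ_three, Matrix.vecHead, Matrix.vecTail] <;>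
      first
      | linear_combination ((1:F₄) + ω) * hw2 + ((1:F₄) + ω) * h2
      | linear_combination ((1:F₄) + ω) * hw2 + (ω) * h2
      | linear_combination ((2:F₄) + (2:F₄)*ω) * hw2 + ((1:F₄) + (2:F₄)*ω) * h2
  · refine map_span_single _ _ _ (ω^2) (w2_ne0 hw2 h2) ?_
    try simp only [u0eq, u1eq, u2eq, u3eq, u4eq, u5eq]
    funext r
    fin_cases r <;>
      simp [Matrix.mulVecLin_apply, Matrix.mulVec, dotProduct, Fin.sum_univ_three, Matrix.vecHead, Matrix.vecTail] <;>
      first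
      | linear_combination ((-1:F₄) + (-1:F₄)*ω + (-1:F₄)*ω^2) * hw2 + ((-1:F₄)*ω) * h2
      | linear_combination ((2:F₄) + ω^2) * hw2 + ((1:F₄) + ω) * h2
      | ring1


lemma lines_inj {ω : F₄} (hw2 : ω ^ 2 = ω + 1) (hch : (2:F₄) = 0) :
    Function.Injective (fun i : Fin 6 => Submodule.span F₄ {uvecF4 ω i}) := by
  intro i j h
  simp only at h
  have hm : ∃ c : F₄, c • uvecF4 ω i = uvecF4 ω j := by
    apply Submodule.mem_span_singleton.1
    rw [h]
    exact Submodule.mem_span_singleton_self _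
  obtain ⟨c, hc⟩ := hm
  fin_cases i <;> fin_cases j
  · rfl
  · exfalso
    have hc' : c • (![1,0,0] : Fin 3 → F₄) = (![0,1,0] : Fin 3 → F₄) := hc
    have e0 := congrFun hc' 0
    have e1 := congrFun hc' 1
    have e2 := congrFun hc' 2
    simp only [Pi.smul_apply, smul_eq_mul, Matrix.cons_val_zero, Matrix.cons_val_one,
      Matrix.head_cons, Matrix.cons_val_two, Matrix.vecHead, Matrix.vecTail,
      Function.comp_apply, Fin.succ_zero_eq_one] at e0 e1 e2
    exact one_ne_zero (α := F₄) (by linear_combination e1 + ((1:F₄)) * hch)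
  · exfalso
    have hc' : c • (![1,0,0] : Fin 3 → F₄) = (![0,0,1] : Fin 3 → F₄) := hc
    have e0 := congrFun hc' 0
    have e1 := congrFun hc' 1
    have e2 := congrFun hc' 2
    simp only [Pi.smul_apply, smul_eq_mul, Matrix.cons_val_zero, Matrix.cons_val_one,
      Matrix.head_cons, Matrix.cons_val_two, Matrix.vecHead, Matrix.vecTail,
      Function.comp_apply, Fin.succ_zero_eq_one] at e0 e1 e2
    exact one_ne_zero (α := F₄) (by linear_combination e2 + ((1:F₄)) * hch)
  · exfalso
    have hc' : c • (![1,0,0] : Fin 3 → F₄) = (![1,1,1] : Fin 3 → F₄) := hc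
    have e0 := congrFun hc' 0
    have e1 := congrFun hc' 1
    have e2 := congrFun hc' 2
    simp only [Pi.smul_apply, smul_eq_mul, Matrix.cons_val_zero, Matrix.cons_val_one,
      Matrix.head_cons, Matrix.cons_val_two, Matrix.vecHead, Matrix.vecTail,
      Function.comp_apply, Fin.succ_zero_eq_one] at e0 e1 e2
    exact one_ne_zero (α := F₄) (by linear_combination e1 + ((1:F₄)) * hch)
  · exfalso
    have hc' : c • (![1,0,0] : Fin 3 → F₄) = (![1,ω,ω^2] : Fin 3 → F₄) := hc
    have e0 := congrFun hc' 0
    have e1 := congrFun hc' 1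
    have e2 := congrFun hc' 2
    simp only [Pi.smul_apply, smul_eq_mul, Matrix.cons_val_zero, Matrix.cons_val_one,
      Matrix.head_cons, Matrix.cons_val_two, Matrix.vecHead, Matrix.vecTail,
      Function.comp_apply, Fin.succ_zero_eq_one] at e0 e1 e2
    exact one_ne_zero (α := F₄) (by linear_combination (ω^2) * e1 + ((1:F₄) + ω) * hw2 + ((1:F₄) + ω) * hch)
  · exfalso
    have hc' : c • (![1,0,0] : Fin 3 → F₄) = (![1,ω^2,ω] : Fin 3 → F₄) := hc
    have e0 := congrFun hc' 0
    have e1 := congrFun hc' 1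
    have e2 := congrFun hc' 2
    simp only [Pi.smul_apply, smul_eq_mul, Matrix.cons_val_zero, Matrix.cons_val_one,
      Matrix.head_cons, Matrix.cons_val_two, Matrix.vecHead, Matrix.vecTail,
      Function.comp_apply, Fin.succ_zero_eq_one] at e0 e1 e2
    exact one_ne_zero (α := F₄) (by linear_combination (ω) * e1 + ((1:F₄) + ω) * hw2 + ((1:F₄) + ω) * hch)
  · exfalso
    have hc' : c • (![0,1,0] : Fin 3 → F₄) = (![1,0,0] : Fin 3 → F₄) := hc
    have e0 := congrFun hc' 0
    have e1 := congrFun hc' 1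
    have e2 := congrFun hc' 2
    simp only [Pi.smul_apply, smul_eq_mul, Matrix.cons_val_zero, Matrix.cons_val_one,
      Matrix.head_cons, Matrix.cons_val_two, Matrix.vecHead, Matrix.vecTail,
      Function.comp_apply, Fin.succ_zero_eq_one] at e0 e1 e2
    exact one_ne_zero (α := F₄) (by linear_combination e0 + ((1:F₄)) * hch)
  · rfl
  · exfalso
    have hc' : c • (![0,1,0] : Fin 3 → F₄) = (![0,0,1] : Fin 3 → F₄) := hc
    have e0 := congrFun hc' 0
    have e1 := congrFun hc' 1
    have e2 := congrFun hc' 2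
    simp only [Pi.smul_apply, smul_eq_mul, Matrix.cons_val_zero, Matrix.cons_val_one,
      Matrix.head_cons, Matrix.cons_val_two, Matrix.vecHead, Matrix.vecTail,
      Function.comp_apply, Fin.succ_zero_eq_one] at e0 e1 e2
    exact one_ne_zero (α := F₄) (by linear_combination e2 + ((1:F₄)) * hch)
  · exfalso
    have hc' : c • (![0,1,0] : Fin 3 → F₄) = (![1,1,1] : Fin 3 → F₄) := hc
    have e0 := congrFun hc' 0
    have e1 := congrFun hc' 1
    have e2 := congrFun hc' 2
    simp only [Pi.smul_apply, smul_eq_mul, Matrix.cons_val_zero, Matrix.cons_val_one,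
      Matrix.head_cons, Matrix.cons_val_two, Matrix.vecHead, Matrix.vecTail,
      Function.comp_apply, Fin.succ_zero_eq_one] at e0 e1 e2
    exact one_ne_zero (α := F₄) (by linear_combination e0 + ((1:F₄)) * hch)
  · exfalso
    have hc' : c • (![0,1,0] : Fin 3 → F₄) = (![1,ω,ω^2] : Fin 3 → F₄) := hc
    have e0 := congrFun hc' 0
    have e1 := congrFun hc' 1
    have e2 := congrFun hc' 2
    simp only [Pi.smul_apply, smul_eq_mul, Matrix.cons_val_zero, Matrix.cons_val_one,
      Matrix.head_cons, Matrix.cons_val_two, Matrix.vecHead, Matrix.vecTail,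
      Function.comp_apply, Fin.succ_zero_eq_one] at e0 e1 e2
    exact one_ne_zero (α := F₄) (by linear_combination e0 + ((1:F₄)) * hch)
  · exfalso
    have hc' : c • (![0,1,0] : Fin 3 → F₄) = (![1,ω^2,ω] : Fin 3 → F₄) := hc
    have e0 := congrFun hc' 0
    have e1 := congrFun hc' 1
    have e2 := congrFun hc' 2
    simp only [Pi.smul_apply, smul_eq_mul, Matrix.cons_val_zero, Matrix.cons_val_one,
      Matrix.head_cons, Matrix.cons_val_two, Matrix.vecHead, Matrix.vecTail,
      Function.comp_apply, Fin.succ_zero_eq_one] at e0 e1 e2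
    exact one_ne_zero (α := F₄) (by linear_combination e0 + ((1:F₄)) * hch)
  · exfalso
    have hc' : c • (![0,0,1] : Fin 3 → F₄) = (![1,0,0] : Fin 3 → F₄) := hc
    have e0 := congrFun hc' 0
    have e1 := congrFun hc' 1
    have e2 := congrFun hc' 2
    simp only [Pi.smul_apply, smul_eq_mul, Matrix.cons_val_zero, Matrix.cons_val_one,
      Matrix.head_cons, Matrix.cons_val_two, Matrix.vecHead, Matrix.vecTail,
      Function.comp_apply, Fin.succ_zero_eq_one] at e0 e1 e2
    exact one_ne_zero (α := F₄) (by linear_combination e0 + ((1:F₄)) * hch)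
  · exfalso
    have hc' : c • (![0,0,1] : Fin 3 → F₄) = (![0,1,0] : Fin 3 → F₄) := hc
    have e0 := congrFun hc' 0
    have e1 := congrFun hc' 1
    have e2 := congrFun hc' 2
    simp only [Pi.smul_apply, smul_eq_mul, Matrix.cons_val_zero, Matrix.cons_val_one,
      Matrix.head_cons, Matrix.cons_val_two, Matrix.vecHead, Matrix.vecTail,
      Function.comp_apply, Fin.succ_zero_eq_one] at e0 e1 e2
    exact one_ne_zero (α := F₄) (by linear_combination e1 + ((1:F₄)) * hch)
  · rfl
  · exfalso
    have hc' : c • (![0,0,1] : Fin 3 → F₄) = (![1,1,1] : Fin 3 → F₄) := hc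
    have e0 := congrFun hc' 0
    have e1 := congrFun hc' 1
    have e2 := congrFun hc' 2
    simp only [Pi.smul_apply, smul_eq_mul, Matrix.cons_val_zero, Matrix.cons_val_one,
      Matrix.head_cons, Matrix.cons_val_two, Matrix.vecHead, Matrix.vecTail,
      Function.comp_apply, Fin.succ_zero_eq_one] at e0 e1 e2
    exact one_ne_zero (α := F₄) (by linear_combination e0 + ((1:F₄)) * hch)
  · exfalso
    have hc' : c • (![0,0,1] : Fin 3 → F₄) = (![1,ω,ω^2] : Fin 3 → F₄) := hc
    have e0 := congrFun hc' 0
    have e1 := congrFun hc' 1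
    have e2 := congrFun hc' 2
    simp only [Pi.smul_apply, smul_eq_mul, Matrix.cons_val_zero, Matrix.cons_val_one,
      Matrix.head_cons, Matrix.cons_val_two, Matrix.vecHead, Matrix.vecTail,
      Function.comp_apply, Fin.succ_zero_eq_one] at e0 e1 e2
    exact one_ne_zero (α := F₄) (by linear_combination e0 + ((1:F₄)) * hch)
  · exfalso
    have hc' : c • (![0,0,1] : Fin 3 → F₄) = (![1,ω^2,ω] : Fin 3 → F₄) := hc
    have e0 := congrFun hc' 0
    have e1 := congrFun hc' 1
    have e2 := congrFun hc' 2
    simp only [Pi.smul_apply, smul_eq_mul, Matrix.cons_val_zero, Matrix.cons_val_one,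
      Matrix.head_cons, Matrix.cons_val_two, Matrix.vecHead, Matrix.vecTail,
      Function.comp_apply, Fin.succ_zero_eq_one] at e0 e1 e2
    exact one_ne_zero (α := F₄) (by linear_combination e0 + ((1:F₄)) * hch)
  · exfalso
    have hc' : c • (![1,1,1] : Fin 3 → F₄) = (![1,0,0] : Fin 3 → F₄) := hc
    have e0 := congrFun hc' 0
    have e1 := congrFun hc' 1
    have e2 := congrFun hc' 2
    simp only [Pi.smul_apply, smul_eq_mul, Matrix.cons_val_zero, Matrix.cons_val_one,
      Matrix.head_cons, Matrix.cons_val_two, Matrix.vecHead, Matrix.vecTail,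
      Function.comp_apply, Fin.succ_zero_eq_one] at e0 e1 e2
    exact one_ne_zero (α := F₄) (by linear_combination e0 + e1 + ((1:F₄)) * hch + ((((-1:F₄))) * (c)) * hch)
  · exfalso
    have hc' : c • (![1,1,1] : Fin 3 → F₄) = (![0,1,0] : Fin 3 → F₄) := hc
    have e0 := congrFun hc' 0
    have e1 := congrFun hc' 1
    have e2 := congrFun hc' 2
    simp only [Pi.smul_apply, smul_eq_mul, Matrix.cons_val_zero, Matrix.cons_val_one,
      Matrix.head_cons, Matrix.cons_val_two, Matrix.vecHead, Matrix.vecTail,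
      Function.comp_apply, Fin.succ_zero_eq_one] at e0 e1 e2
    exact one_ne_zero (α := F₄) (by linear_combination e0 + e1 + ((1:F₄)) * hch + ((((-1:F₄))) * (c)) * hch)
  · exfalso
    have hc' : c • (![1,1,1] : Fin 3 → F₄) = (![0,0,1] : Fin 3 → F₄) := hc
    have e0 := congrFun hc' 0
    have e1 := congrFun hc' 1
    have e2 := congrFun hc' 2
    simp only [Pi.smul_apply, smul_eq_mul, Matrix.cons_val_zero, Matrix.cons_val_one,
      Matrix.head_cons, Matrix.cons_val_two, Matrix.vecHead, Matrix.vecTail,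
      Function.comp_apply, Fin.succ_zero_eq_one] at e0 e1 e2
    exact one_ne_zero (α := F₄) (by linear_combination e0 + e2 + ((1:F₄)) * hch + ((((-1:F₄))) * (c)) * hch)
  · rfl
  · exfalso
    have hc' : c • (![1,1,1] : Fin 3 → F₄) = (![1,ω,ω^2] : Fin 3 → F₄) := hc
    have e0 := congrFun hc' 0
    have e1 := congrFun hc' 1
    have e2 := congrFun hc' 2
    simp only [Pi.smul_apply, smul_eq_mul, Matrix.cons_val_zero, Matrix.cons_val_one,
      Matrix.head_cons, Matrix.cons_val_two, Matrix.vecHead, Matrix.vecTail,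
      Function.comp_apply, Fin.succ_zero_eq_one] at e0 e1 e2
    exact one_ne_zero (α := F₄) (by linear_combination (ω) * e0 + (ω) * e1 + ((1:F₄)) * hw2 + ((1:F₄) + ω) * hch + ((((-1:F₄)*ω)) * (c)) * hch)
  · exfalso
    have hc' : c • (![1,1,1] : Fin 3 → F₄) = (![1,ω^2,ω] : Fin 3 → F₄) := hc
    have e0 := congrFun hc' 0
    have e1 := congrFun hc' 1
    have e2 := congrFun hc' 2
    simp only [Pi.smul_apply, smul_eq_mul, Matrix.cons_val_zero, Matrix.cons_val_one,
      Matrix.head_cons, Matrix.cons_val_two, Matrix.vecHead, Matrix.vecTail,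
      Function.comp_apply, Fin.succ_zero_eq_one] at e0 e1 e2
    exact one_ne_zero (α := F₄) (by linear_combination (ω^2) * e0 + (ω^2) * e1 + ((3:F₄) + ω + ω^2) * hw2 + ((2:F₄) + (2:F₄)*ω) * hch + (((-2:F₄)) * (c)) * hw2 + ((((-1:F₄) + (-1:F₄)*ω)) * (c)) * hch)
  · exfalso
    have hc' : c • (![1,ω,ω^2] : Fin 3 → F₄) = (![1,0,0] : Fin 3 → F₄) := hc
    have e0 := congrFun hc' 0
    have e1 := congrFun hc' 1
    have e2 := congrFun hc' 2
    simp only [Pi.smul_apply, smul_eq_mul, Matrix.cons_val_zero, Matrix.cons_val_one,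
      Matrix.head_cons, Matrix.cons_val_two, Matrix.vecHead, Matrix.vecTail,
      Function.comp_apply, Fin.succ_zero_eq_one] at e0 e1 e2
    exact one_ne_zero (α := F₄) (by linear_combination e0 + (ω^2) * e1 + ((1:F₄)) * hch + (((-1:F₄) + (-1:F₄)*ω) * (c)) * hw2 + ((((-1:F₄) + (-1:F₄)*ω)) * (c)) * hch)
  · exfalso
    have hc' : c • (![1,ω,ω^2] : Fin 3 → F₄) = (![0,1,0] : Fin 3 → F₄) := hc
    have e0 := congrFun hc' 0
    have e1 := congrFun hc' 1
    have e2 := congrFun hc' 2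
    simp only [Pi.smul_apply, smul_eq_mul, Matrix.cons_val_zero, Matrix.cons_val_one,
      Matrix.head_cons, Matrix.cons_val_two, Matrix.vecHead, Matrix.vecTail,
      Function.comp_apply, Fin.succ_zero_eq_one] at e0 e1 e2
    exact one_ne_zero (α := F₄) (by linear_combination (ω) * e0 + e1 + ((1:F₄)) * hch + ((((-1:F₄)*ω)) * (c)) * hch)
  · exfalso
    have hc' : c • (![1,ω,ω^2] : Fin 3 → F₄) = (![0,0,1] : Fin 3 → F₄) := hc
    have e0 := congrFun hc' 0
    have e1 := congrFun hc' 1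
    have e2 := congrFun hc' 2
    simp only [Pi.smul_apply, smul_eq_mul, Matrix.cons_val_zero, Matrix.cons_val_one,
      Matrix.head_cons, Matrix.cons_val_two, Matrix.vecHead, Matrix.vecTail,
      Function.comp_apply, Fin.succ_zero_eq_one] at e0 e1 e2
    exact one_ne_zero (α := F₄) (by linear_combination (ω^2) * e0 + e2 + ((1:F₄)) * hch + (((-2:F₄)) * (c)) * hw2 + ((((-1:F₄) + (-1:F₄)*ω)) * (c)) * hch)
  · exfalso
    have hc' : c • (![1,ω,ω^2] : Fin 3 → F₄) = (![1,1,1] : Fin 3 → F₄) := hc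
    have e0 := congrFun hc' 0
    have e1 := congrFun hc' 1
    have e2 := congrFun hc' 2
    simp only [Pi.smul_apply, smul_eq_mul, Matrix.cons_val_zero, Matrix.cons_val_one,
      Matrix.head_cons, Matrix.cons_val_two, Matrix.vecHead, Matrix.vecTail,
      Function.comp_apply, Fin.succ_zero_eq_one] at e0 e1 e2
    exact one_ne_zero (α := F₄) (by linear_combination (ω^2) * e0 + (ω) * e1 + ((1:F₄)) * hw2 + ((1:F₄) + ω) * hch + (((-2:F₄)) * (c)) * hw2 + ((((-1:F₄) + (-1:F₄)*ω)) * (c)) * hch)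
  · rfl
  · exfalso
    have hc' : c • (![1,ω,ω^2] : Fin 3 → F₄) = (![1,ω^2,ω] : Fin 3 → F₄) := hc
    have e0 := congrFun hc' 0
    have e1 := congrFun hc' 1
    have e2 := congrFun hc' 2
    simp only [Pi.smul_apply, smul_eq_mul, Matrix.cons_val_zero, Matrix.cons_val_one,
      Matrix.head_cons, Matrix.cons_val_two, Matrix.vecHead, Matrix.vecTail,
      Function.comp_apply, Fin.succ_zero_eq_one] at e0 e1 e2
    exact one_ne_zero (α := F₄) (by linear_combination (ω) * e0 + e1 + ((1:F₄)) * hw2 + ((1:F₄) + ω) * hch + ((((-1:F₄)*ω)) * (c)) * hch)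
  · exfalso
    have hc' : c • (![1,ω^2,ω] : Fin 3 → F₄) = (![1,0,0] : Fin 3 → F₄) := hc
    have e0 := congrFun hc' 0
    have e1 := congrFun hc' 1
    have e2 := congrFun hc' 2
    simp only [Pi.smul_apply, smul_eq_mul, Matrix.cons_val_zero, Matrix.cons_val_one,
      Matrix.head_cons, Matrix.cons_val_two, Matrix.vecHead, Matrix.vecTail,
      Function.comp_apply, Fin.succ_zero_eq_one] at e0 e1 e2
    exact one_ne_zero (α := F₄) (by linear_combination e0 + (ω) * e1 + ((1:F₄)) * hch + (((-1:F₄) + (-1:F₄)*ω) * (c)) * hw2 + ((((-1:F₄) + (-1:F₄)*ω)) * (c)) * hch)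
  · exfalso
    have hc' : c • (![1,ω^2,ω] : Fin 3 → F₄) = (![0,1,0] : Fin 3 → F₄) := hc
    have e0 := congrFun hc' 0
    have e1 := congrFun hc' 1
    have e2 := congrFun hc' 2
    simp only [Pi.smul_apply, smul_eq_mul, Matrix.cons_val_zero, Matrix.cons_val_one,
      Matrix.head_cons, Matrix.cons_val_two, Matrix.vecHead, Matrix.vecTail,
      Function.comp_apply, Fin.succ_zero_eq_one] at e0 e1 e2
    exact one_ne_zero (α := F₄) (by linear_combination (ω^2) * e0 + e1 + ((1:F₄)) * hch + (((-2:F₄)) * (c)) * hw2 + ((((-1:F₄) + (-1:F₄)*ω)) * (c)) * hch)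
  · exfalso
    have hc' : c • (![1,ω^2,ω] : Fin 3 → F₄) = (![0,0,1] : Fin 3 → F₄) := hc
    have e0 := congrFun hc' 0
    have e1 := congrFun hc' 1
    have e2 := congrFun hc' 2
    simp only [Pi.smul_apply, smul_eq_mul, Matrix.cons_val_zero, Matrix.cons_val_one,
      Matrix.head_cons, Matrix.cons_val_two, Matrix.vecHead, Matrix.vecTail,
      Function.comp_apply, Fin.succ_zero_eq_one] at e0 e1 e2
    exact one_ne_zero (α := F₄) (by linear_combination (ω) * e0 + e2 + ((1:F₄)) * hch + ((((-1:F₄)*ω)) * (c)) * hch)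
  · exfalso
    have hc' : c • (![1,ω^2,ω] : Fin 3 → F₄) = (![1,1,1] : Fin 3 → F₄) := hc
    have e0 := congrFun hc' 0
    have e1 := congrFun hc' 1
    have e2 := congrFun hc' 2
    simp only [Pi.smul_apply, smul_eq_mul, Matrix.cons_val_zero, Matrix.cons_val_one,
      Matrix.head_cons, Matrix.cons_val_two, Matrix.vecHead, Matrix.vecTail,
      Function.comp_apply, Fin.succ_zero_eq_one] at e0 e1 e2
    exact one_ne_zero (α := F₄) (by linear_combination (ω) * e0 + (ω^2) * e1 + ((1:F₄)) * hw2 + ((1:F₄) + ω) * hch + (((-2:F₄) + (-1:F₄)*ω + (-1:F₄)*ω^2) * (c)) * hw2 + ((((-1:F₄) + (-2:F₄)*ω)) * (c)) * hch)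
  · exfalso
    have hc' : c • (![1,ω^2,ω] : Fin 3 → F₄) = (![1,ω,ω^2] : Fin 3 → F₄) := hc
    have e0 := congrFun hc' 0
    have e1 := congrFun hc' 1
    have e2 := congrFun hc' 2
    simp only [Pi.smul_apply, smul_eq_mul, Matrix.cons_val_zero, Matrix.cons_val_one,
      Matrix.head_cons, Matrix.cons_val_two, Matrix.vecHead, Matrix.vecTail,
      Function.comp_apply, Fin.succ_zero_eq_one] at e0 e1 e2
    exact one_ne_zero (α := F₄) (by linear_combination (ω^2) * e0 + e1 + ((1:F₄)) * hw2 + ((1:F₄) + ω) * hch + (((-2:F₄)) * (c)) * hw2 + ((((-1:F₄) + (-1:F₄)*ω)) * (c)) * hch)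
  · rfl

lemma scalar_of_fixes {ω : F₄} (hw2 : ω ^ 2 = ω + 1) (hch : (2:F₄) = 0)
    (D : Matrix (Fin 3) (Fin 3) F₄)
    (f2 : ∃ c : F₄, c • uvecF4 ω 2 = D *ᵥ uvecF4 ω 2)
    (f3 : ∃ c : F₄, c • uvecF4 ω 3 = D *ᵥ uvecF4 ω 3)
    (f4 : ∃ c : F₄, c • uvecF4 ω 4 = D *ᵥ uvecF4 ω 4)
    (f5 : ∃ c : F₄, c • uvecF4 ω 5 = D *ᵥ uvecF4 ω 5) :
    ∃ c : F₄, D = c • (1 : Matrix (Fin 3) (Fin 3) F₄) := by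
  obtain ⟨c2, hc2⟩ := f2
  obtain ⟨c3, hc3⟩ := f3
  obtain ⟨c4, hc4⟩ := f4
  obtain ⟨c5, hc5⟩ := f5
  have p2 : c2 • (![0,0,1] : Fin 3 → F₄) = D *ᵥ (![0,0,1] : Fin 3 → F₄) := hc2
  have e20 := congrFun p2 0
  have e21 := congrFun p2 1
  have e22 := congrFun p2 2
  have p3 : c3 • (![1,1,1] : Fin 3 → F₄) = D *ᵥ (![1,1,1] : Fin 3 → F₄) := hc3
  have e30 := congrFun p3 0
  have e31 := congrFun p3 1
  have e32 := congrFun p3 2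
  have p4 : c4 • (![1,ω,ω^2] : Fin 3 → F₄) = D *ᵥ (![1,ω,ω^2] : Fin 3 → F₄) := hc4
  have e40 := congrFun p4 0
  have e41 := congrFun p4 1
  have e42 := congrFun p4 2
  have p5 : c5 • (![1,ω^2,ω] : Fin 3 → F₄) = D *ᵥ (![1,ω^2,ω] : Fin 3 → F₄) := hc5
  have e50 := congrFun p5 0
  have e51 := congrFun p5 1
  have e52 := congrFun p5 2
  simp only [Pi.smul_apply, smul_eq_mul, Matrix.mulVec, dotProduct,
    Fin.sum_univ_three, Matrix.cons_val_zero, Matrix.cons_val_one, Matrix.head_cons,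
    Matrix.cons_val_two, Matrix.vecHead, Matrix.vecTail, Function.comp_apply,
    Fin.succ_zero_eq_one] at e20 e21 e22 e30 e31 e32 e40 e41 e42 e50 e51 e52
  have g00 : D 0 0 = c3 := by linear_combination e20 + e21 + e31 + (ω^2) * e40 + (ω) * e41 + (ω) * e50 + (ω^2) * e51 + (((1:F₄)) * (D 0 0)) * hw2 + ((((1:F₄) + ω)) * (D 0 0)) * hch + ((((-1:F₄))) * (c3)) * hch + (((2:F₄) + (2:F₄)*ω) * (D 0 1)) * hw2 + ((((1:F₄) + (2:F₄)*ω)) * (D 0 1)) * hch + (((3:F₄) + ω + ω^2) * (D 0 2)) * hw2 + ((((2:F₄) + (2:F₄)*ω)) * (D 0 2)) * hch + (((1:F₄)) * (D 1 0)) * hw2 + ((((1:F₄) + ω)) * (D 1 0)) * hch + (((3:F₄) + ω + ω^2) * (D 1 1)) * hw2 + ((((2:F₄) + (2:F₄)*ω)) * (D 1 1)) * hch + (((2:F₄) + (2:F₄)*ω) * (D 1 2)) * hw2 + ((((2:F₄) + (2:F₄)*ω)) * (D 1 2)) * hch + (((-2:F₄)) * (c4)) * hw2 + ((((-1:F₄)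 + (-1:F₄)*ω)) * (c4)) * hch + (((-2:F₄) + (-1:F₄)*ω + (-1:F₄)*ω^2) * (c5)) * hw2 + ((((-1:F₄) + (-2:F₄)*ω)) * (c5)) * hch
  have g01 : D 0 1 = 0 := by linear_combination e21 + e30 + e31 + (ω^2) * e40 + (ω) * e41 + (ω) * e50 + (ω^2) * e51 + (((2:F₄) + (2:F₄)*ω) * (D 0 1)) * hw2 + ((((2:F₄) + (2:F₄)*ω)) * (D 0 1)) * hch + (((1:F₄)) * (D 1 0)) * hw2 + ((((1:F₄) + ω)) * (D 1 0)) * hch + (((3:F₄) + ω + ω^2) * (D 1 1)) * hw2 + ((((2:F₄) + (2:F₄)*ω)) * (D 1 1)) * hch + (((2:F₄) + (2:F₄)*ω) * (D 1 2)) * hw2 + ((((2:F₄) + (2:F₄)*ω)) * (D 1 2)) * hch + ((((-1:F₄))) * (c3)) * hch + (((1:F₄)) * (D 0 0)) * hw2 + ((((1:F₄) + ω)) * (D 0 0)) * hch + (((3:F₄) + ω + ω^2) * (D 0 2)) * hw2 + ((((2:F₄) + (2:F₄)*ω)) * (D 0 2)) * hch + (((-2:F₄)) * (c4)) * hw2 +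 ((((-1:F₄) + (-1:F₄)*ω)) * (c4)) * hch + (((-2:F₄) + (-1:F₄)*ω + (-1:F₄)*ω^2) * (c5)) * hw2 + ((((-1:F₄) + (-2:F₄)*ω)) * (c5)) * hch
  have g02 : D 0 2 = 0 := by linear_combination e20 + ((((1:F₄))) * (D 0 2)) * hch
  have g10 : D 1 0 = 0 := by linear_combination e20 + e30 + e31 + (ω) * e40 + e41 + (ω^2) * e50 + e51 + ((((2:F₄))) * (D 1 0)) * hch + (((1:F₄)) * (D 0 0)) * hw2 + ((((1:F₄) + ω)) * (D 0 0)) * hch + (((3:F₄) + ω + ω^2) * (D 0 1)) * hw2 + ((((2:F₄) + (2:F₄)*ω)) * (D 0 1)) * hch + (((2:F₄) + (2:F₄)*ω) * (D 0 2)) * hw2 + ((((2:F₄) + (2:F₄)*ω)) * (D 0 2)) * hch + ((((-1:F₄))) * (c3)) * hch + (((1:F₄)) * (D 1 1)) * hw2 + ((((1:F₄) + ω)) * (D 1 1)) * hch + (((1:F₄)) * (D 1 2)) * hw2 + ((((1:F₄) + ω)) * (D 1 2)) * hch + ((((-1:F₄)*ω)) * (c4)) * hch + (((-2:F₄)) *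 (c5)) * hw2 + ((((-1:F₄) + (-1:F₄)*ω)) * (c5)) * hch
  have g11 : D 1 1 = c3 := by linear_combination e20 + e21 + e30 + (ω) * e40 + e41 + (ω^2) * e50 + e51 + (((1:F₄)) * (D 1 1)) * hw2 + ((((1:F₄) + ω)) * (D 1 1)) * hch + ((((-1:F₄))) * (c3)) * hch + (((1:F₄)) * (D 0 0)) * hw2 + ((((1:F₄) + ω)) * (D 0 0)) * hch + (((3:F₄) + ω + ω^2) * (D 0 1)) * hw2 + ((((2:F₄) + (2:F₄)*ω)) * (D 0 1)) * hch + (((2:F₄) + (2:F₄)*ω) * (D 0 2)) * hw2 + ((((2:F₄) + (2:F₄)*ω)) * (D 0 2)) * hch + ((((1:F₄))) * (D 1 0)) * hch + (((1:F₄)) * (D 1 2)) * hw2 + ((((1:F₄) + ω)) * (D 1 2)) * hch + ((((-1:F₄)*ω)) * (c4)) * hch + (((-2:F₄)) * (c5)) * hw2 + ((((-1:F₄) + (-1:F₄)*ω)) * (c5)) * hch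
  have g12 : D 1 2 = 0 := by linear_combination e21 + ((((1:F₄))) * (D 1 2)) * hch
  have g20 : D 2 0 = 0 := by linear_combination e21 + e31 + e32 + (ω) * e41 + e42 + (ω^2) * e51 + e52 + ((((2:F₄))) * (D 2 0)) * hch + (((1:F₄)) * (D 1 0)) * hw2 + ((((1:F₄) + ω)) * (D 1 0)) * hch + (((3:F₄) + ω + ω^2) * (D 1 1)) * hw2 + ((((2:F₄) + (2:F₄)*ω)) * (D 1 1)) * hch + (((2:F₄) + (2:F₄)*ω) * (D 1 2)) * hw2 + ((((2:F₄) + (2:F₄)*ω)) * (D 1 2)) * hch + ((((-1:F₄))) * (c3)) * hch + (((1:F₄)) * (D 2 1)) * hw2 + ((((1:F₄) + ω)) * (D 2 1)) * hch + (((1:F₄)) * (D 2 2)) * hw2 + ((((1:F₄) + ω)) * (D 2 2)) * hch + (((-2:F₄)) * (c4)) * hw2 + ((((-1:F₄) + (-1:F₄)*ω)) * (c4)) * hch + (((-2:F₄) + (-1:F₄)*ω + (-1:F₄)*ω^2) * (c5)) * hw2 + ((((-1:F₄) + (-2:F₄)*ω)) * (c5)) * hch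
  have g21 : D 2 1 = 0 := by linear_combination e20 + e30 + e32 + (ω) * e40 + (ω^2) * e42 + (ω^2) * e50 + (ω) * e52 + (((2:F₄) + (2:F₄)*ω) * (D 2 1)) * hw2 + ((((2:F₄) + (2:F₄)*ω)) * (D 2 1)) * hch + (((1:F₄)) * (D 0 0)) * hw2 + ((((1:F₄) + ω)) * (D 0 0)) * hch + (((3:F₄) + ω + ω^2) * (D 0 1)) * hw2 + ((((2:F₄) + (2:F₄)*ω)) * (D 0 1)) * hch + (((2:F₄) + (2:F₄)*ω) * (D 0 2)) * hw2 + ((((2:F₄) + (2:F₄)*ω)) * (D 0 2)) * hch + ((((-1:F₄))) * (c3)) * hch + (((1:F₄)) * (D 2 0)) * hw2 + ((((1:F₄) + ω)) * (D 2 0)) * hch + (((3:F₄) + ω + ω^2) * (D 2 2)) * hw2 + ((((2:F₄) + (2:F₄)*ω)) * (D 2 2)) * hch + (((-2:F₄) + (-1:F₄)*ω + (-1:F₄)*ω^2) * (c4)) * hw2 + ((((-1:F₄) + (-2:F₄)*ω)) * (c4)) * hch + (((-2:F₄)) * (c5)) * hw2 + ((((-1:F₄) + (-1:F₄)*ω))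 * (c5)) * hch
  have g22 : D 2 2 = c3 := by linear_combination e20 + e21 + e30 + e31 + e32 + (ω) * e40 + (ω) * e41 + (ω) * e42 + (ω^2) * e50 + (ω^2) * e51 + (ω^2) * e52 + (((2:F₄) + (2:F₄)*ω) * (D 2 2)) * hw2 + ((((2:F₄) + (2:F₄)*ω)) * (D 2 2)) * hch + ((((-2:F₄))) * (c3)) * hch + (((1:F₄)) * (D 0 0)) * hw2 + ((((1:F₄) + ω)) * (D 0 0)) * hch + (((3:F₄) + ω + ω^2) * (D 0 1)) * hw2 + ((((2:F₄) + (2:F₄)*ω)) * (D 0 1)) * hch + (((2:F₄) + (2:F₄)*ω) * (D 0 2)) * hw2 + ((((2:F₄) + (2:F₄)*ω)) * (D 0 2)) * hch + (((1:F₄)) * (D 1 0)) * hw2 + ((((1:F₄) + ω)) * (D 1 0)) * hch + (((3:F₄) + ω + ω^2) * (D 1 1)) * hw2 + ((((2:F₄) + (2:F₄)*ω)) * (D 1 1)) * hch + (((2:F₄) + (2:F₄)*ω) * (D 1 2)) * hw2 + ((((2:F₄) + (2:F₄)*ω)) * (D 1 2)) * hch + (((1:F₄)) * (D 2 0)) *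 hw2 + ((((1:F₄) + ω)) * (D 2 0)) * hch + (((3:F₄) + ω + ω^2) * (D 2 1)) * hw2 + ((((2:F₄) + (2:F₄)*ω)) * (D 2 1)) * hch + (((-2:F₄) + (-1:F₄)*ω) * (c4)) * hw2 + ((((-1:F₄) + (-2:F₄)*ω)) * (c4)) * hch + (((-4:F₄) + (-2:F₄)*ω + (-1:F₄)*ω^2) * (c5)) * hw2 + ((((-2:F₄) + (-3:F₄)*ω)) * (c5)) * hch
  refine ⟨c3, ?_⟩
  ext i j
  fin_cases i <;> fin_cases j <;> simp [Matrix.one_apply] <;>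
    first
    | exact g00
    | exact g01
    | exact g02
    | exact g10
    | exact g11
    | exact g12
    | exact g20
    | exact g21
    | exact g22


def K8list : List (Equiv.Perm (Fin 6)) :=
  [1, rpermF4, rpermF4^2, rpermF4^3, spermF4, spermF4*rpermF4, spermF4*rpermF4^2, spermF4*rpermF4^3]
def K9list : List (Equiv.Perm (Fin 6)) :=
  [1, apermF4, apermF4^2, bpermF4, bpermF4^2, apermF4*bpermF4, apermF4*bpermF4^2,
   apermF4^2*bpermF4, apermF4^2*bpermF4^2]

def K8F4 : Subgroup (Equiv.Perm (Fin 6)) where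
  carrier := {x | x ∈ K8list}
  one_mem' := by decide
  mul_mem' := by
    intro a b ha hb
    simp only [K8list, Set.mem_setOf_eq, List.mem_cons, List.not_mem_nil, or_false] at ha hb ⊢
    rcases ha with rfl|rfl|rfl|rfl|rfl|rfl|rfl|rfl <;>
      rcases hb with rfl|rfl|rfl|rfl|rfl|rfl|rfl|rfl <;> decide
  inv_mem' := by
    intro a ha
    simp only [K8list, Set.mem_setOf_eq, List.mem_cons, List.not_mem_nil, or_false] at ha ⊢
    rcases ha with rfl|rfl|rfl|rfl|rfl|rfl|rfl|rfl <;> decide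

def K9F4 : Subgroup (Equiv.Perm (Fin 6)) where
  carrier := {x | x ∈ K9list}
  one_mem' := by decide
  mul_mem' := by
    intro a b ha hb
    simp only [K9list, Set.mem_setOf_eq, List.mem_cons, List.not_mem_nil, or_false] at ha hb ⊢
    rcases ha with rfl|rfl|rfl|rfl|rfl|rfl|rfl|rfl|rfl <;>
      rcases hb with rfl|rfl|rfl|rfl|rfl|rfl|rfl|rfl|rfl <;> decide
  inv_mem' := by
    intro a ha
    simp only [K9list, Set.mem_setOf_eq, List.mem_cons, List.not_mem_nil, or_false] at ha ⊢
    rcases ha with rfl|rfl|rfl|rfl|rfl|rfl|rfl|rfl|rfl <;> decide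

lemma K8F4_card : Nat.card K8F4 = 8 := by
  have hset : (K8F4 : Set (Equiv.Perm (Fin 6))) = ↑K8list.toFinset := by
    ext x
    simp only [SetLike.mem_coe, Finset.coe_sort_coe, List.coe_toFinset, Set.mem_setOf_eq]
    exact Iff.rfl
  have : Nat.card K8F4 = Nat.card ↥(K8F4 : Set (Equiv.Perm (Fin 6))) := rfl
  rw [this, hset, Nat.card_coe_set_eq, Set.ncard_coe_finset]
  decide

lemma K9F4_card : Nat.card K9F4 = 9 := by
  have hset : (K9F4 : Set (Equiv.Perm (Fin 6))) = ↑K9list.toFinset := by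
    ext x
    simp only [SetLike.mem_coe, Finset.coe_sort_coe, List.coe_toFinset, Set.mem_setOf_eq]
    exact Iff.rfl
  have : Nat.card K9F4 = Nat.card ↥(K9F4 : Set (Equiv.Perm (Fin 6))) := rfl
  rw [this, hset, Nat.card_coe_set_eq, Set.ncard_coe_finset]
  decide

/-- The stabilizer subgroup. -/
noncomputable def hexGroupF4 (ω : F₄) : Subgroup (GL (Fin 3) F₄) where
  carrier := {D : GL (Fin 3) F₄ | (fun L => Submodule.map ((D : Matrix (Fin 3) (Fin 3)
        F₄).mulVecLin) L) '' ULinesF4 ω = ULinesF4 ω}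
  one_mem' := by
    have : (fun L : Submodule F₄ (Fin 3 → F₄) => Submodule.map (((1 : GL (Fin 3) F₄) :
        Matrix (Fin 3) (Fin 3) F₄).mulVecLin) L) = fun L => L := by
      funext L
      rw [Units.val_one, Matrix.mulVecLin_one, Submodule.map_id]
    show _ '' _ = _
    rw [this, Set.image_id']
  mul_mem' := by
    intro a b ha hb
    show _ '' _ = _
    have hcomp : (fun L : Submodule F₄ (Fin 3 → F₄) => Submodule.map (((a * b : GL (Fin 3) F₄) :
        Matrix (Fin 3) (Fin 3) F₄).mulVecLin) L)
        = (fun L => Submodule.map ((a : Matrix (Fin 3) (Fin 3) F₄).mulVecLin) L)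
          ∘ (fun L => Submodule.map ((b : Matrix (Fin 3) (Fin 3) F₄).mulVecLin) L) := by
      funext L
      show Submodule.map _ _ = Submodule.map _ (Submodule.map _ _)
      rw [← Submodule.map_comp, Units.val_mul, Matrix.mulVecLin_mul]
    rw [hcomp, Set.image_comp, hb, ha]
  inv_mem' := by
    intro a ha
    show _ '' _ = _
    conv_lhs => rw [← ha]
    rw [← Set.image_comp]
    have hcomp : ((fun L : Submodule F₄ (Fin 3 → F₄) => Submodule.map (((a⁻¹ : GL (Fin 3) F₄) :
        Matrix (Fin 3) (Fin 3) F₄).mulVecLin) L)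
        ∘ (fun L => Submodule.map ((a : Matrix (Fin 3) (Fin 3) F₄).mulVecLin) L)) = fun L => L := by
      funext L
      show Submodule.map _ (Submodule.map _ _) = _
      rw [← Submodule.map_comp, ← Matrix.mulVecLin_mul, ← Units.val_mul, inv_mul_cancel,
        Units.val_one, Matrix.mulVecLin_one, Submodule.map_id]
    rw [hcomp, Set.image_id']

lemma map_cancel (A : GL (Fin 3) F₄) (L : Submodule F₄ (Fin 3 → F₄)) :
    Submodule.map (((A⁻¹ : GL (Fin 3) F₄) : Matrix (Fin 3) (Fin 3) F₄).mulVecLin)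
      (Submodule.map ((A : Matrix (Fin 3) (Fin 3) F₄).mulVecLin) L) = L := by
  rw [← Submodule.map_comp, ← Matrix.mulVecLin_mul, ← Units.val_mul, inv_mul_cancel,
    Units.val_one, Matrix.mulVecLin_one, Submodule.map_id]

lemma mem_of_realizes {ω : F₄} {D : GL (Fin 3) F₄} {σ : Equiv.Perm (Fin 6)}
    (h : RealizesF4 ω D σ) : D ∈ hexGroupF4 ω := by
  show _ '' _ = _
  ext L
  constructor
  · rintro ⟨L', ⟨i, rfl⟩, rfl⟩
    exact ⟨σ i, ((h i) : _)⟩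
  · rintro ⟨i, rfl⟩
    refine ⟨Submodule.span F₄ {uvecF4 ω (σ⁻¹ i)}, ⟨σ⁻¹ i, rfl⟩, ?_⟩
    show Submodule.map _ _ = _
    rw [h (σ⁻¹ i), Equiv.Perm.coe_inv, Equiv.apply_symm_apply]

lemma realizes_unique {ω : F₄} (hw2 : ω ^ 2 = ω + 1) (hch : (2:F₄) = 0)
    {D : GL (Fin 3) F₄} {σ τ : Equiv.Perm (Fin 6)}
    (h1 : RealizesF4 ω D σ) (h2 : RealizesF4 ω D τ) : σ = τ :=
  Equiv.ext fun i => lines_inj hw2 hch ((h1 i).symm.trans (h2 i))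

lemma smul_one_mulVec (c : F₄) (v : Fin 3 → F₄) :
    (c • (1 : Matrix (Fin 3) (Fin 3) F₄)) *ᵥ v = c • v := by
  rw [Matrix.smul_mulVec, Matrix.one_mulVec]

lemma realizes_smul_one {ω : F₄} {c : F₄} (hc : c ≠ 0) {D : GL (Fin 3) F₄}
    (hval : (D : Matrix (Fin 3) (Fin 3) F₄) = c • 1) : RealizesF4 ω D 1 := by
  intro i
  refine map_span_single _ _ _ c hc ?_
  rw [Matrix.mulVecLin_apply, hval, smul_one_mulVec]
  rfl

lemma exists_smul_of_fix {ω : F₄} (D : Matrix (Fin 3) (Fin 3) F₄) (k : Fin 6)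
    (h : Submodule.map (D.mulVecLin) (Submodule.span F₄ {uvecF4 ω k})
      = Submodule.span F₄ {uvecF4 ω k}) :
    ∃ c : F₄, c • uvecF4 ω k = D *ᵥ uvecF4 ω k := by
  have hmem : D *ᵥ uvecF4 ω k ∈ Submodule.span F₄ {uvecF4 ω k} := by
    rw [← h]
    exact Submodule.mem_map_of_mem (Submodule.mem_span_singleton_self _)
  exact Submodule.mem_span_singleton.1 hmem

lemma scalar_GL_ne0 (D : GL (Fin 3) F₄) (c : F₄)
    (h : (D : Matrix (Fin 3) (Fin 3) F₄) = c • 1) : c ≠ 0 := by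
  intro h0
  have hv := D.val_inv
  rw [h, h0, zero_smul, Matrix.zero_mul] at hv
  simpa [Matrix.one_apply] using congrFun (congrFun hv 0) 0


/-- the set `Δ = {D ∈ GL₃(𝔽₄) | D permutes the six lines
`⟨u₁⟩,…,⟨u₆⟩`}` is a subgroup of `GL₃(𝔽₄)` of order 1080; its intersection with
the scalar matrices is `{I, ωI, ω̄I}` (of order 3); and its image in the symmetric
group on the six lines is the alternating group `A₆` (of order 360). -/
theorem hexacode_stabilizer_is_3A6
    (ω : GaloisField 2 2) (hω0 : ω ≠ 0) (hω1 : ω ≠ 1)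
    (Δ : Set (GL (Fin 3) (GaloisField 2 2)))
    (hΔ : Δ = {D : GL (Fin 3) (GaloisField 2 2) | (fun L => Submodule.map ((D : Matrix (Fin 3) (Fin 3)
        (GaloisField 2 2)).mulVecLin) L) '' ULinesF4 ω = ULinesF4 ω}) :
    (∃ Δ' : Subgroup (GL (Fin 3) (GaloisField 2 2)), (Δ' : Set _) = Δ) ∧
    Nat.card Δ = 1080 ∧
    ({D ∈ Δ | ∃ c : GaloisField 2 2,
        (D : Matrix (Fin 3) (Fin 3) (GaloisField 2 2)) = c • (1 : Matrix _ _ _)}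
      = {D : GL (Fin 3) (GaloisField 2 2) | (D : Matrix (Fin 3) (Fin 3) (GaloisField 2 2)) = 1 ∨
          (D : Matrix (Fin 3) (Fin 3) (GaloisField 2 2)) = ω • (1 : Matrix _ _ _) ∨
          (D : Matrix (Fin 3) (Fin 3) (GaloisField 2 2)) = ω^2 • (1 : Matrix _ _ _)}) ∧
    ({σ : Equiv.Perm (Fin 6) | ∃ D ∈ Δ,
        ∀ i : Fin 6, Submodule.map ((D : Matrix (Fin 3) (Fin 3)
            (GaloisField 2 2)).mulVecLin)
            (Submodule.span (GaloisField 2 2) {uvecF4 ω i})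
          = Submodule.span (GaloisField 2 2) {uvecF4 ω (σ i)}}
      = (alternatingGroup (Fin 6) : Set (Equiv.Perm (Fin 6)))) := by
  have hω2 : ω ^ 2 = ω + 1 := omega_rel hω0 hω1
  have hch : (2 : F₄) = 0 := F4char2
  have hΔG : Δ = (hexGroupF4 ω : Set (GL (Fin 3) F₄)) := hΔ
  subst hΔ
  -- the permutation attached to each element of the stabilizer
  have exσ : ∀ D : hexGroupF4 ω, ∃ σ : Equiv.Perm (Fin 6), RealizesF4 ω (↑D) σ := by
    intro D
    have hD : (fun L => Submodule.map (((D : GL (Fin 3) F₄) : Matrix (Fin 3) (Fin 3)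
        F₄).mulVecLin) L) '' ULinesF4 ω = ULinesF4 ω := D.2
    have himg : ∀ i : Fin 6, ∃ j : Fin 6,
        Submodule.map (((D : GL (Fin 3) F₄) : Matrix (Fin 3) (Fin 3) F₄).mulVecLin)
          (Submodule.span F₄ {uvecF4 ω i}) = Submodule.span F₄ {uvecF4 ω j} := by
      intro i
      have hmem : Submodule.map (((D : GL (Fin 3) F₄) : Matrix (Fin 3) (Fin 3) F₄).mulVecLin)
          (Submodule.span F₄ {uvecF4 ω i}) ∈ ULinesF4 ω := by
        rw [← hD]
        exact ⟨Submodule.span F₄ {uvecF4 ω i}, ⟨i, rfl⟩, rfl⟩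
      exact hmem
    choose f hf using himg
    have hinj : Function.Injective f := by
      intro i j hij
      have h1 := hf i
      rw [hij] at h1
      have h2 : Submodule.span F₄ {uvecF4 ω i} = Submodule.span F₄ {uvecF4 ω j} := by
        rw [← map_cancel (D : GL (Fin 3) F₄) (Submodule.span F₄ {uvecF4 ω i}), h1,
          ← (hf j), map_cancel]
      exact lines_inj hω2 hch h2
    exact ⟨Equiv.ofBijective f (Finite.injective_iff_bijective.1 hinj), fun i => hf i⟩
  choose σD hσD using exσ
  have huniq : ∀ (D : hexGroupF4 ω) (τ : Equiv.Perm (Fin 6)),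
      RealizesF4 ω (↑D) τ → σD D = τ :=
    fun D τ h => realizes_unique hω2 hch (hσD D) h
  have hmul : ∀ A B : hexGroupF4 ω, σD (A * B) = σD A * σD B := by
    intro A B
    apply huniq
    intro i
    have hco : ((A * B : hexGroupF4 ω) : GL (Fin 3) F₄)
        = (A : GL (Fin 3) F₄) * (B : GL (Fin 3) F₄) := rfl
    rw [hco, Units.val_mul, Matrix.mulVecLin_mul, Submodule.map_comp, hσD B i, hσD A (σD B i)]
    rfl
  let π : hexGroupF4 ω →* Equiv.Perm (Fin 6) := MonoidHom.mk' σD hmul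
  have hπ : ∀ D : hexGroupF4 ω, π D = σD D := fun _ => rfl
  have mem_range_of_realizes : ∀ (τ : Equiv.Perm (Fin 6)) (D : GL (Fin 3) F₄),
      RealizesF4 ω D τ → τ ∈ π.range :=
    fun τ D h => ⟨⟨D, mem_of_realizes h⟩, huniq _ _ h⟩
  -- generators
  obtain ⟨Da, hDa⟩ := Ra_spec hω2 hch
  obtain ⟨Db, hDb⟩ := Rb_spec hω2 hch
  obtain ⟨Ds, hDs⟩ := Rs_spec hω2 hch
  obtain ⟨Dr, hDr⟩ := Rr_spec hω2 hch
  obtain ⟨Dc, hDc⟩ := Rc_spec hω2 hch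
  have hamem : apermF4 ∈ π.range := mem_range_of_realizes _ _ hDa
  have hbmem : bpermF4 ∈ π.range := mem_range_of_realizes _ _ hDb
  have hsmem : spermF4 ∈ π.range := mem_range_of_realizes _ _ hDs
  have hrmem : rpermF4 ∈ π.range := mem_range_of_realizes _ _ hDr
  have hcmem : cpermF4 ∈ π.range := mem_range_of_realizes _ _ hDc
  -- divisibility
  have hK8le : K8F4 ≤ π.range := by
    intro x hx
    have hx' : x ∈ K8list := hx
    simp only [K8list, List.mem_cons, List.not_mem_nil, or_false] at hx'
    rcases hx' with rfl|rfl|rfl|rfl|rfl|rfl|rfl|rfl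
    · exact one_mem _
    · exact hrmem
    · exact pow_mem hrmem 2
    · exact pow_mem hrmem 3
    · exact hsmem
    · exact mul_mem hsmem hrmem
    · exact mul_mem hsmem (pow_mem hrmem 2)
    · exact mul_mem hsmem (pow_mem hrmem 3)
  have hK9le : K9F4 ≤ π.range := by
    intro x hx
    have hx' : x ∈ K9list := hx
    simp only [K9list, List.mem_cons, List.not_mem_nil, or_false] at hx'
    rcases hx' with rfl|rfl|rfl|rfl|rfl|rfl|rfl|rfl|rfl
    · exact one_mem _
    · exact hamem
    · exact pow_mem hamem 2
    · exact hbmem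
    · exact pow_mem hbmem 2
    · exact mul_mem hamem hbmem
    · exact mul_mem hamem (pow_mem hbmem 2)
    · exact mul_mem (pow_mem hamem 2) hbmem
    · exact mul_mem (pow_mem hamem 2) (pow_mem hbmem 2)
  have h8 : (8:ℕ) ∣ Nat.card π.range := K8F4_card ▸ Subgroup.card_dvd_of_le hK8le
  have h9 : (9:ℕ) ∣ Nat.card π.range := K9F4_card ▸ Subgroup.card_dvd_of_le hK9le
  have h5 : (5:ℕ) ∣ Nat.card π.range := by
    haveI : Fact (Nat.Prime 5) := ⟨by norm_num⟩
    have hord : orderOf cpermF4 = 5 :=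
      orderOf_eq_prime (by decide : cpermF4 ^ 5 = 1) (by decide : cpermF4 ≠ 1)
    have := Subgroup.card_dvd_of_le (Subgroup.zpowers_le.2 hcmem)
    rwa [Nat.card_zpowers, hord] at this
  have h360 : (360:ℕ) ∣ Nat.card π.range := by
    have h72 : (72:ℕ) ∣ Nat.card π.range :=
      (Nat.coprime_iff_gcd_eq_one.2 (by norm_num)).mul_dvd_of_dvd_of_dvd h8 h9
    have h360' := (Nat.coprime_iff_gcd_eq_one.2
      (by norm_num : Nat.gcd 72 5 = 1)).mul_dvd_of_dvd_of_dvd h72 h5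
    exact (by norm_num : (360:ℕ) = 72 * 5) ▸ h360'
  have hcardPerm : Nat.card (Equiv.Perm (Fin 6)) = 720 := by
    rw [Nat.card_eq_fintype_card]
    simp [Fintype.card_perm]
    norm_num [Nat.factorial]
  have hdvd720 : Nat.card π.range ∣ 720 := by
    have := Subgroup.card_subgroup_dvd_card π.range
    rwa [hcardPerm] at this
  -- no transposition in the range
  have hnotswap : Equiv.swap (0:Fin 6) 1 ∉ π.range := by
    rintro ⟨x, hx⟩
    have hx' : σD x = Equiv.swap (0:Fin 6) 1 := hx
    have hreal : RealizesF4 ω (↑x) (Equiv.swap (0:Fin 6) 1) := by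
      have := hσD x
      rwa [hx'] at this
    have f2 := hreal 2
    rw [show (Equiv.swap (0:Fin 6) 1) 2 = 2 from by decide] at f2
    have f3 := hreal 3
    rw [show (Equiv.swap (0:Fin 6) 1) 3 = 3 from by decide] at f3
    have f4 := hreal 4
    rw [show (Equiv.swap (0:Fin 6) 1) 4 = 4 from by decide] at f4
    have f5 := hreal 5
    rw [show (Equiv.swap (0:Fin 6) 1) 5 = 5 from by decide] at f5
    obtain ⟨c, hcval⟩ := scalar_of_fixes hω2 hch _
      (exists_smul_of_fix _ 2 f2) (exists_smul_of_fix _ 3 f3)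
      (exists_smul_of_fix _ 4 f4) (exists_smul_of_fix _ 5 f5)
    have hc0 := scalar_GL_ne0 (↑x) c hcval
    have hfix0 : Submodule.map (((x : GL (Fin 3) F₄) : Matrix (Fin 3) (Fin 3) F₄).mulVecLin)
        (Submodule.span F₄ {uvecF4 ω 0}) = Submodule.span F₄ {uvecF4 ω 0} :=
      map_span_single _ _ _ c hc0 (by rw [Matrix.mulVecLin_apply, hcval, smul_one_mulVec])
    have h0 := hreal 0
    rw [show (Equiv.swap (0:Fin 6) 1) 0 = 1 from by decide] at h0
    have h01 : Submodule.span F₄ {uvecF4 ω 0} = Submodule.span F₄ {uvecF4 ω 1} := by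
      rw [← hfix0]; exact h0
    exact absurd (lines_inj hω2 hch h01) (by decide)
  -- card of the range is 360
  have hrpos : 0 < Nat.card π.range := Nat.card_pos
  have hn360 : Nat.card π.range = 360 := by
    obtain ⟨k, hk⟩ := h360
    have hk2 : k ∣ 2 := by
      have : (360:ℕ) * k ∣ 360 * 2 := by rw [← hk]; exact hdvd720
      exact (mul_dvd_mul_iff_left (by norm_num : (360:ℕ) ≠ 0)).1 this
    rcases (Nat.prime_two.eq_one_or_self_of_dvd k hk2) with rfl | rfl
    · omega
    · exfalso
      have htop : π.range = ⊤ := Subgroup.eq_top_of_card_eq _ (by rw [hk, hcardPerm])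
      exact hnotswap (htop ▸ Subgroup.mem_top _)
  have hidx : π.range.index = 2 := by
    have := Subgroup.card_mul_index π.range
    rw [hn360, hcardPerm] at this
    omega
  have hA6le : alternatingGroup (Fin 6) ≤ π.range := by
    rw [← Equiv.Perm.closure_three_cycles_eq_alternating]
    apply (Subgroup.closure_le _).2
    intro τ hτ
    have ho : orderOf τ = 3 := (hτ : Equiv.Perm.IsThreeCycle τ).orderOf
    have h3 : τ ^ 3 = 1 := by rw [← ho]; exact pow_orderOf_eq_one τ
    have h4 : (τ * τ) * (τ * τ) = τ := by
      have h4' : τ ^ 4 = τ := by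
        rw [show (4:ℕ) = 3 + 1 from rfl, pow_succ, h3, one_mul]
      calc (τ * τ) * (τ * τ) = τ ^ 4 := by
            rw [show (4:ℕ) = 2 * 2 from rfl, pow_mul, pow_two, pow_two]
      _ = τ := h4'
    exact h4 ▸ Subgroup.mul_self_mem_of_index_two hidx (τ * τ)
  have hA6card : Nat.card (alternatingGroup (Fin 6)) = 360 := by
    rw [Nat.card_eq_fintype_card]
    have h2' := two_mul_card_alternatingGroup (α := Fin 6)
    have hp : Fintype.card (Equiv.Perm (Fin 6)) = 720 := by
      simp [Fintype.card_perm]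
      norm_num [Nat.factorial]
    rw [hp] at h2'
    omega
  have hEq : alternatingGroup (Fin 6) = π.range :=
    Subgroup.eq_of_le_of_card_ge hA6le (by rw [hn360, hA6card])
  -- kernel
  have hmulw : ω * ω^2 = 1 := by linear_combination (ω+1) * hω2 + ω * hch
  have hmulw2 : ω^2 * ω = 1 := by linear_combination (ω+1) * hω2 + ω * hch
  have hprodw : (ω • 1 : Matrix (Fin 3) (Fin 3) F₄) * (ω^2 • 1) = 1 := by
    rw [Matrix.smul_mul, Matrix.one_mul, smul_smul, hmulw, one_smul]
  have hprodw2 : (ω^2 • 1 : Matrix (Fin 3) (Fin 3) F₄) * (ω • 1) = 1 := by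
    rw [Matrix.smul_mul, Matrix.one_mul, smul_smul, hmulw2, one_smul]
  have hgwmem : (⟨ω • 1, ω^2 • 1, hprodw, hprodw2⟩ : GL (Fin 3) F₄) ∈ hexGroupF4 ω :=
    mem_of_realizes (σ := 1) (realizes_smul_one (w_ne0 hω2 hch) rfl)
  set gwS : hexGroupF4 ω := ⟨⟨ω • 1, ω^2 • 1, hprodw, hprodw2⟩, hgwmem⟩ with hgwS
  have hkerz : π.ker = Subgroup.zpowers gwS := by
    apply le_antisymm
    · intro x hx
      have hx1 : σD x = 1 := hx
      have hreal : RealizesF4 ω (↑x) 1 := by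
        have := hσD x
        rwa [hx1] at this
      obtain ⟨c, hcval⟩ := scalar_of_fixes hω2 hch _
        (exists_smul_of_fix _ 2 (hreal 2)) (exists_smul_of_fix _ 3 (hreal 3))
        (exists_smul_of_fix _ 4 (hreal 4)) (exists_smul_of_fix _ 5 (hreal 5))
      have hc0 := scalar_GL_ne0 (↑x) c hcval
      rcases mem4 hω2 hch c with rfl | rfl | rfl | rfl
      · exact absurd rfl hc0
      · have hxe : x = 1 := Subtype.ext (Units.ext (by rw [hcval, one_smul]; rfl))
        rw [hxe]; exact one_mem _
      · have hxe : x = gwS := Subtype.ext (Units.ext (by rw [hcval]))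
        rw [hxe]; exact Subgroup.mem_zpowers _
      · have hxe : x = gwS * gwS := by
          apply Subtype.ext
          apply Units.ext
          rw [hcval]
          show (ω^2 : F₄) • 1 = (ω • 1 : Matrix (Fin 3) (Fin 3) F₄) * (ω • 1)
          rw [Matrix.smul_mul, Matrix.one_mul, smul_smul, pow_two]
        rw [hxe]
        exact mul_mem (Subgroup.mem_zpowers _) (Subgroup.mem_zpowers _)
    · apply Subgroup.zpowers_le.2
      show π gwS = 1
      exact huniq gwS 1 (realizes_smul_one (w_ne0 hω2 hch) rfl)
  have hker3 : Nat.card π.ker = 3 := by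
    rw [hkerz, Nat.card_zpowers]
    haveI : Fact (Nat.Prime 3) := ⟨by norm_num⟩
    apply orderOf_eq_prime
    · apply Subtype.ext
      apply Units.ext
      show ((gwS : GL (Fin 3) F₄) : Matrix (Fin 3) (Fin 3) F₄)^3 = 1
      show (ω • 1 : Matrix (Fin 3) (Fin 3) F₄)^3 = 1
      rw [smul_pow, one_pow, w_cube hω2 hch, one_smul]
    · intro h
      have hval : (ω • (1:Matrix (Fin 3) (Fin 3) F₄)) = 1 :=
        congrArg (fun z : hexGroupF4 ω => ((z : GL (Fin 3) F₄) : Matrix (Fin 3) (Fin 3) F₄)) h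
      have := congrFun (congrFun hval 0) 0
      simp [Matrix.one_apply] at this
      exact w_ne1 hω2 hch this
  -- card of the stabilizer
  have hcardG : Nat.card (hexGroupF4 ω) = 1080 := by
    have hq := Subgroup.card_eq_card_quotient_mul_card_subgroup (π.ker)
    have hqr : Nat.card (hexGroupF4 ω ⧸ π.ker) = Nat.card π.range :=
      Nat.card_congr (QuotientGroup.quotientKerEquivRange π).toEquiv
    rw [hq, hqr, hn360, hker3]
  refine ⟨⟨hexGroupF4 ω, rfl⟩, ?_, ?_, ?_⟩
  · -- cardinality
    have : Nat.card {D : GL (Fin 3) F₄ | (fun L => Submodule.map ((D : Matrix (Fin 3) (Fin 3)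
        F₄).mulVecLin) L) '' ULinesF4 ω = ULinesF4 ω} = Nat.card (hexGroupF4 ω) :=
      Nat.card_congr (Equiv.subtypeEquivRight (fun x => Iff.rfl))
    rw [this, hcardG]
  · -- scalars
    ext D
    constructor
    · rintro ⟨hD, c, hc⟩
      rcases mem4 hω2 hch c with rfl | rfl | rfl | rfl
      · exact absurd rfl (scalar_GL_ne0 D 0 hc)
      · left; rw [hc, one_smul]
      · right; left; exact hc
      · right; right; exact hc
    · rintro (h | h | h)
      · exact ⟨mem_of_realizes (σ := 1) (realizes_smul_one one_ne_zero
          (by rw [h, one_smul])), 1, by rw [h, one_smul]⟩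
      · exact ⟨mem_of_realizes (σ := 1) (realizes_smul_one (w_ne0 hω2 hch) h), ω, h⟩
      · exact ⟨mem_of_realizes (σ := 1) (realizes_smul_one (w2_ne0 hω2 hch) h), ω^2, h⟩
  · -- image is A6
    have hset : {σ : Equiv.Perm (Fin 6) | ∃ D ∈ (hexGroupF4 ω : Set (GL (Fin 3) F₄)),
        ∀ i : Fin 6, Submodule.map ((D : Matrix (Fin 3) (Fin 3) F₄).mulVecLin)
            (Submodule.span F₄ {uvecF4 ω i})
          = Submodule.span F₄ {uvecF4 ω (σ i)}} = (π.range : Set (Equiv.Perm (Fin 6))) := by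
      ext σ
      constructor
      · rintro ⟨D, hD, hreal⟩
        exact ⟨⟨D, hD⟩, huniq _ _ hreal⟩
      · rintro ⟨x, hx⟩
        refine ⟨↑x, x.2, ?_⟩
        have hx2 : σD x = σ := hx
        have := hσD x
        rwa [hx2] at this
      
    rw [show {σ : Equiv.Perm (Fin 6) | ∃ D ∈ {D : GL (Fin 3) F₄ | (fun L =>
        Submodule.map ((D : Matrix (Fin 3) (Fin 3) F₄).mulVecLin) L) '' ULinesF4 ω = ULinesF4 ω},
        ∀ i : Fin 6, Submodule.map ((D : Matrix (Fin 3) (Fin 3) F₄).mulVecLin)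
            (Submodule.span F₄ {uvecF4 ω i})
          = Submodule.span F₄ {uvecF4 ω (σ i)}} = (π.range : Set (Equiv.Perm (Fin 6))) from hset,
      ← hEq]
end

section
/- Fix n ≥ 2 and let A = ⟨v₁,v₂,v₃⟩ ≅ C_{2ⁿ} × C_{2ⁿ} × C_{2ⁿ}. Let s, t be the automorphisms of A given by: t: v₁ ↦ v₃⁻¹, v₂ ↦ v₂⁻¹, v₃ ↦ v₁⁻¹; and s: v₁ ↦ v₂, v₂ ↦ v₃, v₃ ↦ v₁v₂⁻¹v₃. Then (writing ε = 2^{n−1}): C_A(t) = ⟨v₁v₃⁻¹, v₂^ε⟩, C_A(s²) = ⟨v₁v₃, v₂^ε v₃^ε⟩, C_A(st) = ⟨v₁v₂⁻¹, v₂^ε v₃^ε⟩, and C_A(s) = ⟨v₁v₃⟩; moreover [t,A] = ⟨v₁v₃, v₂²⟩ and [s,A] = ⟨v₁v₂⁻¹, v₂v₃⁻¹⟩. -/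
lemma tor1 (m : ℕ) (b : ZMod (2^(m+2))) (h : b + b = 0) :
    ∃ k : ℤ, (k : ZMod (2^(m+2))) * 2 ^ (m+1) = b := by
  have hb : ((b.val * 2 : ℕ) : ZMod (2^(m+2))) = 0 := by
    push_cast
    rw [ZMod.natCast_val, ZMod.cast_id]
    linear_combination h
  rw [ZMod.natCast_eq_zero_iff] at hb
  have h2 : 2^(m+1) ∣ b.val := by
    have h3 : 2^(m+1) * 2 ∣ b.val * 2 := by
      rw [← pow_succ]; exact hb
    exact (Nat.mul_dvd_mul_iff_right (by norm_num)).mp h3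
  obtain ⟨j, hj⟩ := h2
  refine ⟨j, ?_⟩
  have hv : ((b.val : ℕ) : ZMod (2^(m+2))) = b := by
    rw [ZMod.natCast_val, ZMod.cast_id]
  rw [← hv, hj]; push_cast; ring

lemma tor2 (m : ℕ) (k : ℤ) :
    (k : ZMod (2^(m+2))) * 2 ^ (m+1) + (k : ZMod (2^(m+2))) * 2 ^ (m+1) = 0 := by
  have h0 : ((2^(m+2) : ℕ) : ZMod (2^(m+2))) = 0 := ZMod.natCast_self _
  push_cast at h0
  linear_combination (k : ZMod (2^(m+2))) * h0

lemma cast_val_id (m : ℕ) (x : ZMod (2^(m+2))) :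
    ((x.val : ℤ) : ZMod (2^(m+2))) = x := by
  push_cast
  rw [ZMod.natCast_val, ZMod.cast_id]

/-- For `n ≥ 2` and `A = C_{2ⁿ}³` (written additively, with
`v₁, v₂, v₃` the standard generators), with the automorphisms
`t : (a,b,c) ↦ (−c,−b,−a)` and `s : (a,b,c) ↦ (c, a−c, b+c)` (so `st` means
"first `s`, then `t`"), and `ε = 2^{n−1}`:
`C_A(t) = ⟨v₁v₃⁻¹, v₂^ε⟩`, `C_A(s²) = ⟨v₁v₃, v₂^ε v₃^ε⟩`,
`C_A(st) = ⟨v₁v₂⁻¹, v₂^ε v₃^ε⟩`, `C_A(s) = ⟨v₁v₃⟩`,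
`[t,A] = ⟨v₁v₃, v₂²⟩` and `[s,A] = ⟨v₁v₂⁻¹, v₂v₃⁻¹⟩`. -/
theorem centralizers_and_commutators_D8_action
    (n : ℕ) (hn : 2 ≤ n)
    (t s : (ZMod (2 ^ n) × ZMod (2 ^ n) × ZMod (2 ^ n)) →
      (ZMod (2 ^ n) × ZMod (2 ^ n) × ZMod (2 ^ n)))
    (ht : ∀ x, t x = (-x.2.2, -x.2.1, -x.1))
    (hs : ∀ x, s x = (x.2.2, x.1 - x.2.2, x.2.1 + x.2.2))
    (ε : ZMod (2 ^ n)) (hε : ε = 2 ^ (n - 1)) :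
    ({x | t x = x} = ↑(AddSubgroup.closure
      ({(1, 0, -1), (0, ε, 0)} : Set (ZMod (2 ^ n) × ZMod (2 ^ n) × ZMod (2 ^ n))))) ∧
    ({x | s (s x) = x} = ↑(AddSubgroup.closure
      ({(1, 0, 1), (0, ε, ε)} : Set (ZMod (2 ^ n) × ZMod (2 ^ n) × ZMod (2 ^ n))))) ∧
    ({x | t (s x) = x} = ↑(AddSubgroup.closure
      ({(1, -1, 0), (0, ε, ε)} : Set (ZMod (2 ^ n) × ZMod (2 ^ n) × ZMod (2 ^ n))))) ∧
    ({x | s x = x} = ↑(AddSubgroup.closure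
      ({(1, 0, 1)} : Set (ZMod (2 ^ n) × ZMod (2 ^ n) × ZMod (2 ^ n))))) ∧
    (Set.range (fun x => t x - x) = ↑(AddSubgroup.closure
      ({(1, 0, 1), (0, 2, 0)} : Set (ZMod (2 ^ n) × ZMod (2 ^ n) × ZMod (2 ^ n))))) ∧
    (Set.range (fun x => s x - x) = ↑(AddSubgroup.closure
      ({(1, -1, 0), (0, 1, -1)} :
        Set (ZMod (2 ^ n) × ZMod (2 ^ n) × ZMod (2 ^ n))))) := by
  obtain ⟨m, rfl⟩ : ∃ m, n = m + 2 := ⟨n - 2, by omega⟩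
  have hε' : ε = 2 ^ (m + 1) := by simpa using hε
  subst hε'
  refine ⟨?_, ?_, ?_, ?_, ?_, ?_⟩
  · -- C_A(t)
    ext ⟨a, b, c⟩
    simp only [Set.mem_setOf_eq, ht, SetLike.mem_coe, AddSubgroup.mem_closure_pair,
      Prod.mk.injEq, Prod.smul_mk, Prod.mk_add_mk, zsmul_eq_mul]
    constructor
    · rintro ⟨h1, h2, h3⟩
      obtain ⟨k, hk⟩ := tor1 m b (by linear_combination -h2)
      exact ⟨(a.val : ℤ), k,
        by linear_combination cast_val_id m a,
        by linear_combination hk,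
        by linear_combination -(cast_val_id m a) + h3⟩
    · rintro ⟨p, q, h1, h2, h3⟩
      exact ⟨by linear_combination h1 + h3,
        by linear_combination 2 * h2 - tor2 m q,
        by linear_combination h1 + h3⟩
  · -- C_A(s²)
    ext ⟨a, b, c⟩
    simp only [Set.mem_setOf_eq, hs, SetLike.mem_coe, AddSubgroup.mem_closure_pair,
      Prod.mk.injEq, Prod.smul_mk, Prod.mk_add_mk, zsmul_eq_mul]
    constructor
    · rintro ⟨h1, h2, h3⟩
      obtain ⟨k, hk⟩ := tor1 m b (by linear_combination -h2)
      exact ⟨(a.val : ℤ), k,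
        by linear_combination cast_val_id m a,
        by linear_combination hk,
        by linear_combination h3 + cast_val_id m a + hk⟩
    · rintro ⟨p, q, h1, h2, h3⟩
      exact ⟨by linear_combination h1 - h2 - h3 + tor2 m q,
        by linear_combination 2 * h2 - tor2 m q,
        by linear_combination -h1 - h2 + h3⟩
  · -- C_A(st)
    ext ⟨a, b, c⟩
    simp only [Set.mem_setOf_eq, hs, ht, SetLike.mem_coe, AddSubgroup.mem_closure_pair,
      Prod.mk.injEq, Prod.smul_mk, Prod.mk_add_mk, zsmul_eq_mul]
    constructor
    · rintro ⟨h1, h2, h3⟩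
      obtain ⟨k, hk⟩ := tor1 m c (by linear_combination -h3)
      exact ⟨(a.val : ℤ), k,
        by linear_combination cast_val_id m a,
        by linear_combination -(cast_val_id m a) + hk + h2,
        by linear_combination hk⟩
    · rintro ⟨p, q, h1, h2, h3⟩
      exact ⟨by linear_combination h1 + h2 + h3 - tor2 m q,
        by linear_combination h1 + h2 - h3,
        by linear_combination 2 * h3 - tor2 m q⟩
  · -- C_A(s)
    ext ⟨a, b, c⟩
    simp only [Set.mem_setOf_eq, hs, SetLike.mem_coe, AddSubgroup.mem_closure_singleton,
      Prod.mk.injEq, Prod.smul_mk, zsmul_eq_mul]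
    constructor
    · rintro ⟨h1, h2, h3⟩
      exact ⟨(a.val : ℤ),
        by linear_combination cast_val_id m a,
        by linear_combination h1 + h2,
        by linear_combination cast_val_id m a - h1⟩
    · rintro ⟨k, h1, h2, h3⟩
      exact ⟨by linear_combination h1 - h3,
        by linear_combination -h1 + h2 + h3,
        by linear_combination -h2⟩
  · -- [t, A]
    ext ⟨a, b, c⟩
    simp only [Set.mem_range, ht, SetLike.mem_coe, AddSubgroup.mem_closure_pair,
      Prod.mk.injEq, Prod.smul_mk, Prod.mk_add_mk, Prod.fst_sub, Prod.snd_sub, zsmul_eq_mul,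
      Prod.ext_iff]
    constructor
    · rintro ⟨⟨x1, x2, x3⟩, h1, h2, h3⟩
      exact ⟨-(x1.val : ℤ) - (x3.val : ℤ), -(x2.val : ℤ),
        by linear_combination (norm := (push_cast; ring1)) -(cast_val_id m x1) - cast_val_id m x3 + h1,
        by linear_combination (norm := (push_cast; ring1)) -2 * (cast_val_id m x2) + h2,
        by linear_combination (norm := (push_cast; ring1)) -(cast_val_id m x1) - cast_val_id m x3 + h3⟩
    · rintro ⟨p, q, h1, h2, h3⟩
      exact ⟨(0, -(q : ZMod (2^(m+2))), -(p : ZMod (2^(m+2)))),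
        by linear_combination h1, by linear_combination h2, by linear_combination h3⟩
  · -- [s, A]
    ext ⟨a, b, c⟩
    simp only [Set.mem_range, hs, SetLike.mem_coe, AddSubgroup.mem_closure_pair,
      Prod.mk.injEq, Prod.smul_mk, Prod.mk_add_mk, Prod.fst_sub, Prod.snd_sub, zsmul_eq_mul,
      Prod.ext_iff]
    constructor
    · rintro ⟨⟨x1, x2, x3⟩, h1, h2, h3⟩
      exact ⟨(x3.val : ℤ) - (x1.val : ℤ), -(x2.val : ℤ),
        by linear_combination (norm := (push_cast; ring1)) cast_val_id m x3 - cast_val_id m x1 + h1,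
        by linear_combination (norm := (push_cast; ring1)) -(cast_val_id m x3) + cast_val_id m x1 - cast_val_id m x2 + h2,
        by linear_combination (norm := (push_cast; ring1)) cast_val_id m x2 + h3⟩
    · rintro ⟨p, q, h1, h2, h3⟩
      exact ⟨(0, -(q : ZMod (2^(m+2))), (p : ZMod (2^(m+2)))),
        by linear_combination h1, by linear_combination h2, by linear_combination h3⟩
end

section
/- Fix n ≥ 2, let A = ⟨v₁,v₂,v₃⟩ ≅ C_{2ⁿ}³, and let S = A⟨s,t⟩ be the extension of A by D₈ in which t² = 1, s⁴ ∈ ⟨v₁v₃⟩, and conjugation acts by: v₁ᵗ = v₃⁻¹, v₂ᵗ = v₂⁻¹, v₃ᵗ = v₁⁻¹, v₁ˢ = v₂, v₂ˢ = v₃, v₃ˢ = v₁v₂⁻¹v₃. Then A is the unique abelian subgroup of index 8 in S; in particular A is characteristic in S. -/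
namespace UniqAb8

variable {G : Type*} [Group G]

/-- `σ : (a,b,c) ↦ (c, a-c, b+c)` as a permutation. -/
def sigE (N : ℕ) : Equiv.Perm (ZMod N × ZMod N × ZMod N) where
  toFun p := (p.2.2, p.1 - p.2.2, p.2.1 + p.2.2)
  invFun p := (p.2.1 + p.1, p.2.2 - p.1, p.1)
  left_inv p := by obtain ⟨a, b, c⟩ := p; simp
  right_inv p := by obtain ⟨a, b, c⟩ := p; simp

/-- `τ : (a,b,c) ↦ (-c, -b, -a)` as a permutation. -/
def tauE (N : ℕ) : Equiv.Perm (ZMod N × ZMod N × ZMod N) where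
  toFun p := (-p.2.2, -p.2.1, -p.1)
  invFun p := (-p.2.2, -p.2.1, -p.1)
  left_inv p := by obtain ⟨a, b, c⟩ := p; simp
  right_inv p := by obtain ⟨a, b, c⟩ := p; simp

@[simp] lemma sigE_apply (N : ℕ) (p : ZMod N × ZMod N × ZMod N) :
    sigE N p = (p.2.2, p.1 - p.2.2, p.2.1 + p.2.2) := rfl

@[simp] lemma tauE_apply (N : ℕ) (p : ZMod N × ZMod N × ZMod N) :
    tauE N p = (-p.2.2, -p.2.1, -p.1) := rfl

lemma sig4 (N : ℕ) : (sigE N) ^ 4 = 1 := by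
  apply Equiv.ext; intro p; obtain ⟨a, b, c⟩ := p
  simp only [pow_succ, pow_zero, one_mul, Equiv.Perm.mul_apply, Equiv.Perm.one_apply,
    sigE_apply, tauE_apply, Prod.mk.injEq]
  and_intros <;> ring

lemma tau2 (N : ℕ) : (tauE N) ^ 2 = 1 := by
  apply Equiv.ext; intro p; obtain ⟨a, b, c⟩ := p
  simp only [pow_succ, pow_zero, one_mul, Equiv.Perm.mul_apply, Equiv.Perm.one_apply,
    sigE_apply, tauE_apply, Prod.mk.injEq]
  and_intros <;> ring

lemma tausig (N : ℕ) : tauE N * sigE N = (sigE N) ^ 3 * tauE N := by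
  apply Equiv.ext; intro p; obtain ⟨a, b, c⟩ := p
  simp only [pow_succ, pow_zero, one_mul, Equiv.Perm.mul_apply, Equiv.Perm.one_apply,
    sigE_apply, tauE_apply, Prod.mk.injEq]
  and_intros <;> ring

lemma pow_mod_eq {x : G} {m : ℕ} (h : x ^ m = 1) (k : ℕ) : x ^ k = x ^ (k % m) := by
  conv_lhs => rw [← Nat.div_add_mod k m, pow_add, pow_mul, h, one_pow, one_mul]

lemma tausig_pow (N : ℕ) (k : ℕ) :
    tauE N * (sigE N) ^ k = (sigE N) ^ (3 * k) * tauE N := by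
  induction k with
  | zero => simp
  | succ k ih =>
    rw [pow_succ, ← mul_assoc, ih, mul_assoc, tausig, ← mul_assoc, ← pow_add]
    ring_nf

lemma taupow_sigpow (N : ℕ) (j : ℕ) : ∀ k : ℕ,
    (tauE N) ^ j * (sigE N) ^ k = (sigE N) ^ (3 ^ j * k) * (tauE N) ^ j := by
  induction j with
  | zero => simp
  | succ j ih =>
    intro k
    rw [pow_succ, mul_assoc, tausig_pow, ← mul_assoc, ih (3 * k), mul_assoc, ← pow_succ]
    congr 2
    ring

lemma normal_form (N : ℕ) {d : Equiv.Perm (ZMod N × ZMod N × ZMod N)}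
    (hd : d ∈ Subgroup.closure {sigE N, tauE N}) :
    ∃ k j : ℕ, d = (sigE N) ^ k * (tauE N) ^ j := by
  induction hd using Subgroup.closure_induction with
  | mem x hx =>
    rcases hx with h | h
    · exact ⟨1, 0, by simp [h]⟩
    · exact ⟨0, 1, by simp at h; simp [h]⟩
  | one => exact ⟨0, 0, by simp⟩
  | mul x y hx hy ihx ihy =>
    obtain ⟨k, j, rfl⟩ := ihx
    obtain ⟨k', j', rfl⟩ := ihy
    refine ⟨k + 3 ^ j * k', j + j', ?_⟩
    rw [mul_assoc, ← mul_assoc ((tauE N) ^ j), taupow_sigpow, pow_add, pow_add]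
    group
  | inv x hx ihx =>
    obtain ⟨k, j, rfl⟩ := ihx
    refine ⟨3 ^ j * (3 * k), j, ?_⟩
    have htj : ((tauE N) ^ j)⁻¹ = (tauE N) ^ j := by
      apply inv_eq_of_mul_eq_one_right
      rw [← pow_add, pow_mod_eq (tau2 N)]
      have h2 : (j + j) % 2 = 0 := by omega
      rw [h2, pow_zero]
    have hsk : ((sigE N) ^ k)⁻¹ = (sigE N) ^ (3 * k) := by
      apply inv_eq_of_mul_eq_one_right
      rw [← pow_add, pow_mod_eq (sig4 N)]
      have h4 : (k + 3 * k) % 4 = 0 := by omega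
      rw [h4, pow_zero]
    rw [mul_inv_rev, htj, hsk, taupow_sigpow]


lemma two_torsion {n : ℕ} (hn : 1 ≤ n) (x : ZMod (2 ^ n)) (h : x + x = 0) :
    x = 0 ∨ x = ((2 ^ (n - 1) : ℕ) : ZMod (2 ^ n)) := by
  haveI : NeZero ((2 : ℕ) ^ n) := ⟨by positivity⟩
  have hv : ((x.val : ℕ) : ZMod (2 ^ n)) = x := ZMod.natCast_zmod_val x
  have hd : (2 : ℕ) ^ n ∣ x.val + x.val := by
    rw [← ZMod.natCast_eq_zero_iff]
    push_cast
    rw [hv, h]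
  have h2 : (2 : ℕ) ^ n = 2 * 2 ^ (n - 1) := by
    conv_lhs => rw [show n = (n - 1) + 1 by omega]
    rw [pow_succ]; ring
  obtain ⟨c, hc⟩ : (2 : ℕ) ^ (n - 1) ∣ x.val := by
    have hd2 : 2 * 2 ^ (n - 1) ∣ 2 * x.val := by
      rw [← h2]; rwa [← two_mul] at hd
    exact (mul_dvd_mul_iff_left (two_ne_zero)).mp hd2
  have hlt : x.val < 2 ^ n := ZMod.val_lt x
  have hEpos : 0 < (2 : ℕ) ^ (n - 1) := by positivity
  have hc2 : c < 2 := by nlinarith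
  interval_cases c
  · left
    have h0 : x.val = 0 := by omega
    rw [← hv, h0, Nat.cast_zero]
  · right
    rw [← hv, hc, mul_one]

lemma half_ne_zero {n : ℕ} (hn : 1 ≤ n) :
    ((2 ^ (n - 1) : ℕ) : ZMod (2 ^ n)) ≠ 0 := by
  rw [Ne, ZMod.natCast_eq_zero_iff]
  intro hdvd
  have h1 : (2 : ℕ) ^ n ≤ 2 ^ (n - 1) := Nat.le_of_dvd (by positivity) hdvd
  have h2 : (2 : ℕ) ^ (n - 1) < 2 ^ n := Nat.pow_lt_pow_right one_lt_two (by omega)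
  omega

lemma tor_eq {n : ℕ} (hn : 1 ≤ n) {x y : ZMod (2 ^ n)} (hx : x + x = 0) (hy : y + y = 0)
    (h : x = 0 ↔ y = 0) : x = y := by
  rcases two_torsion hn x hx with h1 | h1 <;> rcases two_torsion hn y hy with h2 | h2
  · rw [h1, h2]
  · exact absurd (h2 ▸ h.mp h1) (half_ne_zero hn)
  · exact absurd (h1 ▸ h.mpr h2) (half_ne_zero hn)
  · rw [h1, h2]

lemma one_ne_zero'' {n : ℕ} (hn : 2 ≤ n) : (1 : ZMod (2 ^ n)) ≠ 0 := by
  have : ((1 : ℕ) : ZMod (2 ^ n)) ≠ 0 := by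
    rw [Ne, ZMod.natCast_eq_zero_iff]
    intro hdvd
    have := Nat.le_of_dvd one_pos hdvd
    have h4 : (4 : ℕ) ≤ 2 ^ n := by calc (4:ℕ) = 2^2 := by norm_num
                                          _ ≤ 2^n := Nat.pow_le_pow_right (by norm_num) hn
    omega
  simpa using this

lemma two_ne_zero'' {n : ℕ} (hn : 2 ≤ n) : (2 : ZMod (2 ^ n)) ≠ 0 := by
  have : ((2 : ℕ) : ZMod (2 ^ n)) ≠ 0 := by
    rw [Ne, ZMod.natCast_eq_zero_iff]
    intro hdvd
    have := Nat.le_of_dvd (by norm_num) hdvd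
    have h4 : (4 : ℕ) ≤ 2 ^ n := by calc (4:ℕ) = 2^2 := by norm_num
                                          _ ≤ 2^n := Nat.pow_le_pow_right (by norm_num) hn
    omega
  simpa using this

lemma neg_one_ne_zero'' {n : ℕ} (hn : 2 ≤ n) : (-1 : ZMod (2 ^ n)) ≠ 0 := by
  intro h
  exact one_ne_zero'' hn (by linear_combination -h)

lemma neg_one_ne_one'' {n : ℕ} (hn : 2 ≤ n) : (-1 : ZMod (2 ^ n)) ≠ 1 := by
  intro h
  exact two_ne_zero'' hn (by linear_combination -h)

lemma card_target {n : ℕ} : Nat.card (ZMod (2 ^ n) × Bool) = 2 ^ (n + 1) := by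
  haveI : NeZero ((2 : ℕ) ^ n) := ⟨by positivity⟩
  rw [Nat.card_prod, Nat.card_zmod, Nat.card_eq_fintype_card, Fintype.card_bool, pow_succ]


lemma card_fix {n : ℕ} (hn : 2 ≤ n)
    (d : Equiv.Perm (ZMod (2 ^ n) × ZMod (2 ^ n) × ZMod (2 ^ n)))
    (hmem : d ∈ Subgroup.closure {sigE (2 ^ n), tauE (2 ^ n)}) (hd : d ≠ 1) :
    Nat.card {p : ZMod (2 ^ n) × ZMod (2 ^ n) × ZMod (2 ^ n) // d p = p} ≤ 2 ^ (n + 1) := by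
  haveI : NeZero ((2 : ℕ) ^ n) := ⟨by positivity⟩
  have hn1 : 1 ≤ n := by omega
  obtain ⟨k, j, rfl⟩ := normal_form (2 ^ n) hmem
  have e2 : (sigE (2 ^ n)) ^ 2 = sigE (2 ^ n) * sigE (2 ^ n) := pow_two _
  have e3 : (sigE (2 ^ n)) ^ 3 = sigE (2 ^ n) * sigE (2 ^ n) * sigE (2 ^ n) := by
    rw [show (3:ℕ) = 2 + 1 from rfl, pow_succ, pow_two]
  have hk : k % 4 = 0 ∨ k % 4 = 1 ∨ k % 4 = 2 ∨ k % 4 = 3 := by omega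
  have hj : j % 2 = 0 ∨ j % 2 = 1 := by omega
  rw [pow_mod_eq (sig4 (2 ^ n)) k, pow_mod_eq (tau2 (2 ^ n)) j] at hd ⊢
  rcases hk with h | h | h | h <;> rcases hj with h' | h' <;>
    rw [h, h'] at hd ⊢ <;>
    simp only [pow_zero, pow_one, mul_one, one_mul, e2, e3] at hd ⊢
  · -- (0,0) : identity, contradiction
    exact absurd rfl hd
  · -- (0,1) : τ
    rw [← card_target (n := n)]
    apply Nat.card_le_card_of_injective (fun q => (q.1.1, decide (q.1.2.1 = 0)))
    rintro ⟨⟨a, b, c⟩, hq⟩ ⟨⟨a', b', c'⟩, hq'⟩ him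
    simp only [Equiv.Perm.mul_apply, sigE_apply, tauE_apply, Prod.mk.injEq] at hq hq'
    obtain ⟨h1, h2, h3⟩ := hq
    obtain ⟨h1', h2', h3'⟩ := hq'
    simp only [Prod.mk.injEq, decide_eq_decide] at him
    obtain ⟨he, hdec⟩ := him
    have hb : b + b = 0 := by linear_combination -h2
    have hb' : b' + b' = 0 := by linear_combination -h2'
    have hbeq : b = b' := tor_eq hn1 hb hb' hdec
    apply Subtype.ext
    simp only [Prod.mk.injEq]
    exact ⟨he, hbeq, by linear_combination -h3 + h3' - he⟩
  · -- (1,0) : σ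
    rw [← card_target (n := n)]
    apply Nat.card_le_card_of_injective (fun q => (q.1.1, false))
    rintro ⟨⟨a, b, c⟩, hq⟩ ⟨⟨a', b', c'⟩, hq'⟩ him
    simp only [Equiv.Perm.mul_apply, sigE_apply, tauE_apply, Prod.mk.injEq] at hq hq'
    obtain ⟨h1, h2, h3⟩ := hq
    obtain ⟨h1', h2', h3'⟩ := hq'
    simp only [Prod.mk.injEq, decide_eq_decide] at him
    obtain ⟨he, -⟩ := him
    apply Subtype.ext
    simp only [Prod.mk.injEq]
    exact ⟨he, by linear_combination -h2 - h1 + h2' + h1', by linear_combination h1 + he - h1'⟩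
  · -- (1,1) : στ
    rw [← card_target (n := n)]
    apply Nat.card_le_card_of_injective (fun q => (q.1.2.1, decide (q.1.1 = 0)))
    rintro ⟨⟨a, b, c⟩, hq⟩ ⟨⟨a', b', c'⟩, hq'⟩ him
    simp only [Equiv.Perm.mul_apply, sigE_apply, tauE_apply, Prod.mk.injEq] at hq hq'
    obtain ⟨h1, h2, h3⟩ := hq
    obtain ⟨h1', h2', h3'⟩ := hq'
    simp only [Prod.mk.injEq, decide_eq_decide] at him
    obtain ⟨hb, hdec⟩ := him
    have ha : a + a = 0 := by linear_combination -h1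
    have ha' : a' + a' = 0 := by linear_combination -h1'
    have haeq : a = a' := tor_eq hn1 ha ha' hdec
    apply Subtype.ext
    simp only [Prod.mk.injEq]
    exact ⟨haeq, hb, by linear_combination -h3 + h3' - hb - haeq⟩
  · -- (2,0) : σ²
    rw [← card_target (n := n)]
    apply Nat.card_le_card_of_injective (fun q => (q.1.2.2, decide (q.1.2.1 = 0)))
    rintro ⟨⟨a, b, c⟩, hq⟩ ⟨⟨a', b', c'⟩, hq'⟩ him
    simp only [Equiv.Perm.mul_apply, sigE_apply, tauE_apply, Prod.mk.injEq] at hq hq'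
    obtain ⟨h1, h2, h3⟩ := hq
    obtain ⟨h1', h2', h3'⟩ := hq'
    simp only [Prod.mk.injEq, decide_eq_decide] at him
    obtain ⟨hc, hdec⟩ := him
    have hb : b + b = 0 := by linear_combination -h2
    have hb' : b' + b' = 0 := by linear_combination -h2'
    have hbeq : b = b' := tor_eq hn1 hb hb' hdec
    apply Subtype.ext
    simp only [Prod.mk.injEq]
    exact ⟨by linear_combination -h1 + h1' + hbeq + hc, hbeq, hc⟩
  · -- (2,1) : σ²τ
    rw [← card_target (n := n)]
    apply Nat.card_le_card_of_injective (fun q => (q.1.1, decide (q.1.2.2 - q.1.1 = 0)))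
    rintro ⟨⟨a, b, c⟩, hq⟩ ⟨⟨a', b', c'⟩, hq'⟩ him
    simp only [Equiv.Perm.mul_apply, sigE_apply, tauE_apply, Prod.mk.injEq] at hq hq'
    obtain ⟨h1, h2, h3⟩ := hq
    obtain ⟨h1', h2', h3'⟩ := hq'
    simp only [Prod.mk.injEq, decide_eq_decide] at him
    obtain ⟨hea, hdec⟩ := him
    have htor : (c - a) + (c - a) = 0 := by linear_combination -h3 + h1
    have htor' : (c' - a') + (c' - a') = 0 := by linear_combination -h3' + h1'
    have hceq : c - a = c' - a' := tor_eq hn1 htor htor' hdec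
    apply Subtype.ext
    simp only [Prod.mk.injEq]
    exact ⟨hea, by linear_combination -h1 + h1' - 2 * hea, by linear_combination hceq + hea⟩
  · -- (3,0) : σ³
    rw [← card_target (n := n)]
    apply Nat.card_le_card_of_injective (fun q => (q.1.1, false))
    rintro ⟨⟨a, b, c⟩, hq⟩ ⟨⟨a', b', c'⟩, hq'⟩ him
    simp only [Equiv.Perm.mul_apply, sigE_apply, tauE_apply, Prod.mk.injEq] at hq hq'
    obtain ⟨h1, h2, h3⟩ := hq
    obtain ⟨h1', h2', h3'⟩ := hq'
    simp only [Prod.mk.injEq, decide_eq_decide] at him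
    obtain ⟨he, -⟩ := him
    apply Subtype.ext
    simp only [Prod.mk.injEq]
    exact ⟨he, by linear_combination h1 - h1', by linear_combination -h3 + h3' + he⟩
  · -- (3,1) : σ³τ
    rw [← card_target (n := n)]
    apply Nat.card_le_card_of_injective (fun q => (q.1.2.1, decide (q.1.2.2 = 0)))
    rintro ⟨⟨a, b, c⟩, hq⟩ ⟨⟨a', b', c'⟩, hq'⟩ him
    simp only [Equiv.Perm.mul_apply, sigE_apply, tauE_apply, Prod.mk.injEq] at hq hq'
    obtain ⟨h1, h2, h3⟩ := hq
    obtain ⟨h1', h2', h3'⟩ := hq'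
    simp only [Prod.mk.injEq, decide_eq_decide] at him
    obtain ⟨hb, hdec⟩ := him
    have hc : c + c = 0 := by linear_combination -h3
    have hc' : c' + c' = 0 := by linear_combination -h3'
    have hceq : c = c' := tor_eq hn1 hc hc' hdec
    apply Subtype.ext
    simp only [Prod.mk.injEq]
    exact ⟨by linear_combination -h1 + h1' - hceq - hb, hb, hceq⟩


lemma dist8 {n : ℕ} (hn : 2 ≤ n) {k j k' j' : ℕ} (hk : k < 4) (hj : j < 2)
    (hk' : k' < 4) (hj' : j' < 2)
    (h : (sigE (2 ^ n)) ^ k * (tauE (2 ^ n)) ^ j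
       = (sigE (2 ^ n)) ^ k' * (tauE (2 ^ n)) ^ j') : k = k' ∧ j = j' := by
  have h1 := one_ne_zero'' hn
  have h2 := neg_one_ne_one'' hn
  have h3 := neg_one_ne_zero'' hn
  have e2 : (sigE (2 ^ n)) ^ 2 = sigE (2 ^ n) * sigE (2 ^ n) := pow_two _
  have e3 : (sigE (2 ^ n)) ^ 3 = sigE (2 ^ n) * sigE (2 ^ n) * sigE (2 ^ n) := by
    rw [show (3:ℕ) = 2 + 1 from rfl, pow_succ, pow_two]
  interval_cases k <;> interval_cases j <;> interval_cases k' <;> interval_cases j' <;>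
      simp only [pow_zero, pow_one, one_mul, mul_one, e2, e3] at h <;>
      first
        | exact ⟨rfl, rfl⟩
        | (exfalso
           have hval := congrArg
             (fun dd : Equiv.Perm (ZMod (2 ^ n) × ZMod (2 ^ n) × ZMod (2 ^ n)) =>
               dd ((1, 0, 0) : ZMod (2 ^ n) × ZMod (2 ^ n) × ZMod (2 ^ n))) h
           simp [h1, Ne.symm h1, h2, Ne.symm h2, h3, Ne.symm h3,
             Prod.ext_iff, Equiv.Perm.mul_apply] at hval)

lemma noncomm {n : ℕ} (hn : 2 ≤ n) :
    sigE (2 ^ n) * tauE (2 ^ n) ≠ tauE (2 ^ n) * sigE (2 ^ n) := by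
  intro h
  have h3 := neg_one_ne_zero'' hn
  have hval := congrArg
    (fun dd : Equiv.Perm (ZMod (2 ^ n) × ZMod (2 ^ n) × ZMod (2 ^ n)) =>
      dd ((1, 0, 0) : ZMod (2 ^ n) × ZMod (2 ^ n) × ZMod (2 ^ n))) h
  simp [h3, Ne.symm h3, Equiv.Perm.mul_apply] at hval

lemma cardD {n : ℕ} (hn : 2 ≤ n) :
    Nat.card (Subgroup.closure {sigE (2 ^ n), tauE (2 ^ n)} :
      Subgroup (Equiv.Perm (ZMod (2 ^ n) × ZMod (2 ^ n) × ZMod (2 ^ n)))) = 8 := by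
  haveI : NeZero ((2 : ℕ) ^ n) := ⟨by positivity⟩
  set D := Subgroup.closure {sigE (2 ^ n), tauE (2 ^ n)} with hD
  have hσ : sigE (2 ^ n) ∈ D := Subgroup.subset_closure (Set.mem_insert _ _)
  have hτ : tauE (2 ^ n) ∈ D := Subgroup.subset_closure (Set.mem_insert_of_mem _ rfl)
  let g : Fin 4 × Fin 2 → D := fun kj =>
    ⟨(sigE (2 ^ n)) ^ (kj.1 : ℕ) * (tauE (2 ^ n)) ^ (kj.2 : ℕ),
      mul_mem (pow_mem hσ _) (pow_mem hτ _)⟩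
  have hginj : Function.Injective g := by
    rintro ⟨k, j⟩ ⟨k', j'⟩ hkj
    have heq : (sigE (2 ^ n)) ^ (k : ℕ) * (tauE (2 ^ n)) ^ (j : ℕ)
        = (sigE (2 ^ n)) ^ (k' : ℕ) * (tauE (2 ^ n)) ^ (j' : ℕ) := congrArg Subtype.val hkj
    obtain ⟨hk, hj⟩ := dist8 hn k.isLt j.isLt k'.isLt j'.isLt heq
    simp [Prod.ext_iff, Fin.ext_iff, hk, hj]
  have hgsurj : Function.Surjective g := by
    rintro ⟨d, hdmem⟩
    obtain ⟨k, j, rfl⟩ := normal_form (2 ^ n) hdmem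
    refine ⟨(⟨k % 4, Nat.mod_lt _ (by norm_num)⟩, ⟨j % 2, Nat.mod_lt _ (by norm_num)⟩), ?_⟩
    apply Subtype.ext
    show (sigE (2 ^ n)) ^ (k % 4) * (tauE (2 ^ n)) ^ (j % 2) = _
    rw [← pow_mod_eq (sig4 (2 ^ n)) k, ← pow_mod_eq (tau2 (2 ^ n)) j]
  have hc8 : Nat.card (Fin 4 × Fin 2) = 8 := by simp [Nat.card_eq_fintype_card]
  refine le_antisymm ?_ ?_
  · have := Nat.card_le_card_of_surjective g hgsurj
    omega
  · have := Nat.card_le_card_of_injective g hginj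
    omega

end UniqAb8

/-- For `n ≥ 2`, let `S` be the extension of
`A = ⟨v₁,v₂,v₃⟩ ≅ C_{2ⁿ}³` by `D₈` described in Table `tbl:D8onA`: `S` has order
`2^{3n+3}`, `A` embeds via `f`, `t² = 1`, `s⁴ ∈ ⟨v₁v₃⟩`, `S = A⟨s,t⟩`, and
conjugation by `t` and `s` acts on `A` by the stated formulas.  Then `A` is the
unique abelian subgroup of index 8 in `S`; in particular `A` is characteristic. -/
theorem unique_abelian_subgroup_of_index_eight
    (n : ℕ) (hn : 2 ≤ n) (S : Type*) [Group S]
    (f : Multiplicative (ZMod (2 ^ n) × ZMod (2 ^ n) × ZMod (2 ^ n)) →* S)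
    (hf : Function.Injective f) (s t : S)
    (hcard : Nat.card S = 2 ^ (3 * n + 3))
    (ht2 : t ^ 2 = 1)
    (hs4 : ∃ m : ZMod (2 ^ n), s ^ 4 = f (Multiplicative.ofAdd (m, 0, m)))
    (hconjt : ∀ a b c : ZMod (2 ^ n),
      t * f (Multiplicative.ofAdd (a, b, c)) * t⁻¹
        = f (Multiplicative.ofAdd (-c, -b, -a)))
    (hconjs : ∀ a b c : ZMod (2 ^ n),
      s * f (Multiplicative.ofAdd (a, b, c)) * s⁻¹
        = f (Multiplicative.ofAdd (c, a - c, b + c)))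
    (hgen : Subgroup.closure ((f.range : Set S) ∪ {s, t}) = ⊤) :
    (∀ B : Subgroup S, (∀ x ∈ B, ∀ y ∈ B, x * y = y * x) →
      B.index = 8 → B = f.range) ∧
    f.range.Characteristic := by
  classical
  haveI : NeZero ((2 : ℕ) ^ n) := ⟨by positivity⟩
  have hfin : Finite S := Nat.finite_of_card_ne_zero (by rw [hcard]; positivity)
  have hpow8 : (2 : ℕ) ^ (3 * n + 3) = 2 ^ (3 * n) * 8 := by rw [pow_add]; norm_num
  -- the cardinality of the image of `f`
  have hcardA : Nat.card f.range = 2 ^ (3 * n) := by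
    have h1 : Nat.card f.range
        = Nat.card (Multiplicative (ZMod (2 ^ n) × ZMod (2 ^ n) × ZMod (2 ^ n))) := by
      rw [← Nat.card_range_of_injective hf]
      exact Nat.card_congr (Equiv.setCongr (by rw [MonoidHom.coe_range]))
    have h2 : Nat.card (Multiplicative (ZMod (2 ^ n) × ZMod (2 ^ n) × ZMod (2 ^ n)))
        = Nat.card (ZMod (2 ^ n) × ZMod (2 ^ n) × ZMod (2 ^ n)) :=
      Nat.card_congr Multiplicative.toAdd
    rw [h1, h2, Nat.card_prod, Nat.card_prod, Nat.card_zmod]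
    rw [show 3 * n = n + (n + n) by ring, pow_add, pow_add]
  -- every element of `S` conjugates `A` by an element of the dihedral group `⟨σ, τ⟩`
  have key : ∀ x : S, ∃ d : Equiv.Perm (ZMod (2 ^ n) × ZMod (2 ^ n) × ZMod (2 ^ n)),
      d ∈ Subgroup.closure {UniqAb8.sigE (2 ^ n), UniqAb8.tauE (2 ^ n)} ∧
      ∀ p, x * f (Multiplicative.ofAdd p) * x⁻¹ = f (Multiplicative.ofAdd (d p)) := by
    intro x
    have hx : x ∈ Subgroup.closure ((f.range : Set S) ∪ {s, t}) := by rw [hgen]; trivial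
    induction hx using Subgroup.closure_induction with
    | mem y hy =>
      rcases hy with hy | hy
      · obtain ⟨m, rfl⟩ := hy
        refine ⟨1, one_mem _, fun p => ?_⟩
        rw [Equiv.Perm.one_apply, ← map_inv, ← map_mul, ← map_mul,
          mul_comm m (Multiplicative.ofAdd p), mul_inv_cancel_right]
      · simp only [Set.mem_insert_iff, Set.mem_singleton_iff] at hy
        rcases hy with rfl | rfl
        · refine ⟨UniqAb8.sigE (2 ^ n),
            Subgroup.subset_closure (Set.mem_insert _ _), fun p => ?_⟩
          obtain ⟨a, b, c⟩ := p
          exact hconjs a b c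
        · refine ⟨UniqAb8.tauE (2 ^ n),
            Subgroup.subset_closure (Set.mem_insert_of_mem _ rfl), fun p => ?_⟩
          obtain ⟨a, b, c⟩ := p
          exact hconjt a b c
    | one => exact ⟨1, one_mem _, fun p => by simp⟩
    | mul x y hx hy ihx ihy =>
      obtain ⟨dx, hdx, hfx⟩ := ihx
      obtain ⟨dy, hdy, hfy⟩ := ihy
      refine ⟨dx * dy, mul_mem hdx hdy, fun p => ?_⟩
      rw [Equiv.Perm.mul_apply, ← hfx, ← hfy, mul_inv_rev]
      group
    | inv x hx ihx =>
      obtain ⟨dx, hdx, hfx⟩ := ihx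
      refine ⟨dx⁻¹, inv_mem hdx, fun p => ?_⟩
      have h0 := hfx (dx⁻¹ p)
      rw [show dx (dx⁻¹ p) = p from Equiv.apply_symm_apply dx p] at h0
      rw [← h0]
      group
  choose ρ hρD hρ using key
  have hρmul : ∀ x y : S, ρ (x * y) = ρ x * ρ y := by
    intro x y
    apply Equiv.ext; intro p
    have hfeq : f (Multiplicative.ofAdd (ρ (x * y) p))
        = f (Multiplicative.ofAdd (ρ x (ρ y p))) := by
      rw [← hρ (x * y) p, ← hρ x (ρ y p), ← hρ y p, mul_inv_rev]
      group
    rw [Equiv.Perm.mul_apply]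
    exact Multiplicative.ofAdd.injective (hf hfeq)
  let ρh : S →* Equiv.Perm (ZMod (2 ^ n) × ZMod (2 ^ n) × ZMod (2 ^ n)) :=
    MonoidHom.mk' ρ hρmul
  have hρs : ρ s = UniqAb8.sigE (2 ^ n) := by
    apply Equiv.ext; intro p
    obtain ⟨a, b, c⟩ := p
    have h1 := (hρ s (a, b, c)).symm.trans (hconjs a b c)
    exact Multiplicative.ofAdd.injective (hf h1)
  have hρt : ρ t = UniqAb8.tauE (2 ^ n) := by
    apply Equiv.ext; intro p
    obtain ⟨a, b, c⟩ := p
    have h1 := (hρ t (a, b, c)).symm.trans (hconjt a b c)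
    exact Multiplicative.ofAdd.injective (hf h1)
  -- the kernel of the conjugation action is exactly the image of `f`
  have hker_eq : ρh.ker = f.range := by
    have hA_le : f.range ≤ ρh.ker := by
      rintro x ⟨m, rfl⟩
      rw [MonoidHom.mem_ker]
      apply Equiv.ext; intro p
      have h2 : f m * f (Multiplicative.ofAdd p) * (f m)⁻¹ = f (Multiplicative.ofAdd p) := by
        rw [← map_inv, ← map_mul, ← map_mul,
          mul_comm m (Multiplicative.ofAdd p), mul_inv_cancel_right]
      have h3 : f (Multiplicative.ofAdd (ρ (f m) p)) = f (Multiplicative.ofAdd p) := by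
        rw [← hρ (f m) p, h2]
      exact Multiplicative.ofAdd.injective (hf h3)
    haveI : Finite (S ⧸ ρh.ker) := Quotient.finite _
    have hinj : Function.Injective
        (fun kj : Fin 4 × Fin 2 =>
          ((s ^ (kj.1 : ℕ) * t ^ (kj.2 : ℕ) : S) : S ⧸ ρh.ker)) := by
      rintro ⟨k, j⟩ ⟨k', j'⟩ hkj
      have hz : (s ^ (k : ℕ) * t ^ (j : ℕ))⁻¹ * (s ^ (k' : ℕ) * t ^ (j' : ℕ)) ∈ ρh.ker :=
        QuotientGroup.eq.mp hkj
      rw [MonoidHom.mem_ker, map_mul, map_inv] at hz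
      have h1 : ρh (s ^ (k : ℕ) * t ^ (j : ℕ)) = ρh (s ^ (k' : ℕ) * t ^ (j' : ℕ)) :=
        inv_mul_eq_one.mp hz
      have hρhs : ρh s = UniqAb8.sigE (2 ^ n) := hρs
      have hρht : ρh t = UniqAb8.tauE (2 ^ n) := hρt
      rw [map_mul, map_mul, map_pow, map_pow, map_pow, map_pow, hρhs, hρht] at h1
      obtain ⟨hk, hj⟩ := UniqAb8.dist8 hn k.isLt j.isLt k'.isLt j'.isLt h1
      simp [Prod.ext_iff, Fin.ext_iff, hk, hj]
    have hidx : 8 ≤ ρh.ker.index := by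
      have hle := Nat.card_le_card_of_injective _ hinj
      have hc8 : Nat.card (Fin 4 × Fin 2) = 8 := by simp [Nat.card_eq_fintype_card]
      rw [Subgroup.index_eq_card]
      omega
    have hmul := ρh.ker.card_mul_index
    rw [hcard, hpow8] at hmul
    have hle : Nat.card ρh.ker ≤ 2 ^ (3 * n) := by
      have h8 : Nat.card ρh.ker * 8 ≤ Nat.card ρh.ker * ρh.ker.index :=
        Nat.mul_le_mul_left _ hidx
      rw [hmul] at h8
      exact Nat.le_of_mul_le_mul_right h8 (by norm_num)
    exact (Subgroup.eq_of_le_of_card_ge hA_le (by rw [hcardA]; exact hle)).symm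
  -- main step: uniqueness
  have main : ∀ B : Subgroup S, (∀ x ∈ B, ∀ y ∈ B, x * y = y * x) →
      B.index = 8 → B = f.range := by
    intro B hB hBidx
    have hcardB : Nat.card B = 2 ^ (3 * n) := by
      have hmul := B.card_mul_index
      rw [hBidx, hcard, hpow8] at hmul
      omega
    suffices hle : B ≤ f.range by
      exact Subgroup.eq_of_le_of_card_ge hle (by rw [hcardA, hcardB])
    by_contra hnle
    rw [SetLike.not_le_iff_exists] at hnle
    obtain ⟨x₀, hx₀B, hx₀A⟩ := hnle
    have hd0 : ρ x₀ ≠ 1 := by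
      intro h
      exact hx₀A (hker_eq ▸ MonoidHom.mem_ker.mpr h)
    set ψ := ρh.comp B.subtype with hψ
    -- the kernel of `ψ` injects into the fixed points of `ρ x₀`
    have hkψ : Nat.card ψ.ker ≤ 2 ^ (n + 1) := by
      have hmap : ∀ z : ψ.ker, ∃ p : ZMod (2 ^ n) × ZMod (2 ^ n) × ZMod (2 ^ n),
          f (Multiplicative.ofAdd p) = (z : B) ∧ ρ x₀ p = p := by
        rintro ⟨⟨z, hzB⟩, hz1⟩
        rw [MonoidHom.mem_ker] at hz1
        have hzA : z ∈ f.range := hker_eq ▸ MonoidHom.mem_ker.mpr hz1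
        obtain ⟨m, hm⟩ := hzA
        have h1 := hρ x₀ m.toAdd
        rw [ofAdd_toAdd, hm] at h1
        have h2 : x₀ * z * x₀⁻¹ = z := by
          rw [hB x₀ hx₀B z hzB, mul_inv_cancel_right]
        rw [h2] at h1
        refine ⟨m.toAdd, by rw [ofAdd_toAdd]; exact hm, ?_⟩
        apply Multiplicative.ofAdd.injective
        apply hf
        rw [← h1, ofAdd_toAdd, hm]
      choose pmap hp1 hp2 using hmap
      have hinj2 : Function.Injective
          (fun z : ψ.ker => (⟨pmap z, hp2 z⟩ : {p // ρ x₀ p = p})) := by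
        intro z z' hzz
        have hpe : pmap z = pmap z' := congrArg Subtype.val hzz
        have h3 : ((z : B) : S) = ((z' : B) : S) := by
          rw [← hp1 z, ← hp1 z', hpe]
        exact Subtype.ext (Subtype.ext h3)
      have hle := Nat.card_le_card_of_injective _ hinj2
      have hfix := UniqAb8.card_fix hn (ρ x₀) (hρD x₀) hd0
      omega
    -- the image of `ψ` is an abelian subgroup of the dihedral group, so has order ≤ 4
    have hrange : ψ.range ≤ Subgroup.closure {UniqAb8.sigE (2 ^ n), UniqAb8.tauE (2 ^ n)} := by
      rintro d ⟨b, rfl⟩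
      exact hρD (b : S)
    have hcardrange : Nat.card ψ.range ≤ 4 := by
      have hdvd : Nat.card ψ.range ∣ 8 := by
        have hcongr : Nat.card (ψ.range.subgroupOf
            (Subgroup.closure {UniqAb8.sigE (2 ^ n), UniqAb8.tauE (2 ^ n)}))
            = Nat.card ψ.range :=
          Nat.card_congr (Subgroup.subgroupOfEquivOfLe hrange).toEquiv
        have hdvd' := Subgroup.card_subgroup_dvd_card (ψ.range.subgroupOf
            (Subgroup.closure {UniqAb8.sigE (2 ^ n), UniqAb8.tauE (2 ^ n)}))
        rw [hcongr, UniqAb8.cardD hn] at hdvd'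
        exact hdvd'
      have hne : Nat.card ψ.range ≠ 8 := by
        intro h8
        have hDeq : ψ.range = Subgroup.closure {UniqAb8.sigE (2 ^ n), UniqAb8.tauE (2 ^ n)} :=
          Subgroup.eq_of_le_of_card_ge hrange (by rw [h8, UniqAb8.cardD hn])
        have hσ : UniqAb8.sigE (2 ^ n) ∈ ψ.range :=
          hDeq ▸ Subgroup.subset_closure (Set.mem_insert _ _)
        have hτ : UniqAb8.tauE (2 ^ n) ∈ ψ.range :=
          hDeq ▸ Subgroup.subset_closure (Set.mem_insert_of_mem _ rfl)
        obtain ⟨b1, hb1⟩ := hσ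
        obtain ⟨b2, hb2⟩ := hτ
        apply UniqAb8.noncomm hn
        have hcomm : b1 * b2 = b2 * b1 := Subtype.ext (hB b1.1 b1.2 b2.1 b2.2)
        rw [← hb1, ← hb2, ← map_mul, ← map_mul, hcomm]
      have hdvd3 : Nat.card ψ.range ∣ 2 ^ 3 := by
        rw [show (2 : ℕ) ^ 3 = 8 by norm_num]; exact hdvd
      obtain ⟨i, hi3, hvi⟩ := (Nat.dvd_prime_pow Nat.prime_two).mp hdvd3
      have hi2 : i ≤ 2 := by
        by_contra h'
        have hi : i = 3 := by omega
        exact hne (by rw [hvi, hi]; norm_num)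
      calc Nat.card ψ.range = 2 ^ i := hvi
        _ ≤ 2 ^ 2 := Nat.pow_le_pow_right (by norm_num) hi2
        _ = 4 := by norm_num
    -- first isomorphism theorem counting
    have hiso : Nat.card ψ.ker * Nat.card ψ.range = Nat.card B := by
      have h1 := ψ.ker.card_mul_index
      rw [Subgroup.index_ker] at h1
      exact h1
    rw [hcardB] at hiso
    have hle2 : (2 : ℕ) ^ (3 * n) ≤ 2 ^ (n + 3) := by
      calc (2 : ℕ) ^ (3 * n) = Nat.card ψ.ker * Nat.card ψ.range := hiso.symm
        _ ≤ 2 ^ (n + 1) * 4 := Nat.mul_le_mul hkψ hcardrange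
        _ = 2 ^ (n + 3) := by rw [pow_add, pow_add]; ring
    have hcontra : 3 * n ≤ n + 3 := (Nat.pow_le_pow_iff_right (by norm_num)).mp hle2
    omega
  refine ⟨main, ?_⟩
  rw [Subgroup.characteristic_iff_map_eq]
  intro φ
  apply main
  · rintro x hx y hy
    obtain ⟨x', hx', rfl⟩ := hx
    obtain ⟨y', hy', rfl⟩ := hy
    rw [← map_mul, ← map_mul]
    congr 1
    obtain ⟨mx, rfl⟩ := hx'
    obtain ⟨my, rfl⟩ := hy'
    rw [← map_mul, ← map_mul, mul_comm]
  · have hidxA : f.range.index = 8 := by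
      have h1 := f.range.card_mul_index
      rw [hcardA, hcard, hpow8] at h1
      have hpos : (0 : ℕ) < 2 ^ (3 * n) := by positivity
      exact Nat.eq_of_mul_eq_mul_left hpos h1
    have hkerφ : φ.toMonoidHom.ker = ⊥ := (MonoidHom.ker_eq_bot_iff _).mpr φ.injective
    rw [Subgroup.index_map_eq _ φ.surjective (hkerφ ▸ bot_le), hidxA]
end
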